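/- arXiv:math/0612707 — 7 statements merged into one kernel-verified Lean document; each statement's English description precedes it below -/
import Mathlib

section
/- Let T be a set, I a countable index set, (a_j)_{j∈I} real numbers with ∑_{j∈I}|a_j| < ∞, and for each n ≥ 1 and j ∈ I let U_j^{(n)} = (U_j^{(n)}(t))_{t∈T} be a stochastic process on a common probability space such that the suprema ‖U_j^{(n)}‖_T and ‖U_i^{(n)} − U_j^{(n)}‖_T are measurable (e.g. T is countable). Suppose (a) sup_n sup_{j∈I} E(‖U_j^{(n)}‖_T) < ∞, and (b) for each pair i, j ∈ I, ‖U_i^{(n)} − U_j^{(n)}‖_T → 0 in probability as n → ∞. Define ψ^{(n)}(t) = ∑_{j∈I} a_j U_j^{(n)}(t) (the series converging absolutely a.s. for each t) and A = ∑_{j∈I} a_j. Then for any fixed e ∈ I, ‖ψ^{(n)} − A·U_e^{(n)}‖_T → 0 in probability as n → ∞. -/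
/-!
Write `V_j⁽ⁿ⁾ = ‖U_j⁽ⁿ⁾ − U_e⁽ⁿ⁾‖_T`. Since `ψ⁽ⁿ⁾ − A U_e⁽ⁿ⁾ = ∑_j a_j (U_j⁽ⁿ⁾ − U_e⁽ⁿ⁾)`, the
supremum is dominated by `∑_j |a_j| V_j⁽ⁿ⁾`. Each `V_j⁽ⁿ⁾` tends to zero in probability and has
uniformly bounded expectation. Cut the series into a finite part, which tends to zero in
probability term by term, and a tail whose expectation is uniformly small by the summability of
`|a_j|`, hence small in probability by Markov's inequality.
-/

open MeasureTheory Filter Topology ENNReal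

section

variable {Ω ι J : Type*} [MeasurableSpace Ω]

def TendstoZeroInMeasure (μ : Measure Ω) (l : Filter ι) (f : ι → Ω → ℝ≥0∞) : Prop :=
  ∀ ε : ℝ≥0∞, 0 < ε → Tendsto (fun i => μ {ω | ε < f i ω}) l (𝓝 0)

lemma measure_setOf_lt_add_le (μ : Measure Ω) (ε : ℝ≥0∞) (x y : Ω → ℝ≥0∞) :
    μ {ω | ε < x ω + y ω} ≤ μ {ω | ε / 2 < x ω} + μ {ω | ε / 2 < y ω} := by
  refine (measure_mono fun ω hω => ?_).trans (measure_union_le _ _)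
  by_contra hsmall
  simp only [Set.mem_union, Set.mem_ofPred_eq, not_or, not_lt] at hω hsmall
  exact (add_le_add hsmall.1 hsmall.2).trans_eq (ENNReal.add_halves ε) |>.not_gt hω

namespace TendstoZeroInMeasure

variable {μ : Measure Ω} {l : Filter ι} {f g : ι → Ω → ℝ≥0∞}

lemma mono_ae (hg : TendstoZeroInMeasure μ l g) (hfg : ∀ i, f i ≤ᵐ[μ] g i) :
    TendstoZeroInMeasure μ l f := fun ε hε =>
  tendsto_of_tendsto_of_tendsto_of_le_of_le tendsto_const_nhds (hg ε hε) (fun _ => zero_le)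
    fun i => measure_mono_ae <| (hfg i).mono fun _ hle hlt => hlt.trans_le hle

lemma zero : TendstoZeroInMeasure μ l fun _ _ => 0 := fun _ _ => by
  simp only [not_lt_zero, Set.ofPred_false, measure_empty, tendsto_const_nhds]

lemma add (hf : TendstoZeroInMeasure μ l f) (hg : TendstoZeroInMeasure μ l g) :
    TendstoZeroInMeasure μ l fun i ω => f i ω + g i ω := fun ε hε => by
  have hε2 : 0 < ε / 2 := ENNReal.half_pos hε.ne'
  refine tendsto_of_tendsto_of_tendsto_of_le_of_le tendsto_const_nhds
    (by simpa using (hf _ hε2).add (hg _ hε2)) (fun _ => zero_le)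
    fun i => measure_setOf_lt_add_le μ ε (f i) (g i)

lemma const_mul (hf : TendstoZeroInMeasure μ l f) {c : ℝ≥0∞} (hc : c ≠ ⊤) :
    TendstoZeroInMeasure μ l fun i ω => c * f i ω := fun ε hε =>
  tendsto_of_tendsto_of_tendsto_of_le_of_le tendsto_const_nhds
    (hf (ε / c) (ENNReal.div_pos hε.ne' hc)) (fun _ => zero_le)
    fun _ => measure_mono fun _ => ENNReal.div_lt_of_lt_mul'

lemma finset_sum {f : ι → J → Ω → ℝ≥0∞} (s : Finset J)
    (h : ∀ j ∈ s, TendstoZeroInMeasure μ l fun i => f i j) :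
    TendstoZeroInMeasure μ l fun i ω => ∑ j ∈ s, f i j ω := by
  classical
  induction s using Finset.induction_on with
  | empty => simpa only [Finset.sum_empty] using zero
  | insert j s hj ih =>
    simp only [Finset.sum_insert hj]
    exact (h j (s.mem_insert_self j)).add (ih fun k hk => h k (Finset.mem_insert_of_mem hk))

lemma of_forall_ne_top
    (h : ∀ ε : ℝ≥0∞, 0 < ε → ε ≠ ⊤ → Tendsto (fun i => μ {ω | ε < f i ω}) l (𝓝 0)) :
    TendstoZeroInMeasure μ l f := fun ε hε =>
  tendsto_of_tendsto_of_tendsto_of_le_of_le tendsto_const_nhds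
    (h (min ε 1) (lt_min hε one_pos) (min_lt_of_right_lt one_lt_top).ne) (fun _ => zero_le)
    fun _ => measure_mono fun _ => (min_le_left ε 1).trans_lt

lemma of_le_add_lintegral_le
    (h : ∀ δ : ℝ≥0∞, 0 < δ → ∃ g r : ι → Ω → ℝ≥0∞, TendstoZeroInMeasure μ l g ∧
      (∀ i, AEMeasurable (r i) μ) ∧ (∀ i, ∫⁻ ω, r i ω ∂μ ≤ δ) ∧ ∀ i, f i ≤ᵐ[μ] g i + r i) :
    TendstoZeroInMeasure μ l f := by
  refine of_forall_ne_top fun ε hε hε_top => ENNReal.tendsto_nhds_zero.2 fun η hη => ?_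
  have hε2 : ε / 2 ≠ 0 := (ENNReal.half_pos hε.ne').ne'
  have hε2_top : ε / 2 ≠ ⊤ := ENNReal.div_ne_top hε_top two_ne_zero
  have hη2 : 0 < η / 2 := ENNReal.half_pos hη.ne'
  obtain ⟨g, r, hg, hr, hr_int, hfgr⟩ :=
    h (η / 2 * (ε / 2)) (ENNReal.mul_pos hη2.ne' hε2)
  filter_upwards [ENNReal.tendsto_nhds_zero.1 (hg _ (pos_iff_ne_zero.2 hε2)) _ hη2] with i hgi
  have hmarkov : μ {ω | ε / 2 < r i ω} ≤ η / 2 :=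
    calc μ {ω | ε / 2 < r i ω} ≤ μ {ω | ε / 2 ≤ r i ω} :=
          measure_mono fun ω (hlt : ε / 2 < r i ω) => hlt.le
      _ ≤ (∫⁻ ω, r i ω ∂μ) / (ε / 2) := meas_ge_le_lintegral_div (hr i) hε2 hε2_top
      _ ≤ η / 2 * (ε / 2) / (ε / 2) := by gcongr; exact hr_int i
      _ = η / 2 := ENNReal.mul_div_cancel_right hε2 hε2_top
  calc μ {ω | ε < f i ω} ≤ μ {ω | ε < g i ω + r i ω} :=
        measure_mono_ae <| (hfgr i).mono fun _ hle hlt => hlt.trans_le hle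
    _ ≤ μ {ω | ε / 2 < g i ω} + μ {ω | ε / 2 < r i ω} := measure_setOf_lt_add_le μ ε _ _
    _ ≤ η / 2 + η / 2 := add_le_add hgi hmarkov
    _ = η := ENNReal.add_halves η

lemma tsum [Countable J] {f : ι → J → Ω → ℝ≥0∞} {c : J → ℝ≥0∞} (hc : ∑' j, c j ≠ ⊤)
    (hf : ∀ i j, AEMeasurable (f i j) μ) (hfc : ∀ i j, ∫⁻ ω, f i j ω ∂μ ≤ c j)
    (h : ∀ j, TendstoZeroInMeasure μ l fun i => f i j) :
    TendstoZeroInMeasure μ l fun i ω => ∑' j, f i j ω := by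
  refine of_le_add_lintegral_le fun δ hδ => ?_
  obtain ⟨s, hs⟩ : ∃ s : Finset J, ∑' j : ↑(↑s : Set J)ᶜ, c j ≤ δ :=
    ((ENNReal.tendsto_tsum_compl_atTop_zero hc).eventually (eventually_le_nhds hδ)).exists
  refine ⟨fun i ω => ∑ j ∈ s, f i j ω, fun i ω => ∑' j : ↑(↑s : Set J)ᶜ, f i j ω,
    finset_sum s fun j _ => h j, fun i => AEMeasurable.tsum fun j => hf i j,
    fun i => ?_, fun i => ae_of_all _ fun ω => (ENNReal.sum_add_tsum_compl s _).ge⟩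
  calc ∫⁻ ω, ∑' j : ↑(↑s : Set J)ᶜ, f i j ω ∂μ = ∑' j : ↑(↑s : Set J)ᶜ, ∫⁻ ω, f i j ω ∂μ :=
        lintegral_tsum fun j => hf i j
    _ ≤ ∑' j : ↑(↑s : Set J)ᶜ, c j := ENNReal.tsum_le_tsum fun j => hfc i j
    _ ≤ δ := hs

end TendstoZeroInMeasure

end

lemma iSup_enorm_sub_le {T E : Type*} [SeminormedAddCommGroup E] (u v : T → E) :
    ⨆ t, ‖u t - v t‖ₑ ≤ (⨆ t, ‖u t‖ₑ) + ⨆ t, ‖v t‖ₑ :=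
  iSup_le fun t => enorm_sub_le.trans <|
    add_le_add (le_iSup (fun t => ‖u t‖ₑ) t) (le_iSup (fun t => ‖v t‖ₑ) t)

lemma iSup_enorm_sub_smul_le_tsum {T I 𝕜 E : Type*} [NormedField 𝕜] [NormedAddCommGroup E]
    [NormedSpace 𝕜 E] {a : I → 𝕜} {A : 𝕜} (hA : HasSum a A) {u : I → T → E} {s : T → E}
    (hs : ∀ t, HasSum (fun j => a j • u j t) (s t)) (e : I) :
    ⨆ t, ‖s t - A • u e t‖ₑ ≤ ∑' j, ‖a j‖ₑ * ⨆ t, ‖u j t - u e t‖ₑ :=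
  iSup_le fun t => ((hs t).sub (hA.smul_const (u e t))).enorm_le_of_bounded
    ENNReal.summable.hasSum fun j => by
      rw [← smul_sub, enorm_smul]
      exact mul_le_mul_right (le_iSup (fun t => ‖u j t - u e t‖ₑ) t) _

theorem stmt0_general
    {Ω : Type*} [MeasurableSpace Ω] (μ : Measure Ω)
    {T : Type*} [Countable T] {I : Type*} [Countable I]
    (a : I → ℝ) (ha : Summable fun j => |a j|)
    (U : ℕ → I → Ω → T → ℝ)
    (hUmeas : ∀ n j t, Measurable fun ω => U n j ω t)
    (hbound : ∃ C : ℝ≥0∞, C < ⊤ ∧ ∀ n j,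
      (∫⁻ ω, (⨆ t, (‖U n j ω t‖₊ : ℝ≥0∞)) ∂μ) ≤ C)
    (hdiff : ∀ i j : I, ∀ ε : ℝ≥0∞, 0 < ε →
      Tendsto (fun n => μ {ω : Ω | ε < ⨆ t, (‖U n i ω t - U n j ω t‖₊ : ℝ≥0∞)})
        atTop (𝓝 0))
    (ψ : ℕ → Ω → T → ℝ)
    (hψ : ∀ n, ∀ᵐ ω ∂μ, ∀ t, HasSum (fun j => a j * U n j ω t) (ψ n ω t))
    (A : ℝ) (hA : HasSum a A) (e : I) :
    ∀ ε : ℝ≥0∞, 0 < ε →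
      Tendsto (fun n => μ {ω : Ω | ε < ⨆ t, (‖ψ n ω t - A * U n e ω t‖₊ : ℝ≥0∞)})
        atTop (𝓝 0) := by
  obtain ⟨C, hC, hbound⟩ := hbound
  set V : ℕ → I → Ω → ℝ≥0∞ := fun n j ω => ⨆ t, ‖U n j ω t - U n e ω t‖ₑ
  have hV_meas (n j) : Measurable (V n j) :=
    .iSup fun t => ((hUmeas n j t).sub (hUmeas n e t)).enorm
  have hV_int (n j) : ∫⁻ ω, V n j ω ∂μ ≤ C + C :=
    calc ∫⁻ ω, V n j ω ∂μ
        ≤ ∫⁻ ω, (⨆ t, ‖U n j ω t‖ₑ) + ⨆ t, ‖U n e ω t‖ₑ ∂μ :=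
          lintegral_mono fun ω => iSup_enorm_sub_le _ _
      _ = (∫⁻ ω, ⨆ t, ‖U n j ω t‖ₑ ∂μ) + ∫⁻ ω, ⨆ t, ‖U n e ω t‖ₑ ∂μ :=
          lintegral_add_left (.iSup fun t => (hUmeas n j t).enorm) _
      _ ≤ C + C := add_le_add (hbound n j) (hbound n e)
  have ha_tsum : ∑' j, ‖a j‖ₑ * (C + C) ≠ ⊤ := by
    rw [ENNReal.tsum_mul_right]
    exact mul_ne_top (tsum_enorm_ne_top_iff_summable_norm.2 (by simpa only [Real.norm_eq_abs]))
      (add_ne_top.2 ⟨hC.ne, hC.ne⟩)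
  have hdom : TendstoZeroInMeasure μ atTop fun n ω => ∑' j, ‖a j‖ₑ * V n j ω :=
    .tsum ha_tsum (fun n j => ((hV_meas n j).const_mul _).aemeasurable)
      (fun n j => (lintegral_const_mul _ (hV_meas n j)).trans_le (mul_le_mul_right (hV_int n j) _))
      fun j => TendstoZeroInMeasure.const_mul (hdiff j e) enorm_ne_top
  exact hdom.mono_ae fun n => (hψ n).mono fun ω hω => iSup_enorm_sub_smul_le_tsum hA hω e

/-- **Lemma 1 (convergence in probability part)** of Peligrad–Utev,
"Invariance principle for stochastic processes with short memory".
If `ψ⁽ⁿ⁾ = ∑_{j∈I} a_j U_j⁽ⁿ⁾` with `∑ |a_j| < ∞`, the suprema of the processes have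
uniformly bounded expectations, and `‖U_i⁽ⁿ⁾ − U_j⁽ⁿ⁾‖_T → 0` in probability for each pair,
then `‖ψ⁽ⁿ⁾ − A U_e⁽ⁿ⁾‖_T → 0` in probability, where `A = ∑ a_j`. -/
theorem stmt0
    {Ω : Type*} [MeasurableSpace Ω] (μ : Measure Ω) [IsProbabilityMeasure μ]
    {T : Type*} [Countable T] {I : Type*} [Countable I]
    (a : I → ℝ) (ha : Summable fun j => |a j|)
    (U : ℕ → I → Ω → T → ℝ)
    (hUmeas : ∀ n j t, Measurable fun ω => U n j ω t)
    (hbound : ∃ C : ℝ≥0∞, C < ⊤ ∧ ∀ n j,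
      (∫⁻ ω, (⨆ t, (‖U n j ω t‖₊ : ℝ≥0∞)) ∂μ) ≤ C)
    (hdiff : ∀ i j : I, ∀ ε : ℝ≥0∞, 0 < ε →
      Tendsto (fun n => μ {ω : Ω | ε < ⨆ t, (‖U n i ω t - U n j ω t‖₊ : ℝ≥0∞)})
        atTop (𝓝 0))
    (ψ : ℕ → Ω → T → ℝ)
    (hψ : ∀ n, ∀ᵐ ω ∂μ, ∀ t, HasSum (fun j => a j * U n j ω t) (ψ n ω t))
    (A : ℝ) (hA : HasSum a A) (e : I) :
    ∀ ε : ℝ≥0∞, 0 < ε →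
      Tendsto (fun n => μ {ω : Ω | ε < ⨆ t, (‖ψ n ω t - A * U n e ω t‖₊ : ℝ≥0∞)})
        atTop (𝓝 0) :=
  stmt0_general μ a ha U hUmeas hbound hdiff ψ hψ A hA e
end

section
/- Let T = [0,1]^d, I a countable index set, (a_j)_{j∈I} real numbers with ∑_{j∈I}|a_j| < ∞, and for each n ≥ 1 and j ∈ I let U_j^{(n)} be a random element of C([0,1]^d, ℝ) (with the supremum norm) on a common probability space with sup_n sup_{j∈I} E(‖U_j^{(n)}‖_T) < ∞. Define ψ^{(n)} = ∑_{j∈I} a_j U_j^{(n)} (the series converging in supremum norm a.s.). Let (I_m)_{m≥1} be an increasing sequence of finite subsets of I with I = ∪_m I_m, and suppose that for each m the finite sum ∑_{j∈I_m} a_j U_j^{(n)} converges in distribution, as n → ∞, to a random element Z_m of C([0,1]^d, ℝ). Then there exists a random element Z of C([0,1]^d, ℝ) such that Z_m converges in distribution to Z as m → ∞ and ψ^{(n)} converges in distribution to Z as n → ∞. -/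
/-!
The laws of the truncated sums `S m n = ∑_{j ∈ I_m} a_j U_j⁽ⁿ⁾` approximate the laws of `ψ⁽ⁿ⁾`
uniformly in `n`: by Markov's inequality, `E‖ψ⁽ⁿ⁾ - S m n‖ ≤ C ∑_{j ∉ I_m} |a_j|` bounds their
Lévy–Prokhorov distance. Since `S m n → Z_m` in law for each `m`, the `Z_m` form a Cauchy sequence
for the Lévy–Prokhorov metric, which is complete on a Polish space: a Cauchy sequence of laws is
tight, so by Prokhorov's theorem it has a convergent subsequence. The limit `ν` of the `Z_m` is
then also the limit of the laws of `ψ⁽ⁿ⁾` by the usual exchange of limits under uniform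
convergence.
-/

open MeasureTheory Filter Topology ENNReal

/-- The space `C([0,1]^d, ℝ)` of continuous real functions on the cube, with the
supremum norm (it carries a `NormedAddCommGroup` instance since the cube is compact). -/
abbrev Cube (d : ℕ) : Type := Fin d → Set.Icc (0 : ℝ) 1

open Metric Set
open scoped NNReal

section UniformLimits

variable {ι α X : Type*} [SemilatticeSup ι] [Nonempty ι] {p : Filter α} [p.NeBot]
  [PseudoMetricSpace X]

theorem TendstoUniformly.cauchySeq_of_tendsto {F : ι → α → X} {f : α → X} {L : ι → X}
    (hF : TendstoUniformly F f atTop) (hL : ∀ i, Tendsto (F i) p (𝓝 (L i))) :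
    CauchySeq L := by
  refine Metric.cauchySeq_iff'.2 fun ε hε => ?_
  obtain ⟨N, hN⟩ := eventually_atTop.1 (Metric.tendstoUniformly_iff.1 hF (ε / 4) (by positivity))
  refine ⟨N, fun i hi => ?_⟩
  have : dist (L i) (L N) ≤ ε / 2 :=
    le_of_tendsto ((hL i).dist (hL N)) (Eventually.of_forall fun x => by
      linarith [dist_triangle_left (F i x) (F N x) (f x), hN i hi x, hN N le_rfl x])
  linarith

end UniformLimits

section Tightness

variable {X : Type*} [PseudoMetricSpace X]

theorem totallyBounded_of_forall_subset_thickening {s : Set X}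
    (h : ∀ δ > 0, ∃ K, TotallyBounded K ∧ s ⊆ thickening δ K) : TotallyBounded s := by
  refine Metric.totallyBounded_iff.2 fun ε hε => ?_
  obtain ⟨K, hK, hsK⟩ := h (ε / 2) (by positivity)
  obtain ⟨t, ht, hKt⟩ := Metric.totallyBounded_iff.1 hK (ε / 2) (by positivity)
  refine ⟨t, ht, fun z hz => ?_⟩
  obtain ⟨y, hyK, hzy⟩ := mem_thickening_iff.1 (hsK hz)
  obtain ⟨x, hxt, hyx⟩ := mem_iUnion₂.1 (hKt hyK)
  exact mem_iUnion₂.2 ⟨x, hxt, mem_ball.2 (by linarith [dist_triangle z y x, mem_ball.1 hyx])⟩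

theorem thickening_compl_thickening_subset_compl (δ : ℝ) (s : Set X) :
    thickening δ (thickening δ s)ᶜ ⊆ sᶜ := by
  intro z hz hzs
  obtain ⟨y, hy, hzy⟩ := mem_thickening_iff.1 hz
  exact hy (mem_thickening_iff.2 ⟨z, hzs, by rwa [dist_comm]⟩)

theorem measure_compl_thickening_le_of_levyProkhorovEDist_lt [MeasurableSpace X]
    [OpensMeasurableSpace X] {μ ν : Measure X} {η : ℝ} (hη : 0 ≤ η)
    (h : levyProkhorovEDist μ ν < ENNReal.ofReal η) (s : Set X) :
    ν (thickening η s)ᶜ ≤ μ sᶜ + ENNReal.ofReal η :=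
  calc ν (thickening η s)ᶜ
      ≤ μ (thickening (ENNReal.ofReal η).toReal (thickening η s)ᶜ) + ENNReal.ofReal η :=
        right_measure_le_of_levyProkhorovEDist_lt h isOpen_thickening.measurableSet.compl
    _ ≤ μ sᶜ + ENNReal.ofReal η := by
        rw [ENNReal.toReal_ofReal hη]
        gcongr
        exact thickening_compl_thickening_subset_compl _ _

theorem isTightMeasureSet_of_forall_measure_compl_thickening_le [CompleteSpace X]
    [MeasurableSpace X] {S : Set (Measure X)}
    (h : ∀ δ > 0, ∀ ε : ℝ≥0, 0 < ε → ∃ K, IsCompact K ∧ ∀ μ ∈ S, μ (thickening δ K)ᶜ ≤ ε) :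
    IsTightMeasureSet S := by
  refine isTightMeasureSet_iff_exists_isCompact_measure_compl_le.2 fun ε hε => ?_
  obtain ⟨ε', hε'pos, hε'sum⟩ := ENNReal.exists_pos_sum_of_countable hε.ne' ℕ
  choose K hKc hKμ using fun k : ℕ => h (1 / (k + 1)) Nat.one_div_pos_of_nat (ε' k) (hε'pos k)
  refine ⟨⋂ k : ℕ, cthickening (1 / ((k : ℝ) + 1)) (K k), ?_, fun μ hμ => ?_⟩
  · refine (totallyBounded_of_forall_subset_thickening fun δ hδ => ?_).isCompact_of_isClosed
      (isClosed_iInter fun k => isClosed_cthickening)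
    obtain ⟨k, hk⟩ := exists_nat_one_div_lt hδ
    exact ⟨K k, (hKc k).totallyBounded,
      (iInter_subset _ k).trans (cthickening_subset_thickening' hδ hk _)⟩
  · calc μ (⋂ k : ℕ, cthickening (1 / ((k : ℝ) + 1)) (K k))ᶜ
        ≤ ∑' k : ℕ, μ (cthickening (1 / ((k : ℝ) + 1)) (K k))ᶜ := by
          rw [compl_iInter]
          exact measure_iUnion_le _
      _ ≤ ∑' k, (ε' k : ℝ≥0∞) := ENNReal.tsum_le_tsum fun k =>
          (measure_mono (compl_subset_compl.2 (thickening_subset_cthickening _ _))).trans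
            (hKμ k μ hμ)
      _ ≤ ε := hε'sum.le

end Tightness

namespace MeasureTheory.LevyProkhorov

section Polish

variable {X : Type*} [MetricSpace X] [CompleteSpace X] [SecondCountableTopology X]
  [MeasurableSpace X] [BorelSpace X]

theorem isTightMeasureSet_range_of_cauchySeq {P : ℕ → LevyProkhorov (ProbabilityMeasure X)}
    (hP : CauchySeq P) : IsTightMeasureSet (range fun n => ((P n).toMeasure : Measure X)) := by
  refine isTightMeasureSet_of_forall_measure_compl_thickening_le fun δ hδ ε hε => ?_
  set η := min δ (ε / 2 : ℝ)
  have hηpos : 0 < η := lt_min hδ (by positivity)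
  have hηε : ENNReal.ofReal η ≤ ε / 2 :=
    calc ENNReal.ofReal η ≤ ENNReal.ofReal (ε / 2 : ℝ) :=
          ENNReal.ofReal_le_ofReal (min_le_right _ _)
      _ = ε / 2 := by rw [ENNReal.ofReal_div_of_pos two_pos, ofReal_coe_nnreal, ofReal_ofNat]
  obtain ⟨N, hN⟩ := Metric.cauchySeq_iff'.1 hP η hηpos
  -- the finitely many laws before `N` are tight, the later ones are `η`-close to the `N`-th
  choose K hKc hKμ using fun i => isTightMeasureSet_iff_exists_isCompact_measure_compl_le.1
    (isTightMeasureSet_singleton (μ := ((P i).toMeasure : Measure X))) (ε / 2)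
    (by simpa using hε.ne')
  set L := ⋃ i ∈ Finset.range (N + 1), K i
  have hL : ∀ i ≤ N, ((P i).toMeasure : Measure X) Lᶜ ≤ ε / 2 := fun i hi =>
    (measure_mono (compl_subset_compl.2 (subset_biUnion_of_mem (u := K)
      (Finset.mem_range_succ_iff.2 hi)))).trans (hKμ i _ rfl)
  refine ⟨L, (Finset.range (N + 1)).isCompact_biUnion fun i _ => hKc i, ?_⟩
  rintro _ ⟨m, rfl⟩
  rcases le_total m N with hmN | hNm
  · calc _ ≤ ((P m).toMeasure : Measure X) Lᶜ :=
          measure_mono (compl_subset_compl.2 (self_subset_thickening hδ _))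
      _ ≤ ε / 2 := hL m hmN
      _ ≤ ε := ENNReal.half_le_self
  · have hPNm : levyProkhorovEDist ((P N).toMeasure : Measure X) (P m).toMeasure
        < ENNReal.ofReal η := by
      rw [levyProkhorovEDist_comm]
      exact edist_lt_ofReal.2 (hN m hNm)
    calc _ ≤ ((P m).toMeasure : Measure X) (thickening η L)ᶜ :=
          measure_mono (compl_subset_compl.2 (thickening_mono (min_le_left _ _) _))
      _ ≤ ((P N).toMeasure : Measure X) Lᶜ + ENNReal.ofReal η :=
          measure_compl_thickening_le_of_levyProkhorovEDist_lt hηpos.le hPNm L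
      _ ≤ ε / 2 + ε / 2 := add_le_add (hL N le_rfl) hηε
      _ = ε := ENNReal.add_halves _

instance : CompleteSpace (LevyProkhorov (ProbabilityMeasure X)) := by
  refine Metric.complete_of_cauchySeq_tendsto fun P hP => ?_
  have hcomp := isCompact_closure_of_isTightMeasureSet (S := range fun n => (P n).toMeasure)
    (by convert isTightMeasureSet_range_of_cauchySeq hP using 1; ext; simp)
  obtain ⟨ν, -, hν⟩ := cauchySeq_tendsto_of_isComplete
    (hcomp.image (probabilityMeasureHomeomorph (Ω := X)).continuous).isComplete
    (fun n => ⟨(P n).toMeasure, subset_closure ⟨n, rfl⟩, rfl⟩) hP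
  exact ⟨ν, hν⟩

end Polish

variable {X : Type*} [PseudoMetricSpace X] [MeasurableSpace X] [OpensMeasurableSpace X]
  [TopologicalSpace.SeparableSpace X]

theorem tendsto_ofMeasure_iff {ι : Type*} {l : Filter ι} {μs : ι → ProbabilityMeasure X}
    {ν : ProbabilityMeasure X} :
    Tendsto (fun i => ofMeasure (μs i)) l (𝓝 (ofMeasure ν)) ↔
      ∀ f : BoundedContinuousFunction X ℝ,
        Tendsto (fun i => ∫ x, f x ∂(μs i : Measure X)) l (𝓝 (∫ x, f x ∂(ν : Measure X))) := by
  rw [← ProbabilityMeasure.tendsto_iff_forall_integral_tendsto]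
  exact (probabilityMeasureHomeomorph (Ω := X)).isInducing.tendsto_nhds_iff.symm

theorem tendsto_ofMeasure_map_iff {Ω ι : Type*} [MeasurableSpace Ω] {P : ProbabilityMeasure Ω}
    {l : Filter ι} {ξ : ι → Ω → X} (hξ : ∀ i, AEMeasurable (ξ i) P) {ν : ProbabilityMeasure X} :
    Tendsto (fun i => ofMeasure (P.map (hξ i))) l (𝓝 (ofMeasure ν)) ↔
      ∀ f : BoundedContinuousFunction X ℝ,
        Tendsto (fun i => ∫ ω, f (ξ i ω) ∂(P : Measure Ω)) l (𝓝 (∫ x, f x ∂(ν : Measure X))) := by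
  refine tendsto_ofMeasure_iff.trans (forall_congr' fun f => ?_)
  simp only [ProbabilityMeasure.toMeasure_map,
    integral_map (hξ _) f.continuous.aestronglyMeasurable]

end MeasureTheory.LevyProkhorov

section Coupling

variable {Ω X : Type*} [MeasurableSpace Ω] {μ : Measure Ω} [IsProbabilityMeasure μ]
  [PseudoMetricSpace X] [MeasurableSpace X] [OpensMeasurableSpace X] {ξ η : Ω → X}

theorem levyProkhorovEDist_map_le (hξ : AEMeasurable ξ μ) (hη : AEMeasurable η μ) {ε : ℝ≥0∞}
    (h : μ {ω | ε ≤ edist (ξ ω) (η ω)} ≤ ε) :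
    levyProkhorovEDist (μ.map ξ) (μ.map η) ≤ ε := by
  have := Measure.isProbabilityMeasure_map (μ := μ) hξ
  have := Measure.isProbabilityMeasure_map (μ := μ) hη
  refine levyProkhorovEDist_le_of_forall_le _ _ _ fun ε' B hεε' hε' hB => ?_
  rw [Measure.map_apply_of_aemeasurable hξ hB,
    Measure.map_apply_of_aemeasurable hη isOpen_thickening.measurableSet]
  have hsub : ξ ⁻¹' B ⊆ η ⁻¹' thickening ε'.toReal B ∪ {ω | ε ≤ edist (ξ ω) (η ω)} := by
    intro ω hω
    refine or_iff_not_imp_right.2 fun hclose => mem_thickening_iff_infEDist_lt.2 ?_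
    have hd : edist (η ω) (ξ ω) < ε := by
      rw [edist_comm]
      exact not_le.1 hclose
    rw [ENNReal.ofReal_toReal hε'.ne]
    exact (infEDist_le_edist_of_mem (show ξ ω ∈ B from hω)).trans_lt (hd.trans hεε')
  calc μ (ξ ⁻¹' B) ≤ μ (η ⁻¹' thickening ε'.toReal B) + μ {ω | ε ≤ edist (ξ ω) (η ω)} :=
        (measure_mono hsub).trans (measure_union_le _ _)
    _ ≤ μ (η ⁻¹' thickening ε'.toReal B) + ε' := by
        gcongr
        exact h.trans hεε'.le

theorem levyProkhorovEDist_map_le_of_lintegral_edist_le [SecondCountableTopology X]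
    (hξ : AEMeasurable ξ μ) (hη : AEMeasurable η μ) {ε : ℝ≥0∞} (hε : ε ≠ 0)
    (h : ∫⁻ ω, edist (ξ ω) (η ω) ∂μ ≤ ε * ε) :
    levyProkhorovEDist (μ.map ξ) (μ.map η) ≤ ε := by
  rcases eq_or_ne ε ⊤ with rfl | hεtop
  · exact le_top
  refine levyProkhorovEDist_map_le hξ hη ?_
  exact (ENNReal.mul_le_mul_iff_right hε hεtop).1
    ((mul_meas_ge_le_lintegral₀ (hξ.edist hη) ε).trans h)

end Coupling

section Series

variable {Ω E I 𝕜 : Type*} [MeasurableSpace Ω] {μ : Measure Ω} [NormedField 𝕜]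
  [NormedAddCommGroup E] [NormedSpace 𝕜 E] [Countable I] {C : ℝ≥0∞} {c : I → 𝕜}

theorem lintegral_enorm_le_of_hasSum {V : I → Ω → E} (hV : ∀ j, AEStronglyMeasurable (V j) μ)
    (hC : ∀ j, ∫⁻ ω, ‖V j ω‖ₑ ∂μ ≤ C) {g : Ω → E}
    (hg : ∀ᵐ ω ∂μ, HasSum (fun j => c j • V j ω) (g ω)) :
    ∫⁻ ω, ‖g ω‖ₑ ∂μ ≤ (∑' j, ‖c j‖ₑ) * C :=
  calc ∫⁻ ω, ‖g ω‖ₑ ∂μ ≤ ∫⁻ ω, ∑' j, ‖c j‖ₑ * ‖V j ω‖ₑ ∂μ := lintegral_mono_ae <|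
        hg.mono fun ω hω => by
          simpa only [← hω.tsum_eq, enorm_smul] using
            enorm_tsum_le_tsum_enorm (f := fun j => c j • V j ω)
    _ = ∑' j, ‖c j‖ₑ * ∫⁻ ω, ‖V j ω‖ₑ ∂μ := by
        rw [lintegral_tsum fun j => (hV j).enorm.const_mul _]
        simp_rw [lintegral_const_mul'' _ (hV _).enorm]
    _ ≤ ∑' j, ‖c j‖ₑ * C := ENNReal.tsum_le_tsum fun j => by gcongr; exact hC j
    _ = (∑' j, ‖c j‖ₑ) * C := ENNReal.tsum_mul_right

theorem lintegral_enorm_sub_sum_le_of_hasSum {V : I → Ω → E}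
    (hV : ∀ j, AEStronglyMeasurable (V j) μ) (hC : ∀ j, ∫⁻ ω, ‖V j ω‖ₑ ∂μ ≤ C) {g : Ω → E}
    (hg : ∀ᵐ ω ∂μ, HasSum (fun j => c j • V j ω) (g ω)) (F : Finset I) :
    ∫⁻ ω, ‖g ω - ∑ j ∈ F, c j • V j ω‖ₑ ∂μ ≤ (∑' j : {j // j ∉ F}, ‖c j‖ₑ) * C := by
  have hgF : ∀ᵐ ω ∂μ, HasSum (fun j : {j // j ∉ F} => c j • V j ω)
      (g ω - ∑ j ∈ F, c j • V j ω) :=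
    hg.mono fun ω hω => F.hasSum_iff_compl.1 hω
  exact lintegral_enorm_le_of_hasSum (V := fun (j : {j // j ∉ F}) => V j) (fun j => hV j)
    (fun j => hC j) hgF

theorem eventually_forall_levyProkhorovEDist_map_partialSum_le [IsProbabilityMeasure μ]
    [MeasurableSpace E] [BorelSpace E] [SecondCountableTopology E] {ι β : Type*}
    {l : Filter β} {F : β → Finset I} (hF : Tendsto F l atTop) (hc : Summable fun j => ‖c j‖)
    {U : ι → I → Ω → E} (hU : ∀ n j, Measurable (U n j)) (hC : C ≠ ⊤)
    (hCU : ∀ n j, ∫⁻ ω, ‖U n j ω‖ₑ ∂μ ≤ C) {ψ : ι → Ω → E} (hψm : ∀ n, Measurable (ψ n))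
    (hψ : ∀ n, ∀ᵐ ω ∂μ, HasSum (fun j => c j • U n j ω) (ψ n ω)) {ε : ℝ≥0∞} (hε : 0 < ε) :
    ∀ᶠ m in l, ∀ n, levyProkhorovEDist (μ.map (ψ n))
      (μ.map fun ω => ∑ j ∈ F m, c j • U n j ω) ≤ ε := by
  have hT : Tendsto (fun m => (∑' j : {j // j ∉ F m}, ‖c j‖ₑ) * C) l (𝓝 0) := by
    have := (ENNReal.tendsto_tsum_compl_atTop_zero
      (tsum_enorm_ne_top_iff_summable_norm.2 hc)).comp hF
    simpa using ENNReal.Tendsto.mul_const this (Or.inr hC)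
  filter_upwards [hT.eventually (eventually_le_nhds (ENNReal.mul_pos hε.ne' hε.ne'))] with m hm n
  refine levyProkhorovEDist_map_le_of_lintegral_edist_le (hψm n).aemeasurable
    (Finset.measurable_sum _ fun j _ => (hU n j).const_smul (c j)).aemeasurable hε.ne' ?_
  simp_rw [edist_eq_enorm_sub]
  exact (lintegral_enorm_sub_sum_le_of_hasSum (fun j => (hU n j).aestronglyMeasurable) (hCU n)
    (hψ n) (F m)).trans hm

end Series

/-- **Lemma 2** of Peligrad–Utev, "Invariance principle for stochastic processes with
short memory". If `ψ⁽ⁿ⁾ = ∑_{j∈I} a_j U_j⁽ⁿ⁾` (convergence in sup norm a.s.) with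
`∑|a_j| < ∞` and uniformly bounded expected sup norms, and for each `m` the finite sum
`∑_{j∈I_m} a_j U_j⁽ⁿ⁾` converges in distribution (as `n → ∞`) to a random element of
`C([0,1]^d,ℝ)` with law `Z m`, then there is a limiting law `ν` on `C([0,1]^d,ℝ)` with
`Z m → ν` weakly as `m → ∞` and `ψ⁽ⁿ⁾ → ν` in distribution as `n → ∞`. -/
theorem stmt2
    {Ω : Type*} [MeasurableSpace Ω] (μ : Measure Ω) [IsProbabilityMeasure μ]
    {d : ℕ} {I : Type*} [Countable I]
    [mE : MeasurableSpace C(Cube d, ℝ)] [BorelSpace C(Cube d, ℝ)]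
    (a : I → ℝ) (ha : Summable fun j => |a j|)
    (U : ℕ → I → Ω → C(Cube d, ℝ))
    (hUmeas : ∀ n j, Measurable (U n j))
    (hbound : ∃ C : ℝ≥0∞, C < ⊤ ∧ ∀ n j, (∫⁻ ω, (‖U n j ω‖₊ : ℝ≥0∞) ∂μ) ≤ C)
    (ψ : ℕ → Ω → C(Cube d, ℝ))
    (hψmeas : ∀ n, Measurable (ψ n))
    (hψ : ∀ n, ∀ᵐ ω ∂μ, HasSum (fun j => a j • U n j ω) (ψ n ω))
    (Im : ℕ → Finset I) (hImono : Monotone Im) (hIcover : ∀ j : I, ∃ m, j ∈ Im m)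
    (Z : ℕ → Measure C(Cube d, ℝ)) (hZprob : ∀ m, IsProbabilityMeasure (Z m))
    (hZconv : ∀ m, ∀ f : BoundedContinuousFunction C(Cube d, ℝ) ℝ,
      Tendsto (fun n => ∫ ω, f (∑ j ∈ Im m, a j • U n j ω) ∂μ)
        atTop (𝓝 (∫ x, f x ∂(Z m)))) :
    ∃ ν : Measure C(Cube d, ℝ), IsProbabilityMeasure ν ∧
      (∀ f : BoundedContinuousFunction C(Cube d, ℝ) ℝ,
        Tendsto (fun m => ∫ x, f x ∂(Z m)) atTop (𝓝 (∫ x, f x ∂ν))) ∧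
      (∀ f : BoundedContinuousFunction C(Cube d, ℝ) ℝ,
        Tendsto (fun n => ∫ ω, f (ψ n ω) ∂μ) atTop (𝓝 (∫ x, f x ∂ν))) := by
  obtain ⟨C, hC, hCU⟩ := hbound
  have : SecondCountableTopology C(Cube d, ℝ) := UniformSpace.secondCountable_of_separable _
  let P : ProbabilityMeasure Ω := ⟨μ, inferInstance⟩
  have hSmeas : ∀ m n, Measurable fun ω => ∑ j ∈ Im m, a j • U n j ω := fun m n =>
    Finset.measurable_sum _ fun j _ => (hUmeas n j).const_smul (a j)
  let q m n := LevyProkhorov.ofMeasure (P.map (hSmeas m n).aemeasurable)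
  let p n := LevyProkhorov.ofMeasure (P.map (hψmeas n).aemeasurable)
  have hq : ∀ m, Tendsto (q m) atTop (𝓝 (.ofMeasure ⟨Z m, hZprob m⟩)) := fun m =>
    (LevyProkhorov.tendsto_ofMeasure_map_iff _).2 (hZconv m)
  have hqp : TendstoUniformly q p atTop := by
    refine Metric.tendstoUniformly_iff.2 fun ε hε => ?_
    filter_upwards [eventually_forall_levyProkhorovEDist_map_partialSum_le
      (tendsto_atTop_finset_of_monotone hImono hIcover)
      (by simpa only [Real.norm_eq_abs] using ha) hUmeas hC.ne hCU hψmeas hψ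
      (ENNReal.ofReal_pos.2 (half_pos hε))] with m hm n
    exact edist_lt_ofReal.1
      ((hm n).trans_lt ((ENNReal.ofReal_lt_ofReal_iff hε).2 (half_lt_self hε)))
  obtain ⟨ν, hν⟩ := cauchySeq_tendsto_of_complete (hqp.cauchySeq_of_tendsto hq)
  exact ⟨ν.toMeasure, inferInstance, LevyProkhorov.tendsto_ofMeasure_iff.1 hν,
    (LevyProkhorov.tendsto_ofMeasure_map_iff _).1
      (hqp.tendsto_of_eventually_tendsto (Eventually.of_forall hq) hν)⟩
end

section
/- For each n ≥ 1 let (U_j^{(n)})_{j∈ℕ} be a sequence of i.i.d. non-negative integrable random variables. Suppose that for every non-negative real sequence (a_j)_{j∈ℕ} with ∑_{j∈ℕ} a_j < ∞ one has ∑_{j=1}^∞ a_j U_j^{(n)} → 0 in probability as n → ∞. Then U_1^{(n)} → 0 in probability as n → ∞ and sup_n E(U_1^{(n)}) < ∞. -/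
open MeasureTheory ProbabilityTheory Filter Topology ENNReal

/-! If the means `E U₀⁽ⁿ⁾` were unbounded, one could choose `n_k → ∞` and block lengths `N_k`
with `E min(2⁻ᵏ U₀⁽ⁿᵏ⁾, N_k) ≥ 2`, and spread the weight `2⁻ᵏ` evenly over a `k`-th block of
`N_k` indices, which gives a summable sequence `a`. Writing `φ` for the Laplace transform of
`U₀⁽ⁿᵏ⁾`, the inequality `min(x, 1) ≤ 2 (1 - e⁻ˣ)` gives `N_k (1 - φ(2⁻ᵏ / N_k)) ≥ 1`, so by
independence the Laplace transform of `∑_j a_j U_j⁽ⁿᵏ⁾` is at most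
`φ(2⁻ᵏ / N_k) ^ N_k ≤ exp (-1)`, which is incompatible with `∑_j a_j U_j⁽ⁿ⁾ → 0` in probability.
Convergence in probability of `U₀⁽ⁿ⁾` is the case `a = δ₀`. -/

open Finset Real

lemma min_le_two_mul_one_sub_exp_neg {x : ℝ} (hx : 0 ≤ x) : min x 1 ≤ 2 * (1 - exp (-x)) := by
  have hexp : (1 + x) * exp (-x) ≤ 1 := by
    calc (1 + x) * exp (-x) ≤ exp x * exp (-x) := by
          gcongr; linarith [add_one_le_exp x]
      _ = 1 := by rw [← exp_add, add_neg_cancel, exp_zero]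
  have := exp_pos (-x)
  rcases le_total x 1 with h | h
  · rw [min_eq_left h]; nlinarith
  · rw [min_eq_right h]; nlinarith

lemma exists_gt_lt_of_not_bddAbove {β : Type*} [LinearOrder β] {m : ℕ → β}
    (h : ¬BddAbove (Set.range m)) (k : ℕ) (C : β) : ∃ n, k < n ∧ C < m n := by
  by_contra! hle
  exact h (isBoundedUnder_of_eventually_le
    ((eventually_gt_atTop k).mono fun n hn => hle n hn)).bddAbove_range

section Blocks

/-- Cutting `ℕ` into consecutive blocks of lengths `N 0, N 1, …`, the `k`-th block starts at
`blockStart N k`, and `j` lies in the block `blockIndex N j`. -/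
def blockStart (N : ℕ → ℕ) (k : ℕ) : ℕ := ∑ i ∈ range k, N i

def blockIndex (N : ℕ → ℕ) (j : ℕ) : ℕ := Nat.findGreatest (fun k => blockStart N k ≤ j) j

noncomputable def blockSpread (N : ℕ → ℕ) (w : ℕ → ℝ) (j : ℕ) : ℝ :=
  w (blockIndex N j) / N (blockIndex N j)

variable {N : ℕ → ℕ}

lemma blockStart_succ (k : ℕ) : blockStart N (k + 1) = blockStart N k + N k :=
  sum_range_succ N k

lemma strictMono_blockStart (hN : ∀ k, 0 < N k) : StrictMono (blockStart N) :=
  strictMono_nat_of_lt_succ fun k => by rw [blockStart_succ]; have := hN k; omega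

lemma blockIndex_blockStart_add (hN : ∀ k, 0 < N k) {k i : ℕ} (hi : i < N k) :
    blockIndex N (blockStart N k + i) = k := by
  have hmono := strictMono_blockStart hN
  refine le_antisymm ?_ (Nat.le_findGreatest (hmono.le_apply.trans (Nat.le_add_right _ _))
    (Nat.le_add_right _ _))
  by_contra! hlt
  have hspec : blockStart N (blockIndex N (blockStart N k + i)) ≤ blockStart N k + i :=
    Nat.findGreatest_spec (P := fun k' => blockStart N k' ≤ blockStart N k + i) (Nat.zero_le _)
      (by simp [blockStart])
  have := hmono.monotone (Nat.succ_le_of_lt hlt)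
  rw [blockStart_succ] at this
  omega

lemma blockSpread_blockStart_add (hN : ∀ k, 0 < N k) (w : ℕ → ℝ) {k i : ℕ} (hi : i < N k) :
    blockSpread N w (blockStart N k + i) = w k / N k := by
  simp only [blockSpread, blockIndex_blockStart_add hN hi]

lemma sum_range_blockStart_blockSpread (hN : ∀ k, 0 < N k) (w : ℕ → ℝ) (K : ℕ) :
    ∑ j ∈ range (blockStart N K), blockSpread N w j = ∑ k ∈ range K, w k := by
  induction K with
  | zero => simp [blockStart]
  | succ K ih =>
    rw [blockStart_succ, sum_range_add, ih, sum_range_succ,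
      sum_congr rfl fun i hi => blockSpread_blockStart_add hN w (mem_range.1 hi), sum_const,
      card_range, nsmul_eq_mul, mul_div_cancel₀ _ (Nat.cast_ne_zero.2 (hN K).ne')]

lemma summable_blockSpread (hN : ∀ k, 0 < N k) {w : ℕ → ℝ} (hw0 : ∀ k, 0 ≤ w k)
    (hw : Summable w) : Summable (blockSpread N w) := by
  have hnonneg : ∀ j, 0 ≤ blockSpread N w j := fun j => div_nonneg (hw0 _) (Nat.cast_nonneg _)
  refine summable_of_sum_range_le (c := ∑' k, w k) hnonneg fun M => ?_
  calc ∑ j ∈ range M, blockSpread N w j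
      ≤ ∑ j ∈ range (blockStart N M), blockSpread N w j :=
        sum_le_sum_of_subset_of_nonneg (range_subset_range.2 (strictMono_blockStart hN).le_apply)
          fun j _ _ => hnonneg j
    _ = ∑ k ∈ range M, w k := sum_range_blockStart_blockSpread hN w M
    _ ≤ ∑' k, w k := hw.sum_le_tsum _ fun k _ => hw0 k

end Blocks

section Laplace

variable {Ω : Type*} [MeasurableSpace Ω] {μ : Measure Ω}

lemma tendsto_integral_min_natCast {X : Ω → ℝ} (hint : Integrable X μ) :
    Tendsto (fun N : ℕ => ∫ ω, min (X ω) N ∂μ) atTop (𝓝 (∫ ω, X ω ∂μ)) := by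
  refine tendsto_integral_of_dominated_convergence (fun ω => |X ω|)
    (fun N => hint.1.inf aestronglyMeasurable_const) hint.abs (fun N => ae_of_all _ fun ω => ?_)
    (ae_of_all _ fun ω => tendsto_const_nhds.congr' ?_)
  · rw [Real.norm_eq_abs, abs_le]
    exact ⟨le_min (neg_abs_le _) ((neg_nonpos.2 (abs_nonneg _)).trans (Nat.cast_nonneg N)),
      (min_le_left _ _).trans (le_abs_self _)⟩
  · filter_upwards [eventually_ge_atTop ⌈X ω⌉₊] with N hN
    exact (min_eq_left ((Nat.le_ceil _).trans (Nat.cast_le.2 hN))).symm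

lemma exists_two_le_integral_min_of_not_bddAbove {X : ℕ → Ω → ℝ}
    (hint : ∀ n, Integrable (X n) μ) (hunbdd : ¬BddAbove (Set.range fun n => ∫ ω, X n ω ∂μ))
    (k : ℕ) : ∃ n N : ℕ, k < n ∧ 0 < N ∧ 2 ≤ ∫ ω, min ((1 / 2) ^ k * X n ω) N ∂μ := by
  obtain ⟨n, hkn, hn⟩ := exists_gt_lt_of_not_bddAbove hunbdd k (2 * 2 ^ k)
  have hlarge : 2 < ∫ ω, (1 / 2) ^ k * X n ω ∂μ := by
    rw [integral_const_mul, one_div, inv_pow, ← div_eq_inv_mul, lt_div_iff₀ (by positivity)]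
    linarith
  obtain ⟨N, hN, h2⟩ := (((tendsto_integral_min_natCast ((hint n).const_mul _)).eventually
    (lt_mem_nhds hlarge)).and (eventually_gt_atTop 0)).exists
  exact ⟨n, N, hkn, h2, hN.le⟩

variable [IsProbabilityMeasure μ] {X : Ω → ℝ}

lemma mgf_le_one_of_nonneg (hX : ∀ ω, 0 ≤ X ω) {t : ℝ} (ht : t ≤ 0) : mgf X μ t ≤ 1 := by
  have hbound : ∀ᵐ ω ∂μ, ‖exp (t * X ω)‖ ≤ 1 := ae_of_all _ fun ω => by
    rw [Real.norm_eq_abs, abs_of_pos (exp_pos _), exp_le_one_iff]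
    exact mul_nonpos_of_nonpos_of_nonneg ht (hX ω)
  have h := norm_integral_le_of_norm_le_const hbound
  rw [probReal_univ, mul_one] at h
  exact (le_abs_self _).trans h

lemma integrable_exp_mul_of_nonneg (hXm : Measurable X) (hX : ∀ ω, 0 ≤ X ω) {t : ℝ}
    (ht : t ≤ 0) : Integrable (fun ω => exp (t * X ω)) μ :=
  .of_mem_Icc 0 1 (hXm.const_mul t).exp.aemeasurable <| ae_of_all _ fun ω =>
    ⟨(exp_pos _).le, exp_le_one_iff.2 (mul_nonpos_of_nonpos_of_nonneg ht (hX ω))⟩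

lemma integral_min_le_two_mul_one_sub_mgf (hXm : Measurable X) (hX : ∀ ω, 0 ≤ X ω)
    {c t : ℝ} (hc : 0 ≤ c) (ht : 0 < t) :
    ∫ ω, min (c * X ω) t ∂μ ≤ 2 * t * (1 - mgf X μ (-(c / t))) := by
  have hpoint : ∀ ω, min (c * X ω) t ≤ 2 * t * (1 - exp (-(c / t) * X ω)) := fun ω => by
    have hcX : 0 ≤ c / t * X ω := mul_nonneg (div_nonneg hc ht.le) (hX ω)
    calc min (c * X ω) t = t * min (c / t * X ω) 1 := by
          rw [mul_min_of_nonneg _ _ ht.le, mul_one, ← mul_assoc, mul_div_cancel₀ _ ht.ne']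
      _ ≤ t * (2 * (1 - exp (-(c / t * X ω)))) :=
          mul_le_mul_of_nonneg_left (min_le_two_mul_one_sub_exp_neg hcX) ht.le
      _ = 2 * t * (1 - exp (-(c / t) * X ω)) := by ring_nf
  have hexp := integrable_exp_mul_of_nonneg (μ := μ) hXm hX
    (neg_nonpos.2 (div_nonneg hc ht.le))
  calc ∫ ω, min (c * X ω) t ∂μ ≤ ∫ ω, 2 * t * (1 - exp (-(c / t) * X ω)) ∂μ :=
        integral_mono_of_nonneg
          (ae_of_all _ fun ω => le_min (mul_nonneg hc (hX ω)) ht.le)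
          (((integrable_const 1).sub hexp).const_mul _) (ae_of_all _ hpoint)
    _ = 2 * t * (1 - mgf X μ (-(c / t))) := by
        rw [integral_const_mul, integral_sub (integrable_const 1) hexp, mgf]
        simp

lemma mgf_neg_div_pow_le_exp (hXm : Measurable X) (hX : ∀ ω, 0 ≤ X ω) {c : ℝ} (hc : 0 ≤ c)
    {N : ℕ} (hN : 0 < N) :
    mgf X μ (-(c / N)) ^ N ≤ exp (-(∫ ω, min (c * X ω) N ∂μ) / 2) := by
  set φ := mgf X μ (-(c / N))
  have hmin := integral_min_le_two_mul_one_sub_mgf (μ := μ) hXm hX hc (Nat.cast_pos.2 hN)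
  calc φ ^ N ≤ exp (-(1 - φ)) ^ N := by
        gcongr
        · exact mgf_nonneg
        · linarith [one_sub_le_exp_neg (1 - φ)]
    _ = exp (-(N * (1 - φ))) := by rw [← exp_nat_mul, mul_neg]
    _ ≤ exp (-(∫ ω, min (c * X ω) N ∂μ) / 2) := by gcongr; linarith

lemma one_sub_sub_measureReal_le_mgf_neg_one {Z : Ω → ℝ} (hZm : Measurable Z)
    (hZ : ∀ ω, 0 ≤ Z ω) {δ : ℝ} (hδ : 0 ≤ δ) :
    1 - δ - μ.real {ω | δ < Z ω} ≤ mgf Z μ (-1) := by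
  have hS : MeasurableSet {ω | δ < Z ω} := measurableSet_lt measurable_const hZm
  have hind : Integrable ({ω | δ < Z ω}.indicator fun _ => (1 : ℝ)) μ :=
    (integrable_indicator_iff hS).2 (integrable_const 1).integrableOn
  have hpoint : ∀ ω, 1 - δ - {ω | δ < Z ω}.indicator (fun _ => (1 : ℝ)) ω ≤ exp (-1 * Z ω) := by
    intro ω
    by_cases hω : δ < Z ω
    · rw [Set.indicator_of_mem (show ω ∈ {ω | δ < Z ω} from hω)]; linarith [exp_pos (-1 * Z ω)]
    · rw [Set.indicator_of_notMem (show ω ∉ {ω | δ < Z ω} from hω), neg_one_mul]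
      linarith [one_sub_le_exp_neg (Z ω), not_lt.1 hω]
  calc 1 - δ - μ.real {ω | δ < Z ω}
      = ∫ ω, (1 - δ - {ω | δ < Z ω}.indicator (fun _ => (1 : ℝ)) ω) ∂μ := by
        rw [integral_sub (integrable_const _) hind, integral_indicator_const _ hS]
        simp
    _ ≤ mgf Z μ (-1) :=
        integral_mono ((integrable_const _).sub hind)
          (integrable_exp_mul_of_nonneg hZm hZ (by norm_num)) hpoint

end Laplace

section IIDSequence

variable {Ω : Type*} [MeasurableSpace Ω] {μ : Measure Ω} {X : ℕ → Ω → ℝ}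

lemma ae_summable_mul_of_identDistrib (hident : ∀ j, IdentDistrib (X j) (X 0) μ μ)
    (hX : ∀ j ω, 0 ≤ X j ω) (hint : Integrable (X 0) μ) {a : ℕ → ℝ} (ha : ∀ j, 0 ≤ a j)
    (hsa : Summable a) : ∀ᵐ ω ∂μ, Summable fun j => a j * X j ω := by
  have hmeas : ∀ j, AEMeasurable (fun ω => ENNReal.ofReal (a j * X j ω)) μ := fun j =>
    ENNReal.measurable_ofReal.comp_aemeasurable ((hident j).aemeasurable_fst.const_mul _)
  have hterm : ∀ j, ∫⁻ ω, ENNReal.ofReal (a j * X j ω) ∂μ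
      = ENNReal.ofReal (a j) * ∫⁻ ω, ENNReal.ofReal (X 0 ω) ∂μ := fun j => by
    simp_rw [ENNReal.ofReal_mul (ha j)]
    rw [lintegral_const_mul'' _ (hident j).aemeasurable_fst.ennreal_ofReal]
    exact congrArg _ ((hident j).comp ENNReal.measurable_ofReal).lintegral_eq
  have hfin : ∫⁻ ω, ∑' j, ENNReal.ofReal (a j * X j ω) ∂μ ≠ ∞ := by
    rw [lintegral_tsum hmeas, tsum_congr hterm, ENNReal.tsum_mul_right,
      ← ENNReal.ofReal_tsum_of_nonneg ha hsa]
    exact ENNReal.mul_ne_top ENNReal.ofReal_ne_top (hint.lintegral_lt_top).ne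
  filter_upwards [ae_lt_top' (AEMeasurable.tsum hmeas) hfin] with ω hω
  refine (ENNReal.summable_toReal hω.ne).congr fun j => ?_
  rw [ENNReal.toReal_ofReal (mul_nonneg (ha j) (hX j ω))]

variable [IsProbabilityMeasure μ]

lemma mgf_neg_one_sum_range_add_le_pow (hXm : ∀ j, Measurable (X j)) (hindep : iIndepFun X μ)
    (hident : ∀ j, IdentDistrib (X j) (X 0) μ μ) (hX : ∀ j ω, 0 ≤ X j ω) {a : ℕ → ℝ}
    (ha : ∀ j, 0 ≤ a j) {b N : ℕ} {c : ℝ} (hblock : ∀ i < N, a (b + i) = c) :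
    mgf (fun ω => ∑ j ∈ range (b + N), a j * X j ω) μ (-1) ≤ mgf (X 0) μ (-c) ^ N := by
  have hfactor : ∀ j, mgf (fun ω => a j * X j ω) μ (-1) = mgf (X 0) μ (-a j) := fun j => by
    rw [mgf_const_mul, mul_neg_one, mgf_congr_identDistrib (hident j)]
  have hsum : mgf (fun ω => ∑ j ∈ range (b + N), a j * X j ω) μ (-1)
      = ∏ j ∈ range (b + N), mgf (X 0) μ (-a j) := by
    rw [← Finset.sum_fn]
    exact ((hindep.comp (fun j x => a j * x) fun j => measurable_const_mul _).mgf_sum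
      (fun j => (hXm j).const_mul _) _).trans (prod_congr rfl fun j _ => hfactor j)
  have hlast : ∏ i ∈ range N, mgf (X 0) μ (-a (b + i)) = mgf (X 0) μ (-c) ^ N := by
    rw [prod_congr rfl fun i hi => by rw [hblock i (mem_range.1 hi)], prod_const, card_range]
  rw [hsum, prod_range_add, hlast]
  exact mul_le_of_le_one_left (pow_nonneg mgf_nonneg _)
    (prod_le_one (fun _ _ => mgf_nonneg) fun j _ =>
      mgf_le_one_of_nonneg (hX 0) (neg_nonpos.2 (ha j)))

/-- By independence, the Laplace transform at `1` of `∑_{j < b + N} a_j X_j` is at most `exp (-1)`;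
if `∑ a_j X_j` were `≤ 1/4` outside a set of probability `≤ 1/4`, it would be at least `1/2`. -/
lemma inv_four_lt_measureReal_of_block (hXm : ∀ j, Measurable (X j))
    (hindep : iIndepFun X μ) (hident : ∀ j, IdentDistrib (X j) (X 0) μ μ)
    (hX : ∀ j ω, 0 ≤ X j ω) (hint : Integrable (X 0) μ) {a : ℕ → ℝ} (ha : ∀ j, 0 ≤ a j)
    (hsa : Summable a) {b N : ℕ} (hN : 0 < N) {c : ℝ} (hc : 0 ≤ c)
    (hblock : ∀ i < N, a (b + i) = c / N) (h2 : 2 ≤ ∫ ω, min (c * X 0 ω) N ∂μ) :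
    4⁻¹ < μ.real {ω | 4⁻¹ < |∑' j, a j * X j ω|} := by
  set Z := fun ω => ∑ j ∈ range (b + N), a j * X j ω
  have hZ : ∀ ω, 0 ≤ Z ω := fun ω => sum_nonneg fun j _ => mul_nonneg (ha j) (hX j ω)
  have hupper : mgf Z μ (-1) ≤ exp (-1) :=
    (mgf_neg_one_sum_range_add_le_pow hXm hindep hident hX ha hblock).trans <|
      (mgf_neg_div_pow_le_exp (hXm 0) (hX 0) hc hN).trans (exp_le_exp.2 (by linarith))
  have hlower := one_sub_sub_measureReal_le_mgf_neg_one (μ := μ)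
    (Finset.measurable_sum _ fun j _ => (hXm j).const_mul (a j)) hZ (δ := 4⁻¹) (by norm_num)
  have htail : μ.real {ω | 4⁻¹ < Z ω} ≤ μ.real {ω | 4⁻¹ < |∑' j, a j * X j ω|} := by
    refine ENNReal.toReal_mono (measure_ne_top _ _) (measure_mono_ae ?_)
    filter_upwards [ae_summable_mul_of_identDistrib hident hX hint ha hsa] with ω hω hlt
    exact hlt.trans_le ((hω.sum_le_tsum _ fun j _ => mul_nonneg (ha j) (hX j ω)).trans
      (le_abs_self _))
  linarith [exp_neg_one_lt_half]

end IIDSequence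

/-- **Proposition 3, (ii) ⟹ (i)** of Peligrad–Utev, "Invariance principle for stochastic
processes with short memory". For a double array of i.i.d. non-negative integrable random
variables: if for every non-negative sequence `(a_j)` with `∑ a_j < ∞` the series
`∑_j a_j U_j⁽ⁿ⁾` tends to `0` in probability as `n → ∞`, then `U_1⁽ⁿ⁾ → 0` in probability
and `sup_n E(U_1⁽ⁿ⁾) < ∞`. -/
theorem stmt4
    {Ω : Type*} [MeasurableSpace Ω] (μ : Measure Ω) [IsProbabilityMeasure μ]
    (U : ℕ → ℕ → Ω → ℝ)
    (hmeas : ∀ n j, Measurable (U n j))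
    (hindep : ∀ n, iIndepFun (U n) μ)
    (hident : ∀ n j, IdentDistrib (U n j) (U n 0) μ μ)
    (hnonneg : ∀ n j ω, 0 ≤ U n j ω)
    (hint : ∀ n j, Integrable (U n j) μ)
    (hsum0 : ∀ a : ℕ → ℝ, (∀ j, 0 ≤ a j) → Summable a →
      ∀ ε : ℝ, 0 < ε →
        Tendsto (fun n => μ {ω : Ω | ε < |∑' j, a j * U n j ω|}) atTop (𝓝 0)) :
    (∀ ε : ℝ, 0 < ε → Tendsto (fun n => μ {ω : Ω | ε < U n 0 ω}) atTop (𝓝 0)) ∧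
      (∃ C : ℝ, ∀ n, (∫ ω, U n 0 ω ∂μ) ≤ C) := by
  refine ⟨fun ε hε => ?_, ?_⟩
  · have hsingle : (0 : ℕ → ℝ) ≤ Pi.single 0 1 := Pi.single_nonneg.2 zero_le_one
    simpa [Pi.single_apply, ite_mul, abs_of_nonneg, hnonneg] using
      hsum0 (Pi.single 0 1) hsingle (hasSum_pi_single 0 1).summable ε hε
  by_contra hunbdd
  choose n N hkn hN h2 using exists_two_le_integral_min_of_not_bddAbove (fun n => hint n 0)
    fun ⟨C, hC⟩ => hunbdd ⟨C, fun n => hC ⟨n, rfl⟩⟩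
  set a := blockSpread N fun k => (1 / 2 : ℝ) ^ k
  have ha : ∀ j, 0 ≤ a j := fun j => div_nonneg (by positivity) (Nat.cast_nonneg _)
  have hsa : Summable a := summable_blockSpread hN (fun k => by positivity) summable_geometric_two
  have htail := (ENNReal.tendsto_toReal zero_ne_top).comp (hsum0 a ha hsa 4⁻¹ (by norm_num))
  obtain ⟨k, hk⟩ := (htail.eventually
    (gt_mem_nhds (by norm_num : (0 : ℝ≥0∞).toReal < 4⁻¹))).exists_forall_of_atTop
  exact (hk (n k) (hkn k).le).not_gt <| inv_four_lt_measureReal_of_block (hmeas (n k))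
    (hindep (n k)) (hident (n k)) (hnonneg (n k)) (hint (n k) 0) ha hsa (hN k) (by positivity)
    (fun i hi => blockSpread_blockStart_add hN _ hi) (h2 k)
end

section
/- Let t : (0,∞) → [0,∞) be a non-increasing function with t(x) → 0 as x → ∞. Then there exist x_0 > 0 and a non-negative real sequence (a_j)_{j∈ℕ} with ∑_{j=1}^∞ a_j < ∞ such that t(x) ≤ ∑_{j=1}^∞ a_j · 1_{{x ≤ 1/a_j}} for all x ≥ x_0 (terms with a_j = 0 are understood to contribute 0). -/
open Filter Topology

/-- A minorization lemma from the proof of **Proposition 3** in Peligrad–Utev,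
"Invariance principle for stochastic processes with short memory": every non-increasing
function `t : (0,∞) → [0,∞)` with `t(x) → 0` as `x → ∞` is eventually dominated by
`t_a(x) = ∑_j a_j 1_{x ≤ 1/a_j}` for some non-negative summable sequence `(a_j)`
(a term with `a_j = 0` contributes `0`). -/
theorem stmt5
    (t : ℝ → ℝ)
    (htnonneg : ∀ x, 0 < x → 0 ≤ t x)
    (htanti : AntitoneOn t (Set.Ioi (0 : ℝ)))
    (htlim : Tendsto t atTop (𝓝 0)) :
    ∃ x₀ : ℝ, 0 < x₀ ∧ ∃ a : ℕ → ℝ, (∀ j, 0 ≤ a j) ∧ Summable a ∧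
      ∀ x : ℝ, x₀ ≤ x → t x ≤ ∑' j, if 0 < a j ∧ x ≤ 1 / a j then a j else 0 := by
  -- choose thresholds Y n with t y < (1/2)^n for y ≥ Y n
  have hY : ∀ n : ℕ, ∃ N : ℝ, ∀ y ≥ N, t y < (2:ℝ)⁻¹ ^ n := by
    intro n
    have hpos : (0:ℝ) < (2:ℝ)⁻¹ ^ n := by positivity
    have := htlim.eventually (gt_mem_nhds hpos)
    exact eventually_atTop.mp this
  choose Y hYspec using hY
  -- recursive sequence x n
  obtain ⟨X, hX0, hXsucc⟩ : ∃ X : ℕ → ℝ, X 0 = max 1 (Y 0) ∧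
      ∀ n, X (n+1) = max (X n + 1) (max (Y (n+1)) (2 ^ (n+1))) :=
    ⟨fun n => Nat.rec (max 1 (Y 0))
      (fun n xn => max (xn + 1) (max (Y (n+1)) (2 ^ (n+1)))) n, rfl, fun n => rfl⟩
  have hXge2 : ∀ n, (2:ℝ) ^ n ≤ X n := by
    intro n
    cases n with
    | zero => rw [hX0, pow_zero]; exact le_max_left _ _
    | succ n => rw [hXsucc]; exact le_trans (le_max_right _ _) (le_max_right _ _)
  have hXpos : ∀ n, 0 < X n := fun n => lt_of_lt_of_le (by positivity) (hXge2 n)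
  have hXlt : ∀ n, X n < X (n+1) := by
    intro n; rw [hXsucc]; exact lt_of_lt_of_le (by linarith) (le_max_left _ _)
  have hXmono : StrictMono X := strictMono_nat_of_lt_succ hXlt
  have hXY : ∀ n, Y n ≤ X n := by
    intro n
    cases n with
    | zero => rw [hX0]; exact le_max_right _ _
    | succ n => rw [hXsucc]; exact le_trans (le_max_left _ _) (le_max_right _ _)
  have htX : ∀ n, t (X n) < (2:ℝ)⁻¹ ^ n := fun n => hYspec n _ (hXY n)
  -- counts
  set K : ℕ → ℕ := fun n => ⌈t (X n) * X (n+1)⌉₊ with hK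
  -- key bound on block mass
  have hKb : ∀ n, (K n : ℝ) * (X (n+1))⁻¹ ≤ 2 * (2:ℝ)⁻¹ ^ n := by
    intro n
    have h1 : (K n : ℝ) < t (X n) * X (n+1) + 1 :=
      Nat.ceil_lt_add_one (mul_nonneg (htnonneg _ (hXpos n)) (hXpos (n+1)).le)
    have h2 : (0:ℝ) < X (n+1) := hXpos (n+1)
    have h3 : (X (n+1))⁻¹ ≤ (2:ℝ)⁻¹ ^ (n+1) := by
      rw [inv_pow]
      exact inv_anti₀ (by positivity) (hXge2 (n+1))
    have h4 : (K n : ℝ) * (X (n+1))⁻¹ ≤ t (X n) + (X (n+1))⁻¹ := by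
      have := mul_le_mul_of_nonneg_right h1.le (inv_nonneg.2 h2.le)
      calc (K n : ℝ) * (X (n+1))⁻¹ ≤ (t (X n) * X (n+1) + 1) * (X (n+1))⁻¹ := this
        _ = t (X n) + (X (n+1))⁻¹ := by field_simp
    have h5 : t (X n) + (X (n+1))⁻¹ ≤ (2:ℝ)⁻¹ ^ n + (2:ℝ)⁻¹ ^ (n+1) :=
      add_le_add (htX n).le h3
    have h6 : (2:ℝ)⁻¹ ^ (n+1) ≤ (2:ℝ)⁻¹ ^ n :=
      pow_le_pow_of_le_one (by norm_num) (by norm_num) (Nat.le_succ n)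
    nlinarith
  -- the sequence
  set a : ℕ → ℝ := fun j =>
    if (Nat.unpair j).2 < K (Nat.unpair j).1 then (X ((Nat.unpair j).1 + 1))⁻¹ else 0
    with ha
  have hanonneg : ∀ j, 0 ≤ a j := by
    intro j; rw [ha]; dsimp only
    split
    · exact inv_nonneg.2 (hXpos ((Nat.unpair j).1 + 1)).le
    · exact le_refl 0
  -- summability
  set g : ℕ × ℕ → ℝ := fun p => if p.2 < K p.1 then (X (p.1 + 1))⁻¹ else 0 with hg
  have hgnonneg : ∀ p, 0 ≤ g p := by
    intro p; rw [hg]; dsimp only; split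
    · exact inv_nonneg.2 (hXpos (p.1 + 1)).le
    · exact le_refl 0
  have hgfib : ∀ n, Summable fun i => g (n, i) := by
    intro n
    apply summable_of_ne_finset_zero (s := Finset.range (K n))
    intro i hi
    simp only [Finset.mem_range, not_lt] at hi
    simp [hg, Nat.not_lt.mpr hi]
  have hgfibsum : ∀ n, (∑' i, g (n, i)) = (K n : ℝ) * (X (n+1))⁻¹ := by
    intro n
    rw [tsum_eq_sum (s := Finset.range (K n))]
    · rw [Finset.sum_congr rfl (fun i hi => ?_), Finset.sum_const, Finset.card_range,
        nsmul_eq_mul]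
      simp only [Finset.mem_range] at hi
      simp [hg, hi]
    · intro i hi
      simp only [Finset.mem_range, not_lt] at hi
      simp [hg, Nat.not_lt.mpr hi]
  have hgsum : Summable g := by
    rw [summable_prod_of_nonneg hgnonneg]
    refine ⟨hgfib, ?_⟩
    have hbound : ∀ n, (∑' i, g (n, i)) ≤ 2 * (2:ℝ)⁻¹ ^ n := by
      intro n; rw [hgfibsum n]; exact hKb n
    have hgeo : Summable (fun n : ℕ => 2 * (2:ℝ)⁻¹ ^ n) :=
      (summable_geometric_of_lt_one (by norm_num) (by norm_num)).mul_left 2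
    exact Summable.of_nonneg_of_le (fun n => tsum_nonneg (fun i => hgnonneg _)) hbound hgeo
  have hasum : Summable a := by
    have h1 : Summable (g ∘ Nat.unpair) :=
      hgsum.comp_injective Nat.pairEquiv.symm.injective
    have h2 : a = g ∘ Nat.unpair := by
      funext j
      simp only [ha, hg, Function.comp_apply]
    rw [h2]
    exact h1
  refine ⟨X 0, hXpos 0, a, hanonneg, hasum, ?_⟩
  intro x hx
  -- find the block containing x
  have hPex : ∃ n, x < X (n+1) := by
    obtain ⟨n, hn⟩ := pow_unbounded_of_one_lt x (by norm_num : (1:ℝ) < 2)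
    exact ⟨n, lt_of_lt_of_le hn (le_trans (pow_le_pow_right₀ (by norm_num) (Nat.le_succ n))
      (hXge2 (n+1)))⟩
  set n := Nat.find hPex with hn
  have hxlt : x < X (n+1) := Nat.find_spec hPex
  have hxge : X n ≤ x := by
    rcases Nat.eq_zero_or_pos n with h0 | h0
    · rw [h0]; exact hx
    · obtain ⟨m, hm⟩ := Nat.exists_eq_succ_of_ne_zero h0.ne'
      have hmin := Nat.find_min hPex (m := m) (by omega)
      have := not_lt.mp hmin
      rw [hm]
      exact this
  have hxpos : 0 < x := lt_of_lt_of_le (hXpos n) hxge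
  -- F is the summand of the tsum
  set F : ℕ → ℝ := fun j => if 0 < a j ∧ x ≤ 1 / a j then a j else 0 with hF
  have hFnonneg : ∀ j, 0 ≤ F j := by
    intro j; rw [hF]; dsimp only; split
    · exact hanonneg j
    · exact le_refl 0
  have hFle : ∀ j, F j ≤ a j := by
    intro j; rw [hF]; dsimp only; split
    · exact le_refl _
    · exact hanonneg j
  have hFsum : Summable F := Summable.of_nonneg_of_le hFnonneg hFle hasum
  -- the finite set of indices in block n
  set S : Finset ℕ := (Finset.range (K n)).image (fun i => Nat.pair n i) with hS
  have hFS : ∀ j ∈ S, F j = (X (n+1))⁻¹ := by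
    intro j hj
    rw [hS] at hj
    obtain ⟨i, hi, rfl⟩ := Finset.mem_image.mp hj
    simp only [Finset.mem_range] at hi
    have haj : a (Nat.pair n i) = (X (n+1))⁻¹ := by
      simp [ha, Nat.unpair_pair, hi]
    rw [hF]; dsimp only
    rw [haj, if_pos]
    constructor
    · exact inv_pos.2 (hXpos (n+1))
    · rw [one_div, inv_inv]; exact hxlt.le
  have hcard : S.card = K n := by
    rw [hS, Finset.card_image_of_injective _ (fun i i' h => (Nat.pair_eq_pair.mp h).2),
      Finset.card_range]
  have hsumS : ∑ j ∈ S, F j = (K n : ℝ) * (X (n+1))⁻¹ := by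
    rw [Finset.sum_congr rfl hFS, Finset.sum_const, hcard, nsmul_eq_mul]
  have h1 : t x ≤ t (X n) := htanti (Set.mem_Ioi.mpr (hXpos n)) (Set.mem_Ioi.mpr hxpos) hxge
  have h2 : t (X n) ≤ (K n : ℝ) * (X (n+1))⁻¹ := by
    have hX1 : (0:ℝ) < X (n+1) := hXpos (n+1)
    rw [← div_eq_mul_inv, le_div_iff₀ hX1]
    exact Nat.le_ceil _
  calc t x ≤ (K n : ℝ) * (X (n+1))⁻¹ := h1.trans h2
    _ = ∑ j ∈ S, F j := hsumS.symm
    _ ≤ ∑' j, F j := Summable.sum_le_tsum S (fun j _ => hFnonneg j) hFsum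
end

section
/- Let p ≥ 1, let (ξ_i)_{i∈ℤ} be a stationary sequence of real random variables with E|ξ_0|^p < ∞, (a_j)_{j∈ℤ} real numbers with ∑_{j∈ℤ}|a_j| < ∞, X_k = ∑_{j∈ℤ} a_j ξ_{k−j}, S_n = ∑_{k=1}^n X_k, S_n^{(ξ)} = ∑_{j=1}^n ξ_j, and A = ∑_{j∈ℤ} a_j. Assume there is a constant C > 0 and a sequence of positive reals b_n → ∞ such that E(max_{1≤j≤n} |S_j^{(ξ)}|^p) ≤ C b_n^p for all n, and that E((b_n^{−1} max_{1≤j≤n} |ξ_j|)^p) → 0 as n → ∞. Then b_n^{−p} E(max_{1≤j≤n} |S_j − A S_j^{(ξ)}|^p) → 0 as n → ∞. -/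
/-!
Write `T_{l,j} = ∑_{k=1}^l ξ_{k-j}`, so that `S_l - A S^ξ_l = ∑_j a_j (T_{l,j} - T_{l,0})` and, by
Minkowski's inequality for countable sums, `‖max_{l≤n} |S_l - A S^ξ_l|‖_p` is at most
`∑_j |a_j| ‖max_{l≤n} |T_{l,j} - T_{l,0}|‖_p`. By stationarity each of these norms is at most
`2 ‖max_{l≤n} |S^ξ_l|‖_p = O(b_n)`, and telescoping in the lag `j`
(`T_{l,j+1} - T_{l,j} = ξ_{-j} - ξ_{l-j}`) bounds it by
`|j| (‖ξ_0‖_p + ‖max_{l≤n} |ξ_l|‖_p) = o(b_n)`.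
Using the second bound on a finite set of lags and the first on the tail of `∑ |a_j|` gives
`‖max_{l≤n} |S_l - A S^ξ_l|‖_p = o(b_n)`.
-/

open MeasureTheory Filter Topology ENNReal

theorem ENNReal.iSup_rpow {ι : Sort*} (g : ι → ℝ≥0∞) {r : ℝ} (hr : 0 < r) :
    (⨆ i, g i) ^ r = ⨆ i, g i ^ r :=
  Monotone.map_iSup_of_continuousAt ENNReal.continuous_rpow_const.continuousAt
    (ENNReal.monotone_rpow_of_nonneg hr.le) (ENNReal.zero_rpow_of_pos hr)

theorem ENNReal.tendsto_nhds_zero_of_le_add {ι κ : Type*} {l : Filter ι} {L : Filter κ} [L.NeBot]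
    {x : ι → ℝ≥0∞} {y : κ → ι → ℝ≥0∞} {t : κ → ℝ≥0∞} (ht : Tendsto t L (𝓝 0))
    (hy : ∀ k, Tendsto (y k) l (𝓝 0)) (hx : ∀ k i, x i ≤ y k i + t k) :
    Tendsto x l (𝓝 0) := by
  refine ENNReal.tendsto_nhds_zero.2 fun ε hε => ?_
  have hε2 : 0 < ε / 2 := ENNReal.half_pos hε.ne'
  obtain ⟨k, hk⟩ := (ENNReal.tendsto_nhds_zero.1 ht _ hε2).exists
  filter_upwards [ENNReal.tendsto_nhds_zero.1 (hy k) _ hε2] with i hi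
  calc x i ≤ y k i + t k := hx k i
    _ ≤ ε / 2 + ε / 2 := add_le_add hi hk
    _ = ε := ENNReal.add_halves ε

theorem ENNReal.tsum_mul_le_of_le {ι : Type*} (s : Finset ι) {w E : ι → ℝ≥0∞} {B₁ B₂ : ℝ≥0∞}
    (h₁ : ∀ i ∈ s, E i ≤ B₁) (h₂ : ∀ i, E i ≤ B₂) :
    ∑' i, w i * E i ≤ (∑' i, w i) * B₁ + (∑' i : {i // i ∉ s}, w i) * B₂ := by
  rw [← ENNReal.sum_add_tsum_compl s]
  gcongr ?_ + ?_
  · calc ∑ i ∈ s, w i * E i ≤ ∑ i ∈ s, w i * B₁ := by gcongr with i hi; exact h₁ i hi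
      _ = (∑ i ∈ s, w i) * B₁ := (Finset.sum_mul _ _ _).symm
      _ ≤ (∑' i, w i) * B₁ := by gcongr; exact ENNReal.sum_le_tsum s
  · calc ∑' i : ↥(s : Set ι)ᶜ, w i * E i ≤ ∑' i : ↥(s : Set ι)ᶜ, w i * B₂ := by
          gcongr with i; exact h₂ i
      _ = (∑' i : {i // i ∉ s}, w i) * B₂ := ENNReal.tsum_mul_right

section Minkowski
variable {α : Type*} [MeasurableSpace α] {μ : Measure α} {p : ℝ≥0∞}

theorem eLpNorm_tsum_enorm_le {ι E : Type*} [Countable ι] [NormedAddCommGroup E]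
    {f : ι → α → E} (hf : ∀ i, AEStronglyMeasurable (f i) μ) (hp1 : 1 ≤ p) (hp : p ≠ ∞) :
    eLpNorm (fun x => ∑' i, ‖f i x‖ₑ) p μ ≤ ∑' i, eLpNorm (f i) p μ := by
  have hp0 : p ≠ 0 := (zero_lt_one.trans_le hp1).ne'
  have hr : 0 < p.toReal := ENNReal.toReal_pos hp0 hp
  have hpartial (s : Finset ι) :
      eLpNorm (fun x => ∑ i ∈ s, ‖f i x‖ₑ) p μ ≤ ∑' i, eLpNorm (f i) p μ :=
    calc eLpNorm (fun x => ∑ i ∈ s, ‖f i x‖ₑ) p μ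
        ≤ ∑ i ∈ s, eLpNorm (fun x => ‖f i x‖ₑ) p μ := by
          have h := eLpNorm_sum_le (f := fun i x => ‖f i x‖ₑ) (s := s) (μ := μ)
            (fun i _ => (hf i).enorm.aestronglyMeasurable) hp1
          rwa [Finset.sum_fn] at h
      _ = ∑ i ∈ s, eLpNorm (f i) p μ := by simp only [eLpNorm_enorm]
      _ ≤ ∑' i, eLpNorm (f i) p μ := ENNReal.sum_le_tsum s
  have hmono : Monotone fun (s : Finset ι) x => (∑ i ∈ s, ‖f i x‖ₑ) ^ p.toReal :=
    fun s t hst x => ENNReal.rpow_le_rpow (Finset.sum_le_sum_of_subset hst) hr.le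
  simp only [eLpNorm_eq_lintegral_rpow_enorm_toReal hp0 hp, enorm_eq_self,
    ENNReal.tsum_eq_iSup_sum, ENNReal.iSup_rpow _ hr] at hpartial ⊢
  rw [lintegral_iSup_directed (fun s => ?_) hmono.directed_le, ENNReal.iSup_rpow _ (by positivity)]
  · exact iSup_le hpartial
  · exact (Finset.aemeasurable_fun_sum _ fun i _ => (hf i).enorm).pow_const _

end Minkowski

-- `max_{1 ≤ l ≤ n} |f l x|`, which is `0` for `n = 0`.
noncomputable def maxAbs {α : Type*} (f : ℕ → α → ℝ) (n : ℕ) (x : α) : ℝ :=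
  ⨆ l ∈ Finset.Icc 1 n, |f l x|

section MaxAbs
variable {α : Type*} {f : ℕ → α → ℝ} {n : ℕ} {x : α}

theorem maxAbs_nonneg : 0 ≤ maxAbs f n x :=
  Real.iSup_nonneg fun _ => Real.iSup_nonneg fun _ => abs_nonneg _

theorem maxAbs_le {B : ℝ} (hB : 0 ≤ B) (h : ∀ l ∈ Finset.Icc 1 n, |f l x| ≤ B) :
    maxAbs f n x ≤ B :=
  Real.iSup_le (fun l => Real.iSup_le (h l) hB) hB

theorem maxAbs_le_sum_abs : maxAbs f n x ≤ ∑ l ∈ Finset.Icc 1 n, |f l x| :=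
  maxAbs_le (Finset.sum_nonneg fun _ _ => abs_nonneg _) fun _ hl =>
    Finset.single_le_sum (f := fun l => |f l x|) (fun _ _ => abs_nonneg _) hl

theorem abs_le_maxAbs {l : ℕ} (hl : l ∈ Finset.Icc 1 n) : |f l x| ≤ maxAbs f n x := by
  have hbdd : BddAbove (Set.range fun l => ⨆ _ : l ∈ Finset.Icc 1 n, |f l x|) := by
    refine ⟨∑ l ∈ Finset.Icc 1 n, |f l x|, Set.forall_mem_range.2 fun _ => ?_⟩
    exact Real.iSup_le (fun hk => Finset.single_le_sum (f := fun l => |f l x|)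
      (fun _ _ => abs_nonneg _) hk) (Finset.sum_nonneg fun _ _ => abs_nonneg _)
  exact le_ciSup_of_le hbdd l (ciSup_pos (f := fun _ => |f l x|) hl).ge

theorem maxAbs_sub_le {g : ℕ → α → ℝ} :
    maxAbs (fun l x => f l x - g l x) n x ≤ maxAbs f n x + maxAbs g n x :=
  maxAbs_le (add_nonneg maxAbs_nonneg maxAbs_nonneg) fun _ hl =>
    (abs_sub _ _).trans (add_le_add (abs_le_maxAbs hl) (abs_le_maxAbs hl))

theorem enorm_maxAbs_le {B : ℝ≥0∞} (h : ∀ l ∈ Finset.Icc 1 n, ‖f l x‖ₑ ≤ B) :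
    ‖maxAbs f n x‖ₑ ≤ B := by
  rcases eq_or_ne B ⊤ with rfl | hB
  · exact le_top
  rw [← ENNReal.ofReal_toReal hB, Real.enorm_of_nonneg maxAbs_nonneg]
  refine ENNReal.ofReal_le_ofReal (maxAbs_le ENNReal.toReal_nonneg fun l hl => ?_)
  rw [← Real.norm_eq_abs, ← toReal_enorm]
  exact ENNReal.toReal_mono hB (h l hl)

variable [MeasurableSpace α]

theorem measurable_maxAbs (hf : ∀ l, Measurable (f l)) : Measurable (maxAbs f n) :=
  Measurable.iSup fun l => Measurable.iSup_Prop _ (hf l).abs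

theorem memLp_maxAbs {μ : Measure α} {q : ℝ≥0∞} (hfm : ∀ l, Measurable (f l))
    (hf : ∀ l, MemLp (f l) q μ) : MemLp (maxAbs f n) q μ := by
  refine (memLp_finsetSum (Finset.Icc 1 n) fun l _ => (hf l).abs).mono
    (measurable_maxAbs hfm).aestronglyMeasurable (ae_of_all _ fun x => ?_)
  rw [Real.norm_of_nonneg maxAbs_nonneg]
  exact maxAbs_le_sum_abs.trans (Real.le_norm_self _)

end MaxAbs

section RpowIntegral
variable {α : Type*} [MeasurableSpace α] {μ : Measure α} {V : α → ℝ} {p : ℝ}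

theorem eLpNorm_rpow_eq_ofReal_integral (hV : ∀ x, 0 ≤ V x) (hp : 0 < p)
    (hint : Integrable (fun x => V x ^ p) μ) :
    eLpNorm V (.ofReal p) μ ^ p = .ofReal (∫ x, V x ^ p ∂μ) := by
  rw [ofReal_integral_eq_lintegral_ofReal hint (ae_of_all _ fun x => Real.rpow_nonneg (hV x) p),
    eLpNorm_eq_lintegral_rpow_enorm_toReal (by simpa using hp) ofReal_ne_top, toReal_ofReal hp.le,
    ← ENNReal.rpow_mul, one_div_mul_cancel hp.ne', ENNReal.rpow_one]
  refine lintegral_congr fun x => ?_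
  rw [Real.enorm_of_nonneg (hV x), ofReal_rpow_of_nonneg (hV x) hp.le]

theorem ofReal_integral_rpow_le (hV : ∀ x, 0 ≤ V x) (hp : 0 < p) :
    .ofReal (∫ x, V x ^ p ∂μ) ≤ eLpNorm V (.ofReal p) μ ^ p := by
  by_cases hint : Integrable (fun x => V x ^ p) μ
  · exact (eLpNorm_rpow_eq_ofReal_integral hV hp hint).ge
  · simp [integral_undef hint]

theorem MeasureTheory.MemLp.integrable_rpow_of_nonneg (hV : ∀ x, 0 ≤ V x) (hp : 0 < p)
    (h : MemLp V (.ofReal p) μ) : Integrable (fun x => V x ^ p) μ := by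
  simpa [Real.norm_of_nonneg (hV _), toReal_ofReal hp.le] using
    h.integrable_norm_rpow (by simpa using hp) ofReal_ne_top

theorem eLpNorm_le_of_integral_rpow_le (hV : ∀ x, 0 ≤ V x) (hp : 0 < p)
    (hVp : MemLp V (.ofReal p) μ) {C b : ℝ} (hb : 0 ≤ b) (h : ∫ x, V x ^ p ∂μ ≤ C * b ^ p) :
    eLpNorm V (.ofReal p) μ ≤ .ofReal C ^ p⁻¹ * .ofReal b := by
  have hCb : ENNReal.ofReal C ^ p⁻¹ * .ofReal b = ENNReal.ofReal (C * b ^ p) ^ p⁻¹ := by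
    rw [ofReal_mul' (by positivity), ← ofReal_rpow_of_nonneg hb hp.le,
      mul_rpow_of_nonneg _ _ (inv_nonneg.2 hp.le), ENNReal.rpow_rpow_inv hp.ne']
  rw [hCb, ENNReal.le_rpow_inv_iff hp,
    eLpNorm_rpow_eq_ofReal_integral hV hp (hVp.integrable_rpow_of_nonneg hV hp)]
  exact ofReal_le_ofReal h

end RpowIntegral

section RpowIntegralLimits
variable {α : Type*} [MeasurableSpace α] {μ : Measure α} {V : ℕ → α → ℝ} {p : ℝ} {b : ℕ → ℝ}

theorem tendsto_eLpNorm_div_of_tendsto_integral_rpow (hV : ∀ n x, 0 ≤ V n x) (hp : 0 < p)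
    (hVp : ∀ n, MemLp (V n) (.ofReal p) μ) (hb : ∀ n, 0 < b n)
    (h : Tendsto (fun n => ∫ x, ((b n)⁻¹ * V n x) ^ p ∂μ) atTop (𝓝 0)) :
    Tendsto (fun n => eLpNorm (V n) (.ofReal p) μ / .ofReal (b n)) atTop (𝓝 0) := by
  have hpow (n : ℕ) : (eLpNorm (V n) (.ofReal p) μ / .ofReal (b n)) ^ p =
      .ofReal (∫ x, ((b n)⁻¹ * V n x) ^ p ∂μ) := by
    have hW (x : α) : 0 ≤ (b n)⁻¹ * V n x := mul_nonneg (inv_nonneg.2 (hb n).le) (hV n x)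
    rw [← eLpNorm_rpow_eq_ofReal_integral hW hp
      (((hVp n).const_mul _).integrable_rpow_of_nonneg hW hp)]
    congr 1
    rw [show (fun x => (b n)⁻¹ * V n x) = (b n)⁻¹ • V n from rfl, eLpNorm_const_smul,
      Real.enorm_of_nonneg (inv_nonneg.2 (hb n).le), ofReal_inv_of_pos (hb n), div_eq_mul_inv,
      mul_comm]
  have hlim : Tendsto (fun n => ENNReal.ofReal (∫ x, ((b n)⁻¹ * V n x) ^ p ∂μ) ^ p⁻¹) atTop
      (𝓝 0) := by
    simpa [Function.comp_def, zero_rpow_of_pos (inv_pos.2 hp)] using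
      ((ENNReal.continuous_rpow_const (y := p⁻¹)).tendsto _).comp (ENNReal.tendsto_ofReal h)
  refine hlim.congr fun n => ?_
  rw [← hpow n, ENNReal.rpow_rpow_inv hp.ne']

theorem tendsto_rpow_neg_mul_integral_rpow (hV : ∀ n x, 0 ≤ V n x) (hp : 0 < p)
    (hb : ∀ n, 0 < b n)
    (h : Tendsto (fun n => eLpNorm (V n) (.ofReal p) μ / .ofReal (b n)) atTop (𝓝 0)) :
    Tendsto (fun n => b n ^ (-p) * ∫ x, V n x ^ p ∂μ) atTop (𝓝 0) := by
  have hnonneg (n : ℕ) : 0 ≤ b n ^ (-p) * ∫ x, V n x ^ p ∂μ :=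
    mul_nonneg (Real.rpow_nonneg (hb n).le _)
      (integral_nonneg fun x => Real.rpow_nonneg (hV n x) p)
  have hle (n : ℕ) : ENNReal.ofReal (b n ^ (-p) * ∫ x, V n x ^ p ∂μ) ≤
      (eLpNorm (V n) (.ofReal p) μ / .ofReal (b n)) ^ p := by
    rw [ofReal_mul (Real.rpow_nonneg (hb n).le _), ← ofReal_rpow_of_pos (hb n),
      div_rpow_of_nonneg _ _ hp.le, div_eq_mul_inv, ← rpow_neg, mul_comm]
    gcongr
    exact ofReal_integral_rpow_le (hV n) hp
  have hpow : Tendsto (fun n => (eLpNorm (V n) (.ofReal p) μ / .ofReal (b n)) ^ p) atTop (𝓝 0) := by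
    simpa [Function.comp_def, zero_rpow_of_pos hp] using
      ((ENNReal.continuous_rpow_const (y := p)).tendsto 0).comp h
  have hofReal := tendsto_of_tendsto_of_tendsto_of_le_of_le tendsto_const_nhds hpow
    (fun _ => zero_le) hle
  simpa [Function.comp_def, toReal_ofReal (hnonneg _)] using
    (ENNReal.tendsto_toReal zero_ne_top).comp hofReal

end RpowIntegralLimits

-- The `T_{l,j}` of the sketch above.
noncomputable def shiftedPartialSum {α : Type*} (ξ : ℤ → α → ℝ) (j : ℤ) (l : ℕ) (x : α) : ℝ :=
  ∑ k ∈ Finset.Icc 1 l, ξ (k - j) x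

theorem shiftedPartialSum_succ_sub {α : Type*} (ξ : ℤ → α → ℝ) (j : ℤ) (l : ℕ) (x : α) :
    shiftedPartialSum ξ (j + 1) l x - shiftedPartialSum ξ j l x = ξ (-j) x - ξ (l - j) x := by
  induction l with
  | zero => simp [shiftedPartialSum]
  | succ l ih =>
    simp only [shiftedPartialSum, Finset.sum_Icc_succ_top (Nat.le_add_left 1 l)] at ih ⊢
    have h : ((l + 1 : ℕ) : ℤ) - (j + 1) = l - j := by push_cast; ring
    rw [h]
    linear_combination ih

theorem measurable_shiftedPartialSum {Ω : Type*} [MeasurableSpace Ω] {ξ : ℤ → Ω → ℝ}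
    (hmeas : ∀ i, Measurable (ξ i)) (j : ℤ) (l : ℕ) :
    Measurable (shiftedPartialSum ξ j l) :=
  Finset.measurable_sum _ fun _ _ => hmeas _

def IsStationarySeq {Ω : Type*} [MeasurableSpace Ω] (ξ : ℤ → Ω → ℝ) (μ : Measure Ω) : Prop :=
  ∀ k : ℤ, Measure.map (fun ω (i : ℤ) => ξ (i + k) ω) μ = Measure.map (fun ω (i : ℤ) => ξ i ω) μ

section Stationary
variable {Ω : Type*} [MeasurableSpace Ω] {μ : Measure Ω} {ξ : ℤ → Ω → ℝ} {q : ℝ≥0∞}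

theorem IsStationarySeq.eLpNorm_comp_shift (hstat : IsStationarySeq ξ μ)
    (hmeas : ∀ i, Measurable (ξ i))
    {F : (ℤ → ℝ) → ℝ} (hF : Measurable F) (k : ℤ) :
    eLpNorm (fun ω => F fun i => ξ (i + k) ω) q μ = eLpNorm (fun ω => F fun i => ξ i ω) q μ :=
  (ProbabilityTheory.IdentDistrib.comp ⟨(measurable_pi_lambda _ fun _ => hmeas _).aemeasurable,
    (measurable_pi_lambda _ fun _ => hmeas _).aemeasurable, hstat k⟩ hF).eLpNorm_eq q

theorem IsStationarySeq.eLpNorm_eq_eLpNorm_zero (hstat : IsStationarySeq ξ μ)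
    (hmeas : ∀ i, Measurable (ξ i)) (i : ℤ) : eLpNorm (ξ i) q μ = eLpNorm (ξ 0) q μ := by
  simpa using hstat.eLpNorm_comp_shift hmeas (measurable_pi_apply 0) i (q := q)

theorem IsStationarySeq.eLpNorm_maxAbs_shift (hstat : IsStationarySeq ξ μ)
    (hmeas : ∀ i, Measurable (ξ i)) (j : ℤ) (n : ℕ) :
    eLpNorm (maxAbs (fun l ω => ξ (l - j) ω) n) q μ =
      eLpNorm (maxAbs (fun l ω => ξ l ω) n) q μ :=
  hstat.eLpNorm_comp_shift hmeas
    (measurable_maxAbs (f := fun (l : ℕ) (x : ℤ → ℝ) => x l) fun _ => measurable_pi_apply _) (-j)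

theorem IsStationarySeq.eLpNorm_maxAbs_shiftedPartialSum (hstat : IsStationarySeq ξ μ)
    (hmeas : ∀ i, Measurable (ξ i)) (j : ℤ) (n : ℕ) :
    eLpNorm (maxAbs (shiftedPartialSum ξ j) n) q μ =
      eLpNorm (maxAbs (shiftedPartialSum ξ 0) n) q μ :=
  hstat.eLpNorm_comp_shift hmeas (measurable_maxAbs
    (f := fun (l : ℕ) (x : ℤ → ℝ) => ∑ k ∈ Finset.Icc 1 l, x k)
    (n := n) fun _ => Finset.measurable_sum _ fun _ _ => measurable_pi_apply _) (-j)

theorem IsStationarySeq.eLpNorm_maxAbs_shiftedPartialSum_sub_le_two_mul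
    (hstat : IsStationarySeq ξ μ) (hmeas : ∀ i, Measurable (ξ i)) (hq : 1 ≤ q) (j : ℤ) (n : ℕ) :
    eLpNorm (maxAbs (fun l ω => shiftedPartialSum ξ j l ω - shiftedPartialSum ξ 0 l ω) n) q μ ≤
      2 * eLpNorm (maxAbs (shiftedPartialSum ξ 0) n) q μ := by
  have hm (j : ℤ) : AEStronglyMeasurable (maxAbs (shiftedPartialSum ξ j) n) μ :=
    (measurable_maxAbs (measurable_shiftedPartialSum hmeas j)).aestronglyMeasurable
  calc _ ≤ eLpNorm (maxAbs (shiftedPartialSum ξ j) n + maxAbs (shiftedPartialSum ξ 0) n) q μ :=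
        eLpNorm_mono_real fun ω => (Real.norm_of_nonneg maxAbs_nonneg).trans_le maxAbs_sub_le
    _ ≤ _ := eLpNorm_add_le (hm j) (hm 0) hq
    _ = _ := by rw [hstat.eLpNorm_maxAbs_shiftedPartialSum hmeas, two_mul]

theorem IsStationarySeq.eLpNorm_maxAbs_shiftedPartialSum_add_sub_le_mul
    (hstat : IsStationarySeq ξ μ) (hmeas : ∀ i, Measurable (ξ i)) (hq : 1 ≤ q)
    (j : ℤ) (d n : ℕ) :
    eLpNorm (maxAbs (fun l ω => shiftedPartialSum ξ (j + d) l ω - shiftedPartialSum ξ j l ω) n)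
        q μ ≤ d * (eLpNorm (ξ 0) q μ + eLpNorm (maxAbs (fun l ω => ξ l ω) n) q μ) := by
  induction d with
  | zero =>
    have h0 : maxAbs (fun l ω => shiftedPartialSum ξ (j + (0 : ℕ)) l ω -
        shiftedPartialSum ξ j l ω) n = 0 :=
      funext fun ω => le_antisymm (maxAbs_le le_rfl fun _ _ => by simp) maxAbs_nonneg
    rw [h0, eLpNorm_zero]
    exact zero_le
  | succ d ih =>
    set i := j + d
    set D := maxAbs (fun l ω => shiftedPartialSum ξ i l ω - shiftedPartialSum ξ j l ω) n
    set U := maxAbs (fun l ω => ξ (l - i) ω) n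
    have hpt (ω : Ω) :
        maxAbs (fun l ω => shiftedPartialSum ξ (j + (d + 1 : ℕ)) l ω - shiftedPartialSum ξ j l ω)
          n ω ≤ D ω + (‖ξ (-i) ω‖ + U ω) := by
      refine maxAbs_le (add_nonneg maxAbs_nonneg (add_nonneg (norm_nonneg _) maxAbs_nonneg))
        fun l hl => ?_
      have hstep := shiftedPartialSum_succ_sub ξ i l ω
      rw [show j + ((d + 1 : ℕ) : ℤ) = i + 1 by push_cast; ring]
      calc _ = |(shiftedPartialSum ξ i l ω - shiftedPartialSum ξ j l ω) +
              (ξ (-i) ω - ξ (l - i) ω)| := by rw [← hstep]; ring_nf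
        _ ≤ |shiftedPartialSum ξ i l ω - shiftedPartialSum ξ j l ω| +
              (|ξ (-i) ω| + |ξ (l - i) ω|) := (abs_add_le _ _).trans (by gcongr; exact abs_sub _ _)
        _ ≤ _ := by
          gcongr
          · exact abs_le_maxAbs (f := fun l ω =>
              shiftedPartialSum ξ i l ω - shiftedPartialSum ξ j l ω) hl
          · exact le_rfl
          · exact abs_le_maxAbs (f := fun l ω => ξ (l - i) ω) hl
    have hD : AEStronglyMeasurable D μ :=
      (measurable_maxAbs fun l => (measurable_shiftedPartialSum hmeas i l).sub
        (measurable_shiftedPartialSum hmeas j l)).aestronglyMeasurable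
    have hξ : AEStronglyMeasurable (fun ω => ‖ξ (-i) ω‖) μ :=
      (hmeas (-i)).norm.aestronglyMeasurable
    have hU : AEStronglyMeasurable U μ := (measurable_maxAbs fun _ => hmeas _).aestronglyMeasurable
    calc _ ≤ eLpNorm (D + ((fun ω => ‖ξ (-i) ω‖) + U)) q μ :=
          eLpNorm_mono_real fun ω => (Real.norm_of_nonneg maxAbs_nonneg).trans_le (hpt ω)
      _ ≤ eLpNorm D q μ + (eLpNorm (fun ω => ‖ξ (-i) ω‖) q μ + eLpNorm U q μ) :=
          (eLpNorm_add_le hD (hξ.add hU) hq).trans (by gcongr; exact eLpNorm_add_le hξ hU hq)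
      _ ≤ d * (eLpNorm (ξ 0) q μ + eLpNorm (maxAbs (fun l ω => ξ l ω) n) q μ) +
            (eLpNorm (ξ 0) q μ + eLpNorm (maxAbs (fun l ω => ξ l ω) n) q μ) := by
          rw [eLpNorm_norm, hstat.eLpNorm_eq_eLpNorm_zero hmeas, hstat.eLpNorm_maxAbs_shift hmeas]
          gcongr
      _ = _ := by push_cast; ring

theorem IsStationarySeq.eLpNorm_maxAbs_shiftedPartialSum_sub_zero_le_natAbs_mul
    (hstat : IsStationarySeq ξ μ) (hmeas : ∀ i, Measurable (ξ i)) (hq : 1 ≤ q) (j : ℤ) (n : ℕ) :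
    eLpNorm (maxAbs (fun l ω => shiftedPartialSum ξ j l ω - shiftedPartialSum ξ 0 l ω) n) q μ ≤
      j.natAbs * (eLpNorm (ξ 0) q μ + eLpNorm (maxAbs (fun l ω => ξ l ω) n) q μ) := by
  rcases Int.natAbs_eq j with h | h
  · simpa [← h] using hstat.eLpNorm_maxAbs_shiftedPartialSum_add_sub_le_mul hmeas hq 0 j.natAbs n
  · have hswap : maxAbs (fun l ω => shiftedPartialSum ξ j l ω - shiftedPartialSum ξ 0 l ω) n =
        maxAbs (fun l ω => shiftedPartialSum ξ (j + j.natAbs) l ω - shiftedPartialSum ξ j l ω)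
          n := by
      rw [show j + j.natAbs = 0 by omega]
      funext ω
      unfold maxAbs
      simp_rw [abs_sub_comm (shiftedPartialSum ξ j _ ω)]
    rw [hswap]
    exact hstat.eLpNorm_maxAbs_shiftedPartialSum_add_sub_le_mul hmeas hq j j.natAbs n

end Stationary

theorem enorm_maxAbs_sub_mul_le_tsum {α : Type*} {ξ : ℤ → α → ℝ} {a : ℤ → ℝ} {A : ℝ}
    {X : ℤ → α → ℝ} {S : ℕ → α → ℝ} {ω : α}
    (hX : ∀ k : ℤ, HasSum (fun j => a j * ξ (k - j) ω) (X k ω))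
    (hS : ∀ l, S l ω = ∑ k ∈ Finset.Icc 1 l, X (k : ℤ) ω) (hA : HasSum a A) (n : ℕ) :
    ‖maxAbs (fun l ω => S l ω - A * shiftedPartialSum ξ 0 l ω) n ω‖ₑ ≤
      ∑' j, ‖a j * maxAbs (fun l ω => shiftedPartialSum ξ j l ω - shiftedPartialSum ξ 0 l ω)
        n ω‖ₑ := by
  refine enorm_maxAbs_le fun l hl => ?_
  have hsum : HasSum (fun j => a j * (shiftedPartialSum ξ j l ω - shiftedPartialSum ξ 0 l ω))
      (S l ω - A * shiftedPartialSum ξ 0 l ω) := by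
    have hSl : HasSum (fun j => a j * shiftedPartialSum ξ j l ω) (S l ω) := by
      rw [hS l]
      simpa only [shiftedPartialSum, Finset.mul_sum] using
        hasSum_sum (s := Finset.Icc 1 l) fun k _ => hX k
    simpa only [mul_sub] using hSl.sub (hA.mul_right (shiftedPartialSum ξ 0 l ω))
  rw [← hsum.tsum_eq]
  refine enorm_tsum_le_tsum_enorm.trans (ENNReal.tsum_le_tsum fun j => ?_)
  rw [enorm_mul, enorm_mul]
  gcongr
  rw [Real.enorm_eq_ofReal_abs, Real.enorm_eq_ofReal_abs]
  exact ENNReal.ofReal_le_ofReal <| (abs_le_maxAbs (f := fun l ω =>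
    shiftedPartialSum ξ j l ω - shiftedPartialSum ξ 0 l ω) hl).trans (le_abs_self _)

section LinearProcess
variable {Ω : Type*} [MeasurableSpace Ω] {μ : Measure Ω} {ξ : ℤ → Ω → ℝ} {a : ℤ → ℝ} {A : ℝ}
  {X : ℤ → Ω → ℝ} {S : ℕ → Ω → ℝ} {q : ℝ≥0∞}

theorem eLpNorm_maxAbs_sub_mul_le_tsum (hmeas : ∀ i, Measurable (ξ i))
    (hX : ∀ k : ℤ, ∀ᵐ ω ∂μ, HasSum (fun j => a j * ξ (k - j) ω) (X k ω))
    (hS : ∀ l ω, S l ω = ∑ k ∈ Finset.Icc 1 l, X (k : ℤ) ω) (hA : HasSum a A)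
    (hq1 : 1 ≤ q) (hq : q ≠ ∞) (n : ℕ) :
    eLpNorm (maxAbs (fun l ω => S l ω - A * shiftedPartialSum ξ 0 l ω) n) q μ ≤
      ∑' j, ‖a j‖ₑ * eLpNorm
        (maxAbs (fun l ω => shiftedPartialSum ξ j l ω - shiftedPartialSum ξ 0 l ω) n) q μ := by
  have hG (j : ℤ) : Measurable
      (maxAbs (fun l ω => shiftedPartialSum ξ j l ω - shiftedPartialSum ξ 0 l ω) n) :=
    measurable_maxAbs fun l => (measurable_shiftedPartialSum hmeas j l).sub
      (measurable_shiftedPartialSum hmeas 0 l)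
  calc _ ≤ eLpNorm (fun ω => ∑' j, ‖a j * maxAbs (fun l ω =>
        shiftedPartialSum ξ j l ω - shiftedPartialSum ξ 0 l ω) n ω‖ₑ) q μ := by
        refine eLpNorm_mono_enorm_ae ?_
        filter_upwards [ae_all_iff.2 hX] with ω hω
        exact enorm_maxAbs_sub_mul_le_tsum hω (fun l => hS l ω) hA n
    _ ≤ _ := eLpNorm_tsum_enorm_le (fun j => ((hG j).const_mul _).aestronglyMeasurable) hq1 hq
    _ = _ := tsum_congr fun j => eLpNorm_const_smul (a j) _ q μ

theorem IsStationarySeq.eLpNorm_maxAbs_linear_sub_le (hstat : IsStationarySeq ξ μ)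
    (hmeas : ∀ i, Measurable (ξ i))
    (hX : ∀ k : ℤ, ∀ᵐ ω ∂μ, HasSum (fun j => a j * ξ (k - j) ω) (X k ω))
    (hS : ∀ l ω, S l ω = ∑ k ∈ Finset.Icc 1 l, X (k : ℤ) ω) (hA : HasSum a A)
    (hq1 : 1 ≤ q) (hq : q ≠ ∞) (s : Finset ℤ) (n : ℕ) :
    eLpNorm (maxAbs (fun l ω => S l ω - A * shiftedPartialSum ξ 0 l ω) n) q μ ≤
      (∑' j, ‖a j‖ₑ) * ((s.sup Int.natAbs : ℕ) *
          (eLpNorm (ξ 0) q μ + eLpNorm (maxAbs (fun l ω => ξ l ω) n) q μ)) +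
        (∑' j : {j // j ∉ s}, ‖a j‖ₑ) * (2 * eLpNorm (maxAbs (shiftedPartialSum ξ 0) n) q μ) := by
  refine (eLpNorm_maxAbs_sub_mul_le_tsum hmeas hX hS hA hq1 hq n).trans
    (ENNReal.tsum_mul_le_of_le s (fun j hj => ?_) fun j =>
      hstat.eLpNorm_maxAbs_shiftedPartialSum_sub_le_two_mul hmeas hq1 j n)
  refine (hstat.eLpNorm_maxAbs_shiftedPartialSum_sub_zero_le_natAbs_mul hmeas hq1 j n).trans ?_
  gcongr
  exact Finset.le_sup (f := Int.natAbs) hj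

theorem IsStationarySeq.tendsto_eLpNorm_maxAbs_linear_sub_div (hstat : IsStationarySeq ξ μ)
    (hmeas : ∀ i, Measurable (ξ i))
    (hX : ∀ k : ℤ, ∀ᵐ ω ∂μ, HasSum (fun j => a j * ξ (k - j) ω) (X k ω))
    (hS : ∀ l ω, S l ω = ∑ k ∈ Finset.Icc 1 l, X (k : ℤ) ω) (hA : HasSum a A)
    (ha : ∑' j, ‖a j‖ₑ ≠ ∞) (hq1 : 1 ≤ q) (hq : q ≠ ∞) (hκ : eLpNorm (ξ 0) q μ ≠ ∞)
    {β : ℕ → ℝ≥0∞} (hβ0 : ∀ n, β n ≠ 0) (hβtop : ∀ n, β n ≠ ∞) (hβ : Tendsto β atTop (𝓝 ∞))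
    {c : ℝ≥0∞} (hc : c ≠ ∞)
    (hSξ : ∀ n, eLpNorm (maxAbs (shiftedPartialSum ξ 0) n) q μ ≤ c * β n)
    (hU : Tendsto (fun n => eLpNorm (maxAbs (fun l ω => ξ l ω) n) q μ / β n) atTop (𝓝 0)) :
    Tendsto (fun n => eLpNorm (maxAbs (fun l ω => S l ω - A * shiftedPartialSum ξ 0 l ω) n) q μ /
      β n) atTop (𝓝 0) := by
  set κ := eLpNorm (ξ 0) q μ
  set u := fun n => eLpNorm (maxAbs (fun l ω => ξ l ω) n) q μ
  refine ENNReal.tendsto_nhds_zero_of_le_add (L := (atTop : Filter (Finset ℤ)))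
    (y := fun s n => (∑' j, ‖a j‖ₑ) * ((s.sup Int.natAbs : ℕ) * (κ / β n + u n / β n)))
    (t := fun s => (∑' j : {j // j ∉ s}, ‖a j‖ₑ) * (2 * c)) ?_ (fun s => ?_) fun s n => ?_
  · simpa using ENNReal.Tendsto.mul_const (ENNReal.tendsto_tsum_compl_atTop_zero ha)
      (Or.inr (by finiteness))
  · have hκβ : Tendsto (fun n => κ / β n) atTop (𝓝 0) := by
      simpa [div_eq_mul_inv] using ENNReal.Tendsto.const_mul (tendsto_inv_iff.2 hβ) (Or.inr hκ)
    simpa using ENNReal.Tendsto.const_mul (ENNReal.Tendsto.const_mul (hκβ.add hU)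
      (Or.inr (natCast_ne_top _))) (Or.inr ha)
  · refine ENNReal.div_le_of_le_mul ?_
    calc _ ≤ _ := hstat.eLpNorm_maxAbs_linear_sub_le hmeas hX hS hA hq1 hq s n
      _ ≤ (∑' j, ‖a j‖ₑ) * ((s.sup Int.natAbs : ℕ) * (κ + u n)) +
            (∑' j : {j // j ∉ s}, ‖a j‖ₑ) * (2 * (c * β n)) := by gcongr; exact hSξ n
      _ = (∑' j, ‖a j‖ₑ) * ((s.sup Int.natAbs : ℕ) * (κ / β n * β n + u n / β n * β n)) +
            (∑' j : {j // j ∉ s}, ‖a j‖ₑ) * (2 * (c * β n)) := by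
          rw [ENNReal.div_mul_cancel (hβ0 n) (hβtop n), ENNReal.div_mul_cancel (hβ0 n) (hβtop n)]
      _ = _ := by ring

end LinearProcess

theorem stmt8_general
    {Ω : Type*} [MeasurableSpace Ω] (μ : Measure Ω)
    (p : ℝ) (hp : 1 ≤ p)
    (ξ : ℤ → Ω → ℝ)
    (hmeas : ∀ i, Measurable (ξ i))
    (hmom : ∀ i, Integrable (fun ω => |ξ i ω| ^ p) μ)
    (hstat : ∀ k : ℤ,
      Measure.map (fun ω (i : ℤ) => ξ (i + k) ω) μ =
        Measure.map (fun ω (i : ℤ) => ξ i ω) μ)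
    (a : ℤ → ℝ) (ha : Summable fun j => |a j|)
    (X : ℤ → Ω → ℝ)
    (hX : ∀ k : ℤ, ∀ᵐ ω ∂μ, HasSum (fun j => a j * ξ (k - j) ω) (X k ω))
    (S Sξ : ℕ → Ω → ℝ)
    (hS : ∀ n ω, S n ω = ∑ k ∈ Finset.Icc 1 n, X (k : ℤ) ω)
    (hSξ : ∀ n ω, Sξ n ω = ∑ j ∈ Finset.Icc 1 n, ξ (j : ℤ) ω)
    (A : ℝ) (hA : HasSum a A)
    (C : ℝ)
    (b : ℕ → ℝ) (hbpos : ∀ n, 0 < b n) (hbtop : Tendsto b atTop atTop)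
    (hmax : ∀ n, (∫ ω, (⨆ j ∈ Finset.Icc 1 n, |Sξ j ω|) ^ p ∂μ) ≤ C * b n ^ p)
    (hξmax : Tendsto (fun n =>
        ∫ ω, ((b n)⁻¹ * ⨆ j ∈ Finset.Icc 1 n, |ξ (j : ℤ) ω|) ^ p ∂μ)
      atTop (𝓝 0)) :
    Tendsto (fun n =>
        b n ^ (-p) * ∫ ω, (⨆ j ∈ Finset.Icc 1 n, |S j ω - A * Sξ j ω|) ^ p ∂μ)
      atTop (𝓝 0) := by
  have hp0 : 0 < p := by linarith
  have hq1 : 1 ≤ ENNReal.ofReal p := by simpa using ENNReal.ofReal_le_ofReal hp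
  obtain rfl : Sξ = shiftedPartialSum ξ 0 := by
    funext n ω
    simp [hSξ, shiftedPartialSum]
  have hξp (i : ℤ) : MemLp (ξ i) (.ofReal p) μ :=
    (integrable_norm_rpow_iff (hmeas i).aestronglyMeasurable (by simpa using hp0)
      ofReal_ne_top).1 (by simpa [toReal_ofReal hp0.le] using hmom i)
  have hSξp (n : ℕ) : MemLp (maxAbs (shiftedPartialSum ξ 0) n) (.ofReal p) μ :=
    memLp_maxAbs (measurable_shiftedPartialSum hmeas 0) fun _ => memLp_finsetSum _ fun _ _ => hξp _
  have hUp (n : ℕ) : MemLp (maxAbs (fun l ω => ξ l ω) n) (.ofReal p) μ :=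
    memLp_maxAbs (fun l => hmeas l) fun l => hξp l
  refine tendsto_rpow_neg_mul_integral_rpow
    (V := fun n => maxAbs (fun l ω => S l ω - A * shiftedPartialSum ξ 0 l ω) n)
    (fun _ _ => maxAbs_nonneg) hp0 hbpos ?_
  exact IsStationarySeq.tendsto_eLpNorm_maxAbs_linear_sub_div hstat hmeas hX hS hA
    (tsum_enorm_ne_top_iff_summable_norm.2 ha) hq1 ofReal_ne_top (hξp 0).eLpNorm_ne_top
    (fun n => by simpa using hbpos n) (fun _ => ofReal_ne_top)
    (ENNReal.tendsto_ofReal_atTop.comp hbtop) (by finiteness)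
    (fun n => eLpNorm_le_of_integral_rpow_le (fun _ => maxAbs_nonneg) hp0 (hSξp n) (hbpos n).le
      (hmax n))
    (tendsto_eLpNorm_div_of_tendsto_integral_rpow (fun _ _ => maxAbs_nonneg) hp0 hUp hbpos hξmax)

/-- **Proposition 4 (Lᵖ part)** of Peligrad–Utev, "Invariance principle for stochastic
processes with short memory". For a stationary sequence of innovations `(ξ_i)_{i∈ℤ}` with
`E|ξ_0|^p < ∞` (`p ≥ 1`), summable coefficients `(a_j)`, linear process
`X_k = ∑_j a_j ξ_{k-j}` with partial sums `S_n`, innovation partial sums `S_n^ξ`, and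
`A = ∑ a_j`: if `E(max_{1≤j≤n} |S_j^ξ|^p) ≤ C b_n^p` with `b_n → ∞` and
`E((b_n⁻¹ max_{1≤j≤n} |ξ_j|)^p) → 0`, then
`b_n^{-p} E(max_{1≤j≤n} |S_j − A S_j^ξ|^p) → 0`. -/
theorem stmt8
    {Ω : Type*} [MeasurableSpace Ω] (μ : Measure Ω) [IsProbabilityMeasure μ]
    (p : ℝ) (hp : 1 ≤ p)
    (ξ : ℤ → Ω → ℝ)
    (hmeas : ∀ i, Measurable (ξ i))
    (hmom : ∀ i, Integrable (fun ω => |ξ i ω| ^ p) μ)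
    (hstat : ∀ k : ℤ,
      Measure.map (fun ω (i : ℤ) => ξ (i + k) ω) μ =
        Measure.map (fun ω (i : ℤ) => ξ i ω) μ)
    (a : ℤ → ℝ) (ha : Summable fun j => |a j|)
    (X : ℤ → Ω → ℝ)
    (hX : ∀ k : ℤ, ∀ᵐ ω ∂μ, HasSum (fun j => a j * ξ (k - j) ω) (X k ω))
    (S Sξ : ℕ → Ω → ℝ)
    (hS : ∀ n ω, S n ω = ∑ k ∈ Finset.Icc 1 n, X (k : ℤ) ω)
    (hSξ : ∀ n ω, Sξ n ω = ∑ j ∈ Finset.Icc 1 n, ξ (j : ℤ) ω)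
    (A : ℝ) (hA : HasSum a A)
    (C : ℝ) (hC : 0 < C)
    (b : ℕ → ℝ) (hbpos : ∀ n, 0 < b n) (hbtop : Tendsto b atTop atTop)
    (hmax : ∀ n, (∫ ω, (⨆ j ∈ Finset.Icc 1 n, |Sξ j ω|) ^ p ∂μ) ≤ C * b n ^ p)
    (hξmax : Tendsto (fun n =>
        ∫ ω, ((b n)⁻¹ * ⨆ j ∈ Finset.Icc 1 n, |ξ (j : ℤ) ω|) ^ p ∂μ)
      atTop (𝓝 0)) :
    Tendsto (fun n =>
        b n ^ (-p) * ∫ ω, (⨆ j ∈ Finset.Icc 1 n, |S j ω - A * Sξ j ω|) ^ p ∂μ)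
      atTop (𝓝 0) :=
  stmt8_general μ p hp ξ hmeas hmom hstat a ha X hX S Sξ hS hSξ A hA C b hbpos hbtop hmax hξmax
end

section
/- Let (ξ_i)_{i∈ℤ} be a stationary sequence of integrable real random variables, (a_j)_{j∈ℤ} real numbers with ∑_{j∈ℤ}|a_j| < ∞, X_k = ∑_{j∈ℤ} a_j ξ_{k−j}, S_n = ∑_{k=1}^n X_k, S_n^{(ξ)} = ∑_{j=1}^n ξ_j, and A = ∑_{j∈ℤ} a_j. Assume there is a constant C > 0 and positive reals b_n → ∞ with E(max_{1≤j≤n} |S_j^{(ξ)}|) ≤ C b_n for all n. Let G = (G(t))_{t∈[0,1]} be a stochastic process on the same probability space with almost surely continuous sample paths and G(0) = 0 a.s. (for instance G(t) = η W(t) with W a standard Brownian motion and η a real random variable). If sup_{0≤t≤1} |b_n^{−1} S_{[nt]}^{(ξ)} − G(t)| → 0 in probability as n → ∞, then sup_{0≤t≤1} |b_n^{−1} S_{[nt]} − A·G(t)| → 0 in probability as n → ∞. -/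
open MeasureTheory Filter Topology ENNReal

section aux

lemma fold_max_nonneg (s : Finset ℕ) (f : ℕ → ℝ) : 0 ≤ s.fold max 0 f :=
  ((Finset.fold_max_le (s.fold max 0 f)).mp le_rfl).1

lemma le_fold_max (s : Finset ℕ) (f : ℕ → ℝ) {k : ℕ} (hk : k ∈ s) :
    f k ≤ s.fold max 0 f :=
  ((Finset.fold_max_le (s.fold max 0 f)).mp le_rfl).2 k hk

lemma fold_max_le_of (s : Finset ℕ) (f : ℕ → ℝ) {c : ℝ} (h0 : 0 ≤ c)
    (h : ∀ k ∈ s, f k ≤ c) : s.fold max 0 f ≤ c :=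
  (Finset.fold_max_le c).mpr ⟨h0, h⟩

lemma real_biSup_eq_fold (s : Finset ℕ) (f : ℕ → ℝ) :
    (⨆ j ∈ s, f j) = s.fold max 0 f := by
  have hbdd : BddAbove (Set.range fun j => ⨆ _ : j ∈ s, f j) := by
    refine ⟨max (s.fold max 0 f) 0, ?_⟩
    rintro x ⟨j, rfl⟩
    show (⨆ _ : j ∈ s, f j) ≤ _
    by_cases hj : j ∈ s
    · haveI : Nonempty (j ∈ s) := ⟨hj⟩
      rw [ciSup_const]
      exact le_max_of_le_left (le_fold_max s f hj)
    · haveI : IsEmpty (j ∈ s) := isEmpty_Prop.mpr hj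
      rw [Real.iSup_of_isEmpty]
      exact le_max_right _ _
  apply le_antisymm
  · apply Real.iSup_le _ (fold_max_nonneg s f)
    intro j
    by_cases hj : j ∈ s
    · haveI : Nonempty (j ∈ s) := ⟨hj⟩
      rw [ciSup_const]
      exact le_fold_max s f hj
    · haveI : IsEmpty (j ∈ s) := isEmpty_Prop.mpr hj
      rw [Real.iSup_of_isEmpty]
      exact fold_max_nonneg s f
  · obtain ⟨j0, hj0⟩ : ∃ j0, j0 ∉ s := s.exists_notMem
    apply fold_max_le_of
    · refine le_trans ?_ (le_ciSup hbdd j0)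
      haveI : IsEmpty (j0 ∈ s) := isEmpty_Prop.mpr hj0
      rw [Real.iSup_of_isEmpty]
    · intro k hk
      refine le_trans ?_ (le_ciSup hbdd k)
      haveI : Nonempty (k ∈ s) := ⟨hk⟩
      rw [ciSup_const]

lemma measurable_fold_max {α : Type*} [MeasurableSpace α] (s : Finset ℕ) (f : ℕ → α → ℝ)
    (hf : ∀ k, Measurable (f k)) : Measurable fun x => s.fold max 0 (fun k => f k x) := by
  classical
  induction s using Finset.induction_on with
  | empty => simpa using measurable_const
  | insert _ _ hns ih =>
      simp only [Finset.fold_insert hns]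
      exact (hf _).max ih

lemma fold_max_le_sum (s : Finset ℕ) (f : ℕ → ℝ) (hf : ∀ k ∈ s, 0 ≤ f k) :
    s.fold max 0 f ≤ ∑ k ∈ s, f k :=
  fold_max_le_of s f (Finset.sum_nonneg hf) (fun k hk => Finset.single_le_sum hf hk)

lemma sum_Ioc_int_consecutive (f : ℤ → ℝ) {a b c : ℤ} (h1 : a ≤ b) (h2 : b ≤ c) :
    ∑ i ∈ Finset.Ioc a b, f i + ∑ i ∈ Finset.Ioc b c, f i = ∑ i ∈ Finset.Ioc a c, f i := by
  rw [← Finset.sum_union (by simp only [Finset.disjoint_left, Finset.mem_Ioc]; omega)]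
  congr 1; ext x; simp only [Finset.mem_union, Finset.mem_Ioc]; omega

lemma sum_Icc_nat_eq_Ioc_int (f : ℤ → ℝ) (k : ℕ) :
    ∑ i ∈ Finset.Icc 1 k, f (i : ℤ) = ∑ i ∈ Finset.Ioc (0 : ℤ) (k : ℤ), f i := by
  induction k with
  | zero => simp
  | succ k ih =>
      rw [Finset.sum_Icc_succ_top (by omega), ih]
      have h : Finset.Ioc (0 : ℤ) ((k : ℤ) + 1) = insert ((k : ℤ) + 1) (Finset.Ioc 0 (k : ℤ)) := by
        ext x; simp only [Finset.mem_Ioc, Finset.mem_insert]; omega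
      push_cast [h]
      rw [Finset.sum_insert (by simp)]
      ring

lemma tendsto_measure_of_eventually_not {Ω : Type*} [MeasurableSpace Ω] (μ : Measure Ω)
    [IsProbabilityMeasure μ] (E : ℕ → Set Ω) (hE : ∀ n, MeasurableSet (E n))
    (h : ∀ ω, ∀ᶠ n in atTop, ω ∉ E n) :
    Tendsto (fun n => μ (E n)) atTop (𝓝 0) := by
  set A : ℕ → Set Ω := fun n => ⋃ k : ℕ, E (n + k) with hA
  have hAm : ∀ n, MeasurableSet (A n) := fun n => MeasurableSet.iUnion (fun k => hE _)
  have hAanti : Antitone A := by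
    intro i j hij ω hω
    simp only [hA, Set.mem_iUnion] at hω ⊢
    obtain ⟨k, hk⟩ := hω
    exact ⟨j - i + k, by rwa [show i + (j - i + k) = j + k by omega]⟩
  have hInter : (⋂ n, A n) = ∅ := by
    ext ω
    simp only [Set.mem_iInter, Set.mem_empty_iff_false, iff_false, not_forall]
    obtain ⟨N, hN⟩ := (eventually_atTop).mp (h ω)
    refine ⟨N, ?_⟩
    simp only [hA, Set.mem_iUnion, not_exists]
    exact fun k => hN (N + k) (by omega)
  have hlim := tendsto_measure_iInter_atTop (μ := μ) (fun n => (hAm n).nullMeasurableSet)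
    hAanti ⟨0, measure_ne_top μ _⟩
  rw [hInter] at hlim
  simp only [measure_empty] at hlim
  refine tendsto_of_tendsto_of_tendsto_of_le_of_le tendsto_const_nhds hlim
    (fun n => by simp) (fun n => measure_mono ?_)
  intro ω hω
  exact Set.mem_iUnion.mpr ⟨0, by simpa using hω⟩

lemma tendsto_const_div_ofReal_zero (c : ℝ≥0∞) (hc : c ≠ ⊤) (u : ℕ → ℝ)
    (hu : Tendsto u atTop atTop) :
    Tendsto (fun n => c / ENNReal.ofReal (u n)) atTop (𝓝 0) := by
  have h1 : Tendsto (fun n => ENNReal.ofReal (u n)) atTop (𝓝 ⊤) := by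
    rw [ENNReal.tendsto_nhds_top_iff_nnreal]
    intro x
    filter_upwards [hu.eventually_gt_atTop ((x : ℝ) + 1)] with n hn
    calc (x : ℝ≥0∞) < ENNReal.ofReal ((x : ℝ) + 1) := by
          rw [← ENNReal.ofReal_coe_nnreal]
          exact ENNReal.ofReal_lt_ofReal_iff_of_nonneg x.coe_nonneg |>.mpr (by linarith)
      _ ≤ ENNReal.ofReal (u n) := ENNReal.ofReal_le_ofReal hn.le
  have h2 : Tendsto (fun n => (ENNReal.ofReal (u n))⁻¹) atTop (𝓝 0) := by
    simpa [ENNReal.inv_top] using (ENNReal.tendsto_inv_iff.mpr h1)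
  have := ENNReal.Tendsto.const_mul h2 (Or.inr hc)
  simpa [mul_zero, div_eq_mul_inv] using this

variable {Ω : Type*} [MeasurableSpace Ω]

/-- Signed partial sums of `ξ` from the origin. -/
noncomputable def Szf (ξ : ℤ → Ω → ℝ) (m : ℤ) (ω : Ω) : ℝ :=
  (∑ i ∈ Finset.Ioc 0 m, ξ i ω) - ∑ i ∈ Finset.Ioc m 0, ξ i ω

lemma Szf_zero (ξ : ℤ → Ω → ℝ) (ω : Ω) : Szf ξ 0 ω = 0 := by simp [Szf]

lemma Szf_meas {ξ : ℤ → Ω → ℝ} (hmeas : ∀ i, Measurable (ξ i)) (m : ℤ) :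
    Measurable (Szf ξ m) :=
  (Finset.measurable_sum _ (fun i _ => hmeas i)).sub
    (Finset.measurable_sum _ (fun i _ => hmeas i))

lemma Szf_diff (ξ : ℤ → Ω → ℝ) {a' b' : ℤ} (h : a' ≤ b') (ω : Ω) :
    Szf ξ b' ω - Szf ξ a' ω = ∑ i ∈ Finset.Ioc a' b', ξ i ω := by
  rcases le_or_gt 0 a' with ha | ha
  · have h1 : Finset.Ioc b' (0:ℤ) = ∅ := Finset.Ioc_eq_empty (by omega)
    have h2 : Finset.Ioc a' (0:ℤ) = ∅ := Finset.Ioc_eq_empty (by omega)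
    have := sum_Ioc_int_consecutive (fun i => ξ i ω) ha h
    simp only [Szf, h1, h2, Finset.sum_empty, sub_zero]
    linarith
  · rcases le_or_gt 0 b' with hb | hb
    · have h1 : Finset.Ioc b' (0:ℤ) = ∅ := Finset.Ioc_eq_empty (by omega)
      have h2 : Finset.Ioc (0:ℤ) a' = ∅ := Finset.Ioc_eq_empty (by omega)
      have := sum_Ioc_int_consecutive (fun i => ξ i ω) ha.le hb
      simp only [Szf, h1, h2, Finset.sum_empty, sub_zero, zero_sub]
      linarith
    · have h1 : Finset.Ioc (0:ℤ) b' = ∅ := Finset.Ioc_eq_empty (by omega)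
      have h2 : Finset.Ioc (0:ℤ) a' = ∅ := Finset.Ioc_eq_empty (by omega)
      have := sum_Ioc_int_consecutive (fun i => ξ i ω) h hb.le
      simp only [Szf, h1, h2, Finset.sum_empty, zero_sub]
      linarith

lemma Szf_abs_le (ξ : ℤ → Ω → ℝ) {m nA : ℤ} (h1 : -nA ≤ m) (h2 : m ≤ nA) (ω : Ω) :
    |Szf ξ m ω| ≤ ∑ i ∈ Finset.Ioc (-nA) nA, |ξ i ω| := by
  rcases le_or_gt 0 m with hm | hm
  · have h0 : Finset.Ioc m (0:ℤ) = ∅ := Finset.Ioc_eq_empty (by omega)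
    simp only [Szf, h0, Finset.sum_empty, sub_zero]
    calc |∑ i ∈ Finset.Ioc (0:ℤ) m, ξ i ω| ≤ ∑ i ∈ Finset.Ioc (0:ℤ) m, |ξ i ω| :=
          Finset.abs_sum_le_sum_abs _ _
      _ ≤ ∑ i ∈ Finset.Ioc (-nA) nA, |ξ i ω| := by
          apply Finset.sum_le_sum_of_subset_of_nonneg
          · intro x hx
            simp only [Finset.mem_Ioc] at *
            omega
          · intro i _ _; exact abs_nonneg _
  · have h0 : Finset.Ioc (0:ℤ) m = ∅ := Finset.Ioc_eq_empty (by omega)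
    simp only [Szf, h0, Finset.sum_empty, zero_sub, abs_neg]
    calc |∑ i ∈ Finset.Ioc m (0:ℤ), ξ i ω| ≤ ∑ i ∈ Finset.Ioc m (0:ℤ), |ξ i ω| :=
          Finset.abs_sum_le_sum_abs _ _
      _ ≤ ∑ i ∈ Finset.Ioc (-nA) nA, |ξ i ω| := by
          apply Finset.sum_le_sum_of_subset_of_nonneg
          · intro x hx
            simp only [Finset.mem_Ioc] at *
            omega
          · intro i _ _; exact abs_nonneg _

/-- Shifted partial sums `∑_{i=1}^k ξ_{i-j}`. -/
noncomputable def Ttf (ξ : ℤ → Ω → ℝ) (k : ℕ) (j : ℤ) (ω : Ω) : ℝ :=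
  Szf ξ ((k : ℤ) - j) ω - Szf ξ (-j) ω

lemma Ttf_eq_sum (ξ : ℤ → Ω → ℝ) (k : ℕ) (j : ℤ) (ω : Ω) :
    Ttf ξ k j ω = ∑ i ∈ Finset.Ioc (0 : ℤ) (k : ℤ), ξ (i + (-j)) ω := by
  have h := Szf_diff ξ (show -j ≤ (k:ℤ) - j by omega) ω
  rw [Ttf, h, show Finset.Ioc (-j) ((k:ℤ) - j) = Finset.Ioc (0 + -j) ((k:ℤ) + -j) by ring_nf,
    ← Finset.map_add_right_Ioc 0 (k:ℤ) (-j), Finset.sum_map]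
  simp [addRightEmbedding]

lemma Ttf_meas {ξ : ℤ → Ω → ℝ} (hmeas : ∀ i, Measurable (ξ i)) (k : ℕ) (j : ℤ) :
    Measurable (fun ω => Ttf ξ k j ω) :=
  (Szf_meas hmeas _).sub (Szf_meas hmeas _)

/-- Running max of `|Ttf|` over `k ∈ [1, n]`. -/
noncomputable def Mrf (ξ : ℤ → Ω → ℝ) (n : ℕ) (j : ℤ) (ω : Ω) : ℝ :=
  (Finset.Icc 1 n).fold max 0 (fun k => |Ttf ξ k j ω|)

lemma Mrf_nonneg (ξ : ℤ → Ω → ℝ) (n : ℕ) (j : ℤ) (ω : Ω) : 0 ≤ Mrf ξ n j ω :=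
  fold_max_nonneg _ _

lemma Mrf_meas {ξ : ℤ → Ω → ℝ} (hmeas : ∀ i, Measurable (ξ i)) (n : ℕ) (j : ℤ) :
    Measurable (fun ω => Mrf ξ n j ω) :=
  measurable_fold_max _ _ (fun k => (Ttf_meas hmeas k j).abs)

lemma abs_Ttf_le_Mrf (ξ : ℤ → Ω → ℝ) {n k : ℕ} (hk : k ≤ n) (j : ℤ) (ω : Ω) :
    |Ttf ξ k j ω| ≤ Mrf ξ n j ω := by
  rcases Nat.eq_zero_or_pos k with h0 | hpos
  · subst h0
    have : Ttf ξ 0 j ω = 0 := by simp [Ttf]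
    rw [this, abs_zero]
    exact Mrf_nonneg ξ n j ω
  · exact le_fold_max _ (fun k => |Ttf ξ k j ω|) (Finset.mem_Icc.mpr ⟨hpos, hk⟩)

end aux


set_option maxHeartbeats 2000000 in
/-- **Theorem 5 (transfer of the invariance principle)** of Peligrad–Utev, "Invariance
principle for stochastic processes with short memory", stated for a general a.s.
continuous limit process `G` with `G(0) = 0` (e.g. `G(t) = η W(t)`). If the innovation
partial-sum processes `b_n⁻¹ S^ξ_{[nt]}` converge uniformly in probability to `G`, then the
linear-process partial sums `b_n⁻¹ S_{[nt]}` converge uniformly in probability to `A·G`. -/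
theorem stmt9
    {Ω : Type*} [MeasurableSpace Ω] (μ : Measure Ω) [IsProbabilityMeasure μ]
    (ξ : ℤ → Ω → ℝ)
    (hmeas : ∀ i, Measurable (ξ i))
    (hint : ∀ i, Integrable (ξ i) μ)
    (hstat : ∀ k : ℤ,
      Measure.map (fun ω (i : ℤ) => ξ (i + k) ω) μ =
        Measure.map (fun ω (i : ℤ) => ξ i ω) μ)
    (a : ℤ → ℝ) (ha : Summable fun j => |a j|)
    (X : ℤ → Ω → ℝ)
    (hX : ∀ k : ℤ, ∀ᵐ ω ∂μ, HasSum (fun j => a j * ξ (k - j) ω) (X k ω))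
    (S Sξ : ℕ → Ω → ℝ)
    (hS : ∀ n ω, S n ω = ∑ k ∈ Finset.Icc 1 n, X (k : ℤ) ω)
    (hSξ : ∀ n ω, Sξ n ω = ∑ j ∈ Finset.Icc 1 n, ξ (j : ℤ) ω)
    (A : ℝ) (hA : HasSum a A)
    (C : ℝ) (hC : 0 < C)
    (b : ℕ → ℝ) (hbpos : ∀ n, 0 < b n) (hbtop : Tendsto b atTop atTop)
    (hmax : ∀ n, (∫ ω, (⨆ j ∈ Finset.Icc 1 n, |Sξ j ω|) ∂μ) ≤ C * b n)
    (G : ℝ → Ω → ℝ)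
    (hGcont : ∀ᵐ ω ∂μ, ContinuousOn (fun t => G t ω) (Set.Icc 0 1))
    (hG0 : ∀ᵐ ω ∂μ, G 0 ω = 0)
    (hconv : ∀ ε : ℝ, 0 < ε →
      Tendsto (fun n => μ {ω : Ω | ε <
          ⨆ t ∈ Set.Icc (0 : ℝ) 1, |(b n)⁻¹ * Sξ ⌊(n : ℝ) * t⌋₊ ω - G t ω|})
        atTop (𝓝 0)) :
    ∀ ε : ℝ, 0 < ε →
      Tendsto (fun n => μ {ω : Ω | ε <
          ⨆ t ∈ Set.Icc (0 : ℝ) 1, |(b n)⁻¹ * S ⌊(n : ℝ) * t⌋₊ ω - A * G t ω|})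
        atTop (𝓝 0) := by
  classical
  have hpath : Measurable (fun ω (i : ℤ) => ξ i ω) := measurable_pi_lambda _ (fun i => hmeas i)
  have statLint : ∀ Φ : (ℤ → ℝ) → ℝ≥0∞, Measurable Φ → ∀ j : ℤ,
      (∫⁻ ω, Φ (fun i => ξ (i + j) ω) ∂μ) = ∫⁻ ω, Φ (fun i => ξ i ω) ∂μ := by
    intro Φ hΦ j
    have hshift : Measurable (fun ω (i : ℤ) => ξ (i + j) ω) :=
      measurable_pi_lambda _ (fun i => hmeas (i + j))
    rw [← lintegral_map hΦ hshift, hstat j, lintegral_map hΦ hpath]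
  have hSξmeas : ∀ k, Measurable (Sξ k) := by
    intro k
    have h : Sξ k = fun ω => ∑ j ∈ Finset.Icc 1 k, ξ (j : ℤ) ω := funext (hSξ k)
    rw [h]; exact Finset.measurable_sum _ (fun i _ => hmeas _)
  have hSξint : ∀ k, Integrable (Sξ k) μ := by
    intro k
    have h : Sξ k = fun ω => ∑ j ∈ Finset.Icc 1 k, ξ (j : ℤ) ω := funext (hSξ k)
    rw [h]; exact integrable_finset_sum _ (fun i _ => hint _)
  have hSξ_eq : ∀ (k : ℕ) (ω : Ω), Sξ k ω = Szf ξ (k : ℤ) ω := by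
    intro k ω
    rw [hSξ]
    simp only [Szf]
    rw [show Finset.Ioc (k:ℤ) 0 = ∅ from Finset.Ioc_eq_empty (by omega)]
    simp [sum_Icc_nat_eq_Ioc_int (fun i => ξ i ω) k]
  have hTtf_Sξ : ∀ (k : ℕ) (ω : Ω), Ttf ξ k 0 ω = Sξ k ω := by
    intro k ω
    rw [hSξ_eq]
    simp [Ttf, Szf_zero]
  have hMr_eq : ∀ (n : ℕ) (j : ℤ),
      (∫⁻ ω, ENNReal.ofReal (Mrf ξ n j ω) ∂μ) = ∫⁻ ω, ENNReal.ofReal (Mrf ξ n 0 ω) ∂μ := by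
    intro n j
    set Φ : (ℤ → ℝ) → ℝ≥0∞ := fun x =>
      ENNReal.ofReal ((Finset.Icc 1 n).fold max 0
        (fun k : ℕ => |∑ i ∈ Finset.Ioc (0:ℤ) (k:ℤ), x i|)) with hΦdef
    have hΦm : Measurable Φ :=
      ENNReal.measurable_ofReal.comp (measurable_fold_max _ _ (fun k =>
        (Finset.measurable_sum _ (fun i _ => measurable_pi_apply i)).abs))
    have h1 : ∀ ω, Φ (fun i => ξ (i + (-j)) ω) = ENNReal.ofReal (Mrf ξ n j ω) := by
      intro ω
      simp only [hΦdef, Mrf]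
      congr 1
      apply Finset.fold_congr
      intro k _
      rw [Ttf_eq_sum]
    have h0 : ∀ ω, Φ (fun i => ξ i ω) = ENNReal.ofReal (Mrf ξ n 0 ω) := by
      intro ω
      simp only [hΦdef, Mrf]
      congr 1
      apply Finset.fold_congr
      intro k _
      rw [Ttf_eq_sum]
      simp
    calc (∫⁻ ω, ENNReal.ofReal (Mrf ξ n j ω) ∂μ)
        = ∫⁻ ω, Φ (fun i => ξ (i + (-j)) ω) ∂μ := by simp_rw [h1]
      _ = ∫⁻ ω, Φ (fun i => ξ i ω) ∂μ := statLint Φ hΦm (-j)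
      _ = ∫⁻ ω, ENNReal.ofReal (Mrf ξ n 0 ω) ∂μ := by simp_rw [h0]
  have hMr0 : ∀ n : ℕ, (∫⁻ ω, ENNReal.ofReal (Mrf ξ n 0 ω) ∂μ) ≤ ENNReal.ofReal (C * b n) := by
    intro n
    have hfold2 : ∀ ω, Mrf ξ n 0 ω = (Finset.Icc 1 n).fold max 0 (fun k => |Sξ k ω|) := by
      intro ω
      simp only [Mrf]
      apply Finset.fold_congr
      intro k _
      rw [hTtf_Sξ]
    have hintg : Integrable (fun ω => Mrf ξ n 0 ω) μ := by
      apply Integrable.mono' (integrable_finset_sum (Finset.Icc 1 n) (fun k _ => (hSξint k).abs))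
        (Mrf_meas hmeas n 0).aestronglyMeasurable
      refine ae_of_all _ (fun ω => ?_)
      rw [Real.norm_eq_abs, abs_of_nonneg (Mrf_nonneg ξ n 0 ω), hfold2 ω]
      exact fold_max_le_sum _ _ (fun k _ => abs_nonneg _)
    rw [← ofReal_integral_eq_lintegral_ofReal hintg (ae_of_all _ (fun ω => Mrf_nonneg ξ n 0 ω))]
    apply ENNReal.ofReal_le_ofReal
    calc (∫ ω, Mrf ξ n 0 ω ∂μ) = ∫ ω, ⨆ j ∈ Finset.Icc 1 n, |Sξ j ω| ∂μ := by
          apply integral_congr_ae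
          refine ae_of_all _ (fun ω => ?_)
          show Mrf ξ n 0 ω = ⨆ j ∈ Finset.Icc 1 n, |Sξ j ω|
          rw [hfold2 ω, real_biSup_eq_fold]
      _ ≤ C * b n := hmax n
  have hxi_marg : ∀ i : ℤ, (∫⁻ ω, ENNReal.ofReal |ξ i ω| ∂μ) = ∫⁻ ω, ENNReal.ofReal |ξ 0 ω| ∂μ := by
    intro i
    have hΦm : Measurable (fun x : ℤ → ℝ => ENNReal.ofReal |x 0|) :=
      ENNReal.measurable_ofReal.comp (measurable_pi_apply 0).abs
    have h := statLint _ hΦm i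
    simpa using h
  have heℓfin : (∫⁻ ω, ENNReal.ofReal |ξ 0 ω| ∂μ) ≠ ⊤ := by
    rw [← ofReal_integral_eq_lintegral_ofReal (hint 0).abs (ae_of_all _ (fun ω => abs_nonneg _))]
    exact ENNReal.ofReal_ne_top
  -- subsequence for Borel–Cantelli
  have hsel : ∀ k : ℕ, ∃ n : ℕ, μ {ω : Ω | (1:ℝ)/(k+1) <
      ⨆ t ∈ Set.Icc (0:ℝ) 1, |(b n)⁻¹ * Sξ ⌊(n : ℝ) * t⌋₊ ω - G t ω|} ≤ 2⁻¹ ^ k := by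
    intro k
    have hpos : (0:ℝ) < 1/(k+1) := by positivity
    obtain ⟨N, hN⟩ := (ENNReal.tendsto_atTop_zero.mp (hconv (1/(k+1)) hpos)) (2⁻¹ ^ k)
      (ENNReal.pow_pos (ENNReal.inv_pos.mpr ENNReal.ofNat_ne_top) k)
    exact ⟨N, hN N le_rfl⟩
  choose nk hnk using hsel
  set Ev : ℕ → Set Ω := fun k => {ω : Ω | (1:ℝ)/(k+1) <
      ⨆ t ∈ Set.Icc (0:ℝ) 1, |(b (nk k))⁻¹ * Sξ ⌊((nk k) : ℝ) * t⌋₊ ω - G t ω|} with hEv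
  set NN : Set Ω :=
    (⋂ K : ℕ, ⋃ k : ℕ, toMeasurable μ (Ev (K + k))) ∪
      toMeasurable μ {ω | ¬ ContinuousOn (fun t => G t ω) (Set.Icc 0 1)} ∪
      toMeasurable μ {ω | ¬ ∀ k : ℤ, HasSum (fun j => a j * ξ (k - j) ω) (X k ω)} with hNNdef
  have hNNmeas : MeasurableSet NN := by
    apply MeasurableSet.union
    apply MeasurableSet.union
    · exact MeasurableSet.iInter (fun K => MeasurableSet.iUnion
        (fun k => measurableSet_toMeasurable μ _))
    · exact measurableSet_toMeasurable μ _
    · exact measurableSet_toMeasurable μ _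
  have hNN0 : μ NN = 0 := by
    rw [hNNdef]
    refine le_antisymm ?_ (by simp)
    refine le_trans (measure_union_le _ _) ?_
    refine le_trans (add_le_add (measure_union_le _ _) le_rfl) ?_
    have h3 : μ (toMeasurable μ {ω | ¬ ∀ k : ℤ, HasSum (fun j => a j * ξ (k - j) ω) (X k ω)}) = 0 := by
      rw [measure_toMeasurable]
      exact ae_iff.mp (ae_all_iff.mpr hX)
    have h2 : μ (toMeasurable μ {ω | ¬ ContinuousOn (fun t => G t ω) (Set.Icc 0 1)}) = 0 := by
      rw [measure_toMeasurable]
      exact ae_iff.mp hGcont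
    have h1 : μ (⋂ K : ℕ, ⋃ k : ℕ, toMeasurable μ (Ev (K + k))) = 0 := by
      refine le_antisymm ?_ (by simp)
      have hK : ∀ K : ℕ, μ (⋂ K : ℕ, ⋃ k : ℕ, toMeasurable μ (Ev (K + k))) ≤ 2⁻¹ ^ K * 2 := by
        intro K
        refine le_trans (measure_mono (Set.iInter_subset _ K)) ?_
        refine le_trans (measure_iUnion_le _) ?_
        calc (∑' k : ℕ, μ (toMeasurable μ (Ev (K + k))))
            = ∑' k : ℕ, μ (Ev (K + k)) := by simp_rw [measure_toMeasurable]
          _ ≤ ∑' k : ℕ, 2⁻¹ ^ (K + k) := ENNReal.tsum_le_tsum (fun k => hnk (K + k))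
          _ = 2⁻¹ ^ K * ∑' k : ℕ, 2⁻¹ ^ k := by
              simp_rw [pow_add]; rw [ENNReal.tsum_mul_left]
          _ = 2⁻¹ ^ K * 2 := by
              rw [ENNReal.tsum_geometric]
              norm_num
        -- note : may need adjustments
      have htend : Tendsto (fun K : ℕ => (2⁻¹ : ℝ≥0∞) ^ K * 2) atTop (𝓝 0) := by
        have h1 := ENNReal.tendsto_pow_atTop_nhds_zero_of_lt_one
          (by norm_num : (2⁻¹ : ℝ≥0∞) < 1)
        have := ENNReal.Tendsto.mul_const h1 (Or.inr (ENNReal.ofNat_ne_top (n := 2)))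
        simpa using this
      exact ge_of_tendsto' htend hK
    rw [h1, h2, h3]
    simp
  have hcontω : ∀ ω, ω ∉ NN → ContinuousOn (fun t => G t ω) (Set.Icc 0 1) := by
    intro ω hω
    by_contra hc
    exact hω (Or.inl (Or.inr (subset_toMeasurable μ _ hc)))
  have hXsum : ∀ ω, ω ∉ NN → ∀ k : ℤ, HasSum (fun j => a j * ξ (k - j) ω) (X k ω) := by
    intro ω hω
    by_contra hc
    exact hω (Or.inr (subset_toMeasurable μ _ hc))
  -- floor facts
  have hfloor_le : ∀ (n : ℕ) (t : ℝ), t ∈ Set.Icc (0:ℝ) 1 → ⌊(n : ℝ) * t⌋₊ ≤ n := by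
    intro n t ht
    calc ⌊(n : ℝ) * t⌋₊ ≤ ⌊(n : ℝ)⌋₊ := by
          apply Nat.floor_mono
          calc (n : ℝ) * t ≤ (n : ℝ) * 1 :=
                mul_le_mul_of_nonneg_left ht.2 (Nat.cast_nonneg n)
            _ = n := mul_one _
      _ = n := Nat.floor_natCast n
  have hdivmem : ∀ k n : ℕ, k ≤ n → ((k : ℝ) / (n : ℝ)) ∈ Set.Icc (0:ℝ) 1 := by
    intro k n hk
    rcases Nat.eq_zero_or_pos n with h0 | hpos
    · subst h0
      interval_cases k
      norm_num
    · constructor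
      · positivity
      · rw [div_le_one (by exact_mod_cast hpos)]
        exact_mod_cast hk
  have hfloor_eq : ∀ k n : ℕ, 1 ≤ n → ⌊(n : ℝ) * ((k : ℝ) / (n : ℝ))⌋₊ = k := by
    intro k n hn
    have hn0 : (n : ℝ) ≠ 0 := by positivity
    rw [mul_comm, div_mul_cancel₀ _ hn0, Nat.floor_natCast]
  -- pointwise extraction from the sup bound
  have hext : ∀ ω, ω ∉ NN → ∀ n : ℕ, ∀ ε₀ : ℝ,
      (⨆ t ∈ Set.Icc (0:ℝ) 1, |(b n)⁻¹ * Sξ ⌊(n : ℝ) * t⌋₊ ω - G t ω|) ≤ ε₀ →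
      ∀ t ∈ Set.Icc (0:ℝ) 1, |(b n)⁻¹ * Sξ ⌊(n : ℝ) * t⌋₊ ω - G t ω| ≤ ε₀ := by
    intro ω hω n ε₀ hsup t ht
    have hcont := hcontω ω hω
    obtain ⟨CB, hCB⟩ := isCompact_Icc.bddAbove_image hcont.abs
    simp only [upperBounds, Set.mem_image, Set.mem_setOf_eq] at hCB
    have hGb : ∀ s ∈ Set.Icc (0:ℝ) 1, |G s ω| ≤ CB := by
      intro s hs
      exact hCB ⟨s, hs, rfl⟩
    set SM := (Finset.Icc 1 n).fold max 0 (fun k => |Sξ k ω|) with hSM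
    have hSb : ∀ s ∈ Set.Icc (0:ℝ) 1, |Sξ ⌊(n : ℝ) * s⌋₊ ω| ≤ SM := by
      intro s hs
      rcases Nat.eq_zero_or_pos ⌊(n : ℝ) * s⌋₊ with h0 | hpos
      · rw [h0]
        have h1 : Sξ 0 ω = 0 := by rw [hSξ]; simp
        rw [h1, abs_zero]
        exact fold_max_nonneg _ _
      · exact le_fold_max _ (fun k => |Sξ k ω|)
          (Finset.mem_Icc.mpr ⟨hpos, hfloor_le n s hs⟩)
    have hbd : ∀ s : ℝ,
        (⨆ _ : s ∈ Set.Icc (0:ℝ) 1, |(b n)⁻¹ * Sξ ⌊(n : ℝ) * s⌋₊ ω - G s ω|) ≤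
          max ((b n)⁻¹ * SM + CB) 0 := by
      intro s
      by_cases hs : s ∈ Set.Icc (0:ℝ) 1
      · haveI : Nonempty (s ∈ Set.Icc (0:ℝ) 1) := ⟨hs⟩
        rw [ciSup_const]
        refine le_max_of_le_left ?_
        calc |(b n)⁻¹ * Sξ ⌊(n : ℝ) * s⌋₊ ω - G s ω|
            ≤ |(b n)⁻¹ * Sξ ⌊(n : ℝ) * s⌋₊ ω| + |G s ω| := abs_sub _ _
          _ ≤ (b n)⁻¹ * SM + CB := by
              apply add_le_add _ (hGb s hs)
              rw [abs_mul, abs_of_pos (inv_pos.mpr (hbpos n))]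
              exact mul_le_mul_of_nonneg_left (hSb s hs) (inv_pos.mpr (hbpos n)).le
      · haveI : IsEmpty (s ∈ Set.Icc (0:ℝ) 1) := isEmpty_Prop.mpr hs
        rw [Real.iSup_of_isEmpty]
        exact le_max_right _ _
    have hBdd : BddAbove (Set.range fun s : ℝ =>
        ⨆ _ : s ∈ Set.Icc (0:ℝ) 1, |(b n)⁻¹ * Sξ ⌊(n : ℝ) * s⌋₊ ω - G s ω|) := by
      refine ⟨max ((b n)⁻¹ * SM + CB) 0, ?_⟩
      rintro x ⟨s, rfl⟩
      exact hbd s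
    calc |(b n)⁻¹ * Sξ ⌊(n : ℝ) * t⌋₊ ω - G t ω|
        = ⨆ _ : t ∈ Set.Icc (0:ℝ) 1, |(b n)⁻¹ * Sξ ⌊(n : ℝ) * t⌋₊ ω - G t ω| := by
          haveI : Nonempty (t ∈ Set.Icc (0:ℝ) 1) := ⟨ht⟩
          rw [ciSup_const]
      _ ≤ ⨆ s ∈ Set.Icc (0:ℝ) 1, |(b n)⁻¹ * Sξ ⌊(n : ℝ) * s⌋₊ ω - G s ω| := le_ciSup hBdd t
      _ ≤ ε₀ := hsup
  -- the measurable modification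
  set G' : ℝ → Ω → ℝ := fun t ω => if ω ∈ NN then 0 else G t ω with hG'def
  have hG'eq : ∀ t ω, ω ∉ NN → G' t ω = G t ω := by
    intro t ω hω
    simp [hG'def, hω]
  have hG'meas : ∀ s ∈ Set.Icc (0:ℝ) 1, Measurable (G' s) := by
    intro s hs
    set f : ℕ → Ω → ℝ := fun k ω =>
      if ω ∈ NN then 0 else (b (nk k))⁻¹ * Sξ ⌊((nk k) : ℝ) * s⌋₊ ω with hfdef
    have hfm : ∀ k, Measurable (f k) :=
      fun k => Measurable.ite hNNmeas measurable_const ((hSξmeas _).const_mul _)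
    apply measurable_of_tendsto_metrizable hfm
    rw [tendsto_pi_nhds]
    intro ω
    by_cases hω : ω ∈ NN
    · simp only [hfdef, hG'def, if_pos hω]
      exact tendsto_const_nhds
    · simp only [hfdef, hG'def, if_neg hω]
      have hK0 : ∃ K : ℕ, ∀ k, ω ∉ toMeasurable μ (Ev (K + k)) := by
        have h1 : ω ∉ ⋂ K : ℕ, ⋃ k : ℕ, toMeasurable μ (Ev (K + k)) :=
          fun hc => hω (Or.inl (Or.inl hc))
        simp only [Set.mem_iInter, Set.mem_iUnion, not_forall, not_exists] at h1
        exact h1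
      obtain ⟨K, hK⟩ := hK0
      rw [tendsto_iff_dist_tendsto_zero]
      apply squeeze_zero' (Eventually.of_forall (fun k => dist_nonneg))
        (g := fun k : ℕ => (1:ℝ)/(k+1))
      · rw [eventually_atTop]
        refine ⟨K, fun k hk => ?_⟩
        have hnotin : ω ∉ Ev k := by
          have h2 := hK (k - K)
          rw [show K + (k - K) = k by omega] at h2
          exact fun hc => h2 (subset_toMeasurable μ _ hc)
        rw [hEv, Set.mem_setOf_eq, not_lt] at hnotin
        have := hext ω hω (nk k) (1/(k+1)) hnotin s hs
        rwa [Real.dist_eq]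
      · exact tendsto_one_div_add_atTop_nhds_zero_nat
  -- the (essential) sup of |G| over [0,1]
  set Γf : Ω → ℝ≥0∞ := fun ω =>
    ⨆ q : {q : ℚ // 0 ≤ q ∧ q ≤ 1}, (‖G' ((q : ℚ) : ℝ) ω‖₊ : ℝ≥0∞) with hΓdef
  have hΓmeas : Measurable Γf := by
    apply Measurable.iSup
    intro q
    have hq : ((q : ℚ) : ℝ) ∈ Set.Icc (0:ℝ) 1 := by
      constructor
      · exact_mod_cast q.2.1
      · exact_mod_cast q.2.2
    exact (hG'meas _ hq).nnnorm.coe_nnreal_ennreal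
  have hΓlt : ∀ ω, ω ∉ NN → Γf ω ≠ ⊤ := by
    intro ω hω
    obtain ⟨CB, hCB⟩ := isCompact_Icc.bddAbove_image (hcontω ω hω).abs
    simp only [upperBounds, Set.mem_image, Set.mem_setOf_eq] at hCB
    refine ne_top_of_le_ne_top (ENNReal.ofReal_ne_top (r := CB)) (iSup_le (fun q => ?_))
    have hq : ((q : ℚ) : ℝ) ∈ Set.Icc (0:ℝ) 1 := by
      constructor
      · exact_mod_cast q.2.1
      · exact_mod_cast q.2.2
    rw [hG'eq _ _ hω, ← enorm_eq_nnnorm, Real.enorm_eq_ofReal_abs]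
    exact ENNReal.ofReal_le_ofReal (hCB ⟨_, hq, rfl⟩)
  have hΓbound : ∀ ω, ω ∉ NN → ∀ t ∈ Set.Icc (0:ℝ) 1,
      ENNReal.ofReal |G t ω| ≤ Γf ω := by
    intro ω hω t ht
    apply ENNReal.le_of_forall_pos_le_add
    intro δ hδ _
    have hδR : (0:ℝ) < (δ:ℝ) := hδ
    have hcont := hcontω ω hω
    have hcwa : ContinuousWithinAt (fun s => G s ω) (Set.Icc 0 1) t := hcont t ht
    rw [Metric.continuousWithinAt_iff] at hcwa
    obtain ⟨r, hr, hball⟩ := hcwa (δ:ℝ) hδR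
    obtain ⟨q, hq01, hqt⟩ : ∃ q : ℚ, (0 ≤ q ∧ q ≤ 1) ∧ |((q:ℝ)) - t| < r := by
      rcases lt_or_eq_of_le ht.2 with h1 | h1
      · obtain ⟨q, hq1, hq2⟩ := exists_rat_btwn (lt_min h1 (lt_add_of_pos_right t hr))
        refine ⟨q, ⟨?_, ?_⟩, ?_⟩
        · exact_mod_cast (ht.1.trans hq1.le)
        · exact_mod_cast (hq2.trans_le (min_le_left _ _)).le
        · rw [abs_lt]
          have h3 := hq2.trans_le (min_le_right _ _)
          constructor <;> linarith
      · refine ⟨1, ⟨by norm_num, le_rfl⟩, ?_⟩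
        push_cast
        rw [h1]
        simpa using hr
    have hqmem : ((q:ℝ)) ∈ Set.Icc (0:ℝ) 1 :=
      ⟨by exact_mod_cast hq01.1, by exact_mod_cast hq01.2⟩
    have hclose : |G ((q:ℝ)) ω - G t ω| < (δ:ℝ) := by
      have h4 := hball hqmem (by rwa [Real.dist_eq])
      rwa [Real.dist_eq] at h4
    calc ENNReal.ofReal |G t ω| ≤ ENNReal.ofReal (|G ((q:ℝ)) ω| + (δ:ℝ)) := by
          apply ENNReal.ofReal_le_ofReal
          have h5 : |G t ω| - |G ((q:ℝ)) ω| ≤ |G ((q:ℝ)) ω - G t ω| := by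
            rw [abs_sub_comm]
            exact abs_sub_abs_le_abs_sub _ _
          linarith [hclose.le]
      _ ≤ ENNReal.ofReal |G ((q:ℝ)) ω| + ENNReal.ofReal (δ:ℝ) := ENNReal.ofReal_add_le
      _ ≤ Γf ω + ↑δ := by
          apply add_le_add
          · rw [← hG'eq _ _ hω, ← Real.enorm_eq_ofReal_abs, enorm_eq_nnnorm]
            exact le_iSup (fun q' : {q' : ℚ // 0 ≤ q' ∧ q' ≤ 1} =>
              (‖G' ((q' : ℚ) : ℝ) ω‖₊ : ℝ≥0∞)) (⟨q, hq01⟩ : {q' : ℚ // 0 ≤ q' ∧ q' ≤ 1})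
          · rw [ENNReal.ofReal_coe_nnreal]
  -- main argument
  intro ε hε
  rw [ENNReal.tendsto_atTop_zero]
  intro ε' hε'
  set Atot : ℝ := ∑' j, |a j| with hAtotdef
  have hAtot0 : 0 ≤ Atot := tsum_nonneg (fun j => abs_nonneg _)
  set ε₁ : ℝ := ε / (12 * (Atot + 1)) with hε₁def
  have hε₁ : 0 < ε₁ := div_pos hε (by nlinarith)
  have hε'4 : (0:ℝ≥0∞) < ε'/4 := ENNReal.div_pos hε'.ne' (by norm_num)
  -- choice of L
  have hLlim : Tendsto (fun L : ℕ => μ {ω | (L : ℝ≥0∞) < Γf ω}) atTop (𝓝 0) := by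
    have hsets : ∀ L : ℕ, MeasurableSet {ω | (L : ℝ≥0∞) < Γf ω} :=
      fun L => measurableSet_lt measurable_const hΓmeas
    have hanti : Antitone (fun L : ℕ => {ω | (L : ℝ≥0∞) < Γf ω}) := by
      intro L L' hLL ω hω
      simp only [Set.mem_setOf_eq] at *
      exact lt_of_le_of_lt (by exact_mod_cast Nat.cast_le.mpr hLL) hω
    have h0 : μ (⋂ L : ℕ, {ω | (L : ℝ≥0∞) < Γf ω}) = 0 := by
      apply measure_mono_null _ hNN0
      intro ω hω
      simp only [Set.mem_iInter, Set.mem_setOf_eq] at hω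
      by_contra hωN
      have hfin := hΓlt ω hωN
      obtain ⟨LL, hLL⟩ := ENNReal.exists_nat_gt hfin
      exact absurd (hω LL) (not_lt.mpr hLL.le)
    have h2 := tendsto_measure_iInter_atTop (μ := μ) (fun L => (hsets L).nullMeasurableSet) hanti
      ⟨0, measure_ne_top μ _⟩
    rwa [h0] at h2
  obtain ⟨L, hL⟩ : ∃ L : ℕ, μ {ω | (L : ℝ≥0∞) < Γf ω} ≤ ε'/4 := by
    obtain ⟨N, hN⟩ := (ENNReal.tendsto_atTop_zero.mp hLlim) (ε'/4) hε'4
    exact ⟨N, hN N le_rfl⟩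
  obtain ⟨c, hc0, hcle⟩ : ∃ c : ℝ, 0 < c ∧ ENNReal.ofReal c ≤ ε'/4 := by
    by_cases htop : ε'/4 = ⊤
    · exact ⟨1, one_pos, htop ▸ le_top⟩
    · refine ⟨(ε'/4).toReal, ENNReal.toReal_pos hε'4.ne' htop, ?_⟩
      rw [ENNReal.ofReal_toReal htop]
  set r : ℝ := min (ε/(4*((L:ℝ)+1))) (c * (ε/4) / C) with hrdef
  have hr : 0 < r := lt_min (by positivity) (by positivity)
  obtain ⟨Fm, hFm⟩ : ∃ s : Finset ℤ, (∑' j : {x : ℤ // x ∉ s}, |a (j:ℤ)|) < r := by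
    have htail := tendsto_tsum_compl_atTop_zero (fun j : ℤ => |a j|)
    exact ((tendsto_order.1 htail).2 r hr).exists
  set δm : ℝ := ∑' j : {x : ℤ // x ∉ Fm}, |a (j:ℤ)| with hδmdef
  have hδm0 : 0 ≤ δm := tsum_nonneg (fun j => abs_nonneg _)
  have hδm1 : δm ≤ ε/(4*((L:ℝ)+1)) := hFm.le.trans (min_le_left _ _)
  have hδm2 : δm ≤ c * (ε/4) / C := hFm.le.trans (min_le_right _ _)
  have hsummtail : Summable (fun j : {x : ℤ // x ∉ Fm} => |a (j:ℤ)|) := ha.subtype _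
  -- events
  set B2 : ℕ → Set Ω := fun n => {ω : Ω | ε₁ <
      ⨆ t ∈ Set.Icc (0:ℝ) 1, |(b n)⁻¹ * Sξ ⌊(n : ℝ) * t⌋₊ ω - G t ω|} with hB2def
  have hμB2 : Tendsto (fun n => μ (B2 n)) atTop (𝓝 0) := hconv ε₁ hε₁
  set QA : ℤ → Ω → ℝ := fun j ω =>
    3 * ∑ i ∈ Finset.Ioc (-(j.natAbs:ℤ)) (j.natAbs:ℤ), |ξ i ω| with hQAdef
  have hQAnonneg : ∀ j ω, 0 ≤ QA j ω := fun j ω =>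
    mul_nonneg (by norm_num) (Finset.sum_nonneg (fun i _ => abs_nonneg _))
  have hQAmeas : ∀ j, Measurable (QA j) :=
    fun j => (Finset.measurable_sum _ (fun i _ => (hmeas i).abs)).const_mul 3
  have hQAint : ∀ j, Integrable (QA j) μ :=
    fun j => (integrable_finset_sum _ (fun i _ => (hint i).abs)).const_mul 3
  set B3 : ℤ → ℕ → Set Ω := fun j n => {ω | ε₁ * b n < QA j ω} with hB3def
  have hbtend : Tendsto (fun n => ε₁ * b n) atTop atTop := hbtop.const_mul_atTop hε₁
  have hμB3 : ∀ j, Tendsto (fun n => μ (B3 j n)) atTop (𝓝 0) := by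
    intro j
    set cQ : ℝ≥0∞ := ∫⁻ ω, ENNReal.ofReal (QA j ω) ∂μ with hcQ
    have hcQfin : cQ ≠ ⊤ := by
      rw [hcQ, ← ofReal_integral_eq_lintegral_ofReal (hQAint j)
        (ae_of_all _ (fun ω => hQAnonneg j ω))]
      exact ENNReal.ofReal_ne_top
    have hbound : ∀ n, μ (B3 j n) ≤ cQ / ENNReal.ofReal (ε₁ * b n) := by
      intro n
      have hsub : B3 j n ⊆ {ω | ENNReal.ofReal (ε₁ * b n) ≤ ENNReal.ofReal (QA j ω)} :=
        fun ω hω => ENNReal.ofReal_le_ofReal (le_of_lt hω)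
      refine le_trans (measure_mono hsub) ?_
      exact meas_ge_le_lintegral_div ((hQAmeas j).ennreal_ofReal.aemeasurable)
        (ENNReal.ofReal_pos.mpr (mul_pos hε₁ (hbpos n))).ne' ENNReal.ofReal_ne_top
    exact tendsto_of_tendsto_of_tendsto_of_le_of_le tendsto_const_nhds
      (tendsto_const_div_ofReal_zero cQ hcQfin _ hbtend) (fun n => by simp) hbound
  set Zf : ℕ → ℕ → Ω → ℝ := fun n q ω =>
    ∑ i ∈ Finset.Ioc ((n:ℤ) - q) ((n:ℤ) + q), |ξ i ω| with hZfdef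
  have hZnonneg : ∀ n q ω, 0 ≤ Zf n q ω :=
    fun n q ω => Finset.sum_nonneg (fun i _ => abs_nonneg _)
  have hZmeas : ∀ n q, Measurable (Zf n q) :=
    fun n q => Finset.measurable_sum _ (fun i _ => (hmeas i).abs)
  have hZlint : ∀ n q : ℕ, (∫⁻ ω, ENNReal.ofReal (Zf n q ω) ∂μ) ≤
      (2*q : ℕ) * ∫⁻ ω, ENNReal.ofReal |ξ 0 ω| ∂μ := by
    intro n q
    have h1 : (∫⁻ ω, ENNReal.ofReal (Zf n q ω) ∂μ) =
        ∑ i ∈ Finset.Ioc ((n:ℤ) - q) ((n:ℤ) + q), ∫⁻ ω, ENNReal.ofReal |ξ i ω| ∂μ := by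
      rw [← lintegral_finset_sum _ (fun i _ => (hmeas i).abs.ennreal_ofReal)]
      congr 1
      ext ω
      exact ENNReal.ofReal_sum_of_nonneg (fun i _ => abs_nonneg _)
    rw [h1]
    calc (∑ i ∈ Finset.Ioc ((n:ℤ) - q) ((n:ℤ) + q), ∫⁻ ω, ENNReal.ofReal |ξ i ω| ∂μ)
        = ∑ _i ∈ Finset.Ioc ((n:ℤ) - q) ((n:ℤ) + q), ∫⁻ ω, ENNReal.ofReal |ξ 0 ω| ∂μ :=
          Finset.sum_congr rfl (fun i _ => hxi_marg i)
      _ = ((Finset.Ioc ((n:ℤ) - q) ((n:ℤ) + q)).card : ℝ≥0∞) * ∫⁻ ω, ENNReal.ofReal |ξ 0 ω| ∂μ := by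
          rw [Finset.sum_const, nsmul_eq_mul]
      _ ≤ (2*q : ℕ) * ∫⁻ ω, ENNReal.ofReal |ξ 0 ω| ∂μ := by
          apply mul_le_mul_left
          have hcard : (Finset.Ioc ((n:ℤ) - q) ((n:ℤ) + q)).card = 2*q := by
            rw [Int.card_Ioc]
            omega
          rw [hcard]
  set B5 : ℤ → ℕ → Set Ω := fun j n => {ω | ε₁ * b n < Zf n j.natAbs ω} with hB5def
  have hμB5 : ∀ j, Tendsto (fun n => μ (B5 j n)) atTop (𝓝 0) := by
    intro j
    set c5 : ℝ≥0∞ := (2*j.natAbs : ℕ) * ∫⁻ ω, ENNReal.ofReal |ξ 0 ω| ∂μ with hc5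
    have hc5fin : c5 ≠ ⊤ := ENNReal.mul_ne_top (ENNReal.natCast_ne_top _) heℓfin
    have hbound : ∀ n, μ (B5 j n) ≤ c5 / ENNReal.ofReal (ε₁ * b n) := by
      intro n
      have hsub : B5 j n ⊆ {ω | ENNReal.ofReal (ε₁ * b n) ≤ ENNReal.ofReal (Zf n j.natAbs ω)} :=
        fun ω hω => ENNReal.ofReal_le_ofReal (le_of_lt hω)
      refine le_trans (measure_mono hsub) ?_
      refine le_trans (meas_ge_le_lintegral_div ((hZmeas n _).ennreal_ofReal.aemeasurable)
        (ENNReal.ofReal_pos.mpr (mul_pos hε₁ (hbpos n))).ne' ENNReal.ofReal_ne_top) ?_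
      exact ENNReal.div_le_div_right (hZlint n j.natAbs) _
    exact tendsto_of_tendsto_of_tendsto_of_le_of_le tendsto_const_nhds
      (tendsto_const_div_ofReal_zero c5 hc5fin _ hbtend) (fun n => by simp) hbound
  set B4 : ℤ → ℕ → Set Ω := fun j n => ⋃ k ∈ Finset.Icc j.natAbs n,
      {ω | ε₁ < |G' ((k:ℝ)/(n:ℝ)) ω - G' (((k - j.natAbs : ℕ):ℝ)/(n:ℝ)) ω|} with hB4def
  have hμB4 : ∀ j, Tendsto (fun n => μ (B4 j n)) atTop (𝓝 0) := by
    intro j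
    apply tendsto_measure_of_eventually_not
    · intro n
      apply Finset.measurableSet_biUnion
      intro k hk
      rw [Finset.mem_Icc] at hk
      have h1 := hG'meas _ (hdivmem k n hk.2)
      have h2 := hG'meas _ (hdivmem (k - j.natAbs) n (le_trans (Nat.sub_le _ _) hk.2))
      exact measurableSet_lt measurable_const (h1.sub h2).abs
    · intro ω
      by_cases hω : ω ∈ NN
      · apply Eventually.of_forall
        intro n hmem
        simp only [hB4def, Set.mem_iUnion, Set.mem_setOf_eq] at hmem
        obtain ⟨k, hk, hlt⟩ := hmem
        rw [hG'def] at hlt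
        simp only [if_pos hω, sub_zero, abs_zero] at hlt
        exact absurd hlt (not_lt.mpr hε₁.le)
      · have huc := isCompact_Icc.uniformContinuousOn_of_continuous (hcontω ω hω)
        rw [Metric.uniformContinuousOn_iff] at huc
        obtain ⟨δ, hδ, hucd⟩ := huc ε₁ hε₁
        have hev : ∀ᶠ n : ℕ in atTop, ((j.natAbs : ℝ)/(n:ℝ)) < δ :=
          (tendsto_const_div_atTop_nhds_zero_nat (j.natAbs : ℝ)).eventually (gt_mem_nhds hδ)
        filter_upwards [hev] with n hn hmem
        simp only [hB4def, Set.mem_iUnion, Set.mem_setOf_eq] at hmem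
        obtain ⟨k, hk, hlt⟩ := hmem
        rw [Finset.mem_Icc] at hk
        rw [hG'eq _ _ hω, hG'eq _ _ hω] at hlt
        have hx := hdivmem k n hk.2
        have hy := hdivmem (k - j.natAbs) n (le_trans (Nat.sub_le _ _) hk.2)
        have hdist : dist ((k:ℝ)/(n:ℝ)) (((k - j.natAbs:ℕ):ℝ)/(n:ℝ)) < δ := by
          rw [Real.dist_eq, Nat.cast_sub hk.1, sub_div, ← sub_add, sub_self, zero_add,
            abs_of_nonneg (by positivity)]
          exact hn
        have hd2 := hucd _ hx _ hy hdist
        rw [Real.dist_eq] at hd2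
        exact absurd hlt (not_lt.mpr hd2.le)
  set Kf : ℕ → Ω → ℝ≥0∞ := fun n ω =>
    ∑' j : {x : ℤ // x ∉ Fm}, ENNReal.ofReal (|a (j:ℤ)| * Mrf ξ n (j:ℤ) ω) with hKfdef
  have hKfmeas : ∀ n, Measurable (Kf n) := fun n =>
    Measurable.ennreal_tsum (fun j => ((Mrf_meas hmeas n _).const_mul _).ennreal_ofReal)
  have hKlint : ∀ n, (∫⁻ ω, Kf n ω ∂μ) ≤ ENNReal.ofReal δm * ENNReal.ofReal (C * b n) := by
    intro n
    rw [hKfdef]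
    rw [lintegral_tsum (fun j => (((Mrf_meas hmeas n _).const_mul _).ennreal_ofReal).aemeasurable)]
    calc (∑' j : {x : ℤ // x ∉ Fm}, ∫⁻ ω, ENNReal.ofReal (|a (j:ℤ)| * Mrf ξ n (j:ℤ) ω) ∂μ)
        = ∑' j : {x : ℤ // x ∉ Fm},
            ENNReal.ofReal |a (j:ℤ)| * ∫⁻ ω, ENNReal.ofReal (Mrf ξ n (j:ℤ) ω) ∂μ := by
          apply tsum_congr
          intro j
          rw [← lintegral_const_mul _ (Mrf_meas hmeas n _).ennreal_ofReal]
          congr 1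
          ext ω
          exact ENNReal.ofReal_mul (abs_nonneg _)
      _ ≤ ∑' j : {x : ℤ // x ∉ Fm}, ENNReal.ofReal |a (j:ℤ)| * ENNReal.ofReal (C * b n) :=
          ENNReal.tsum_le_tsum (fun j => mul_le_mul_right
            (by rw [hMr_eq]; exact hMr0 n) _)
      _ = (∑' j : {x : ℤ // x ∉ Fm}, ENNReal.ofReal |a (j:ℤ)|) * ENNReal.ofReal (C * b n) :=
          ENNReal.tsum_mul_right
      _ = ENNReal.ofReal δm * ENNReal.ofReal (C * b n) := by
          rw [← ENNReal.ofReal_tsum_of_nonneg (fun j => abs_nonneg _) hsummtail]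
  set B6 : ℕ → Set Ω := fun n => {ω | ENNReal.ofReal (ε/4 * b n) < Kf n ω} with hB6def
  have hμB6 : ∀ n, μ (B6 n) ≤ ENNReal.ofReal c := by
    intro n
    have hb0 := hbpos n
    have h1 : μ (B6 n) ≤
        (ENNReal.ofReal δm * ENNReal.ofReal (C * b n)) / ENNReal.ofReal (ε/4 * b n) := by
      refine le_trans (measure_mono (fun ω hω => le_of_lt
        (show ENNReal.ofReal (ε/4 * b n) < Kf n ω from hω))) ?_
      refine le_trans (meas_ge_le_lintegral_div (hKfmeas n).aemeasurable
        (ENNReal.ofReal_pos.mpr (mul_pos (by positivity) (hbpos n))).ne' ENNReal.ofReal_ne_top) ?_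
      exact ENNReal.div_le_div_right (hKlint n) _
    refine le_trans h1 ?_
    have h2 : (ENNReal.ofReal δm * ENNReal.ofReal (C * b n)) / ENNReal.ofReal (ε/4 * b n)
        = ENNReal.ofReal (δm * C / (ε/4)) := by
      rw [ENNReal.ofReal_mul hC.le, ENNReal.ofReal_mul (by positivity : (0:ℝ) ≤ ε/4),
        ← mul_assoc,
        ENNReal.mul_div_mul_right _ _ (ENNReal.ofReal_pos.mpr hb0).ne' ENNReal.ofReal_ne_top,
        ← ENNReal.ofReal_mul hδm0, ← ENNReal.ofReal_div_of_pos (by positivity)]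
    rw [h2]
    apply ENNReal.ofReal_le_ofReal
    rw [div_le_iff₀ (by positivity : (0:ℝ) < ε/4)]
    calc δm * C ≤ (c * (ε/4) / C) * C := mul_le_mul_of_nonneg_right hδm2 hC.le
      _ = c * (ε/4) := by field_simp
  set B7 : Set Ω := {ω | (L : ℝ≥0∞) < Γf ω} with hB7def
  -- the key pointwise inclusion
  have hincl : ∀ n : ℕ, 1 ≤ n →
      {ω : Ω | ε < ⨆ t ∈ Set.Icc (0:ℝ) 1, |(b n)⁻¹ * S ⌊(n : ℝ) * t⌋₊ ω - A * G t ω|} ⊆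
        NN ∪ B2 n ∪ B6 n ∪ B7 ∪ ⋃ j ∈ Fm, (B3 j n ∪ B4 j n ∪ B5 j n) := by
    intro n hn1 ω hω
    by_contra hR
    simp only [Set.mem_union, Set.mem_iUnion, not_or, not_exists] at hR
    obtain ⟨⟨⟨⟨hNω, hB2ω⟩, hB6ω⟩, hB7ω⟩, hjR⟩ := hR
    rw [Set.mem_setOf_eq] at hω
    apply absurd hω
    rw [not_lt]
    -- pointwise control of the ξ partial-sum process
    have hWle : (⨆ t ∈ Set.Icc (0:ℝ) 1, |(b n)⁻¹ * Sξ ⌊(n : ℝ) * t⌋₊ ω - G t ω|) ≤ ε₁ :=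
      not_lt.mp hB2ω
    have hWpt := hext ω hNω n ε₁ hWle
    have hGL : ∀ t ∈ Set.Icc (0:ℝ) 1, |G t ω| ≤ (L:ℝ) := by
      intro t ht
      have h1 := hΓbound ω hNω t ht
      have h2 : Γf ω ≤ (L : ℝ≥0∞) := not_lt.mp hB7ω
      have h3 : ENNReal.ofReal |G t ω| ≤ ENNReal.ofReal (L:ℝ) := by
        refine le_trans h1 (le_trans h2 ?_)
        rw [ENNReal.ofReal_natCast]
      exact (ENNReal.ofReal_le_ofReal_iff (Nat.cast_nonneg L)).mp h3
    -- tail facts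
    have hKle : Kf n ω ≤ ENNReal.ofReal (ε/4 * b n) := not_lt.mp hB6ω
    have htail_bound : ∀ u : Finset {x : ℤ // x ∉ Fm},
        (∑ j ∈ u, |a (j:ℤ)| * Mrf ξ n (j:ℤ) ω) ≤ ε/4 * b n := by
      intro u
      have h1 : ENNReal.ofReal (∑ j ∈ u, |a (j:ℤ)| * Mrf ξ n (j:ℤ) ω)
          = ∑ j ∈ u, ENNReal.ofReal (|a (j:ℤ)| * Mrf ξ n (j:ℤ) ω) :=
        ENNReal.ofReal_sum_of_nonneg (fun j _ => mul_nonneg (abs_nonneg _) (Mrf_nonneg _ _ _ _))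
      have h2 : (∑ j ∈ u, ENNReal.ofReal (|a (j:ℤ)| * Mrf ξ n (j:ℤ) ω)) ≤ Kf n ω :=
        ENNReal.sum_le_tsum u
      have h3 := le_trans (le_of_eq h1) (le_trans h2 hKle)
      exact (ENNReal.ofReal_le_ofReal_iff
        (mul_nonneg (by positivity) (hbpos n).le)).mp h3
    have htailnn : ∀ j : {x : ℤ // x ∉ Fm}, 0 ≤ |a (j:ℤ)| * Mrf ξ n (j:ℤ) ω :=
      fun j => mul_nonneg (abs_nonneg _) (Mrf_nonneg _ _ _ _)
    have htailsum : Summable (fun j : {x : ℤ // x ∉ Fm} => |a (j:ℤ)| * Mrf ξ n (j:ℤ) ω) :=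
      summable_of_sum_le htailnn htail_bound
    have htailtsum : (∑' j : {x : ℤ // x ∉ Fm}, |a (j:ℤ)| * Mrf ξ n (j:ℤ) ω) ≤ ε/4 * b n :=
      Summable.tsum_le_of_sum_le htailsum htail_bound
    have hMrsum : Summable (fun j : ℤ => |a j| * Mrf ξ n j ω) := by
      rw [← summable_subtype_and_compl (s := (↑Fm : Set ℤ))]
      exact ⟨Summable.of_finite, htailsum⟩
    have hdomsum : Summable (fun j : ℤ => |a j| * ((b n)⁻¹ * Mrf ξ n j ω + (L:ℝ))) := by
      have h1 : (fun j : ℤ => |a j| * ((b n)⁻¹ * Mrf ξ n j ω + (L:ℝ)))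
          = fun j => (b n)⁻¹ * (|a j| * Mrf ξ n j ω) + (L:ℝ) * |a j| := by
        funext j; ring
      rw [h1]
      exact (hMrsum.mul_left _).add (ha.mul_left _)
    -- the boundary estimate for the finite block
    have hTS : ∀ j ∈ Fm, ∀ k : ℕ, k ≤ n → |Ttf ξ k j ω - Sξ k ω| ≤ 4 * (ε₁ * b n) := by
      intro j hj k hk
      obtain ⟨hB3ω, hB4ω, hB5ω⟩ : ω ∉ B3 j n ∧ ω ∉ B4 j n ∧ ω ∉ B5 j n := by
        have h0 := hjR j hj
        exact ⟨h0.1.1, h0.1.2, h0.2⟩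
      have hQA : QA j ω ≤ ε₁ * b n := not_lt.mp hB3ω
      have hZ : Zf n j.natAbs ω ≤ ε₁ * b n := not_lt.mp hB5ω
      have hmod : ∀ k' ∈ Finset.Icc j.natAbs n,
          |G ((k':ℝ)/(n:ℝ)) ω - G (((k' - j.natAbs : ℕ):ℝ)/(n:ℝ)) ω| ≤ ε₁ := by
        intro k' hk'
        have h1 : ω ∉ {ω | ε₁ <
            |G' ((k':ℝ)/(n:ℝ)) ω - G' (((k' - j.natAbs:ℕ):ℝ)/(n:ℝ)) ω|} :=
          fun hc => hB4ω (Set.mem_biUnion hk' hc)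
        rw [Set.mem_setOf_eq, not_lt, hG'eq _ _ hNω, hG'eq _ _ hNω] at h1
        exact h1
      have hWk : ∀ k' : ℕ, k' ≤ n → |(b n)⁻¹ * Sξ k' ω - G ((k':ℝ)/(n:ℝ)) ω| ≤ ε₁ := by
        intro k' hk'
        have h1 := hWpt ((k':ℝ)/(n:ℝ)) (hdivmem k' n hk')
        rwa [hfloor_eq k' n hn1] at h1
      have hincr : ∀ k1 k2 : ℕ, k2 ≤ k1 → k1 ≤ n → k1 - k2 = j.natAbs →
          |Szf ξ (k1:ℤ) ω - Szf ξ (k2:ℤ) ω| ≤ 3 * (ε₁ * b n) := by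
        intro k1 k2 h21 h1n hd
        rw [← hSξ_eq k1 ω, ← hSξ_eq k2 ω]
        have hw1 := hWk k1 h1n
        have hw2 := hWk k2 (le_trans h21 h1n)
        have hmm := hmod k1 (Finset.mem_Icc.mpr ⟨by omega, h1n⟩)
        rw [show k1 - j.natAbs = k2 by omega] at hmm
        have hid : Sξ k1 ω - Sξ k2 ω = b n * ((((b n)⁻¹ * Sξ k1 ω - G ((k1:ℝ)/(n:ℝ)) ω)
            - ((b n)⁻¹ * Sξ k2 ω - G ((k2:ℝ)/(n:ℝ)) ω))
            + (G ((k1:ℝ)/(n:ℝ)) ω - G ((k2:ℝ)/(n:ℝ)) ω)) := by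
          field_simp [(hbpos n).ne']
          ring
        rw [hid, abs_mul, abs_of_pos (hbpos n)]
        have habs : |(((b n)⁻¹ * Sξ k1 ω - G ((k1:ℝ)/(n:ℝ)) ω)
            - ((b n)⁻¹ * Sξ k2 ω - G ((k2:ℝ)/(n:ℝ)) ω))
            + (G ((k1:ℝ)/(n:ℝ)) ω - G ((k2:ℝ)/(n:ℝ)) ω)| ≤ ε₁ + ε₁ + ε₁ := by
          refine le_trans (abs_add_le _ _) ?_
          exact add_le_add (le_trans (abs_sub _ _) (add_le_add hw1 hw2)) hmm
        calc b n * |(((b n)⁻¹ * Sξ k1 ω - G ((k1:ℝ)/(n:ℝ)) ω)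
            - ((b n)⁻¹ * Sξ k2 ω - G ((k2:ℝ)/(n:ℝ)) ω))
            + (G ((k1:ℝ)/(n:ℝ)) ω - G ((k2:ℝ)/(n:ℝ)) ω)|
            ≤ b n * (ε₁ + ε₁ + ε₁) := mul_le_mul_of_nonneg_left habs (hbpos n).le
          _ = 3 * (ε₁ * b n) := by ring
      have hSg0 : (0:ℝ) ≤ ∑ i ∈ Finset.Ioc (-(j.natAbs:ℤ)) (j.natAbs:ℤ), |ξ i ω| :=
        Finset.sum_nonneg (fun i _ => abs_nonneg _)
      have hQAval : QA j ω = 3 * ∑ i ∈ Finset.Ioc (-(j.natAbs:ℤ)) (j.natAbs:ℤ), |ξ i ω| := by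
        rw [hQAdef]
      have hSz_small : ∀ m : ℤ, -(j.natAbs:ℤ) ≤ m → m ≤ (j.natAbs:ℤ) →
          |Szf ξ m ω| ≤ ε₁ * b n := by
        intro m h1 h2
        have h3 := Szf_abs_le ξ h1 h2 ω
        rw [hQAval] at hQA
        linarith
      have hTt3 : Ttf ξ k j ω - Sξ k ω =
          Szf ξ ((k:ℤ) - j) ω - Szf ξ (k:ℤ) ω - Szf ξ (-j) ω := by
        rw [hSξ_eq]
        simp only [Ttf]
        ring
      have hbn0 : 0 < ε₁ * b n := mul_pos hε₁ (hbpos n)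
      rcases le_or_gt 0 j with hj0 | hj0
      · have hnat : (j.natAbs : ℤ) = j := Int.natAbs_of_nonneg hj0
        rcases le_or_gt j.natAbs k with hkj | hkj
        · have hc1 : (k:ℤ) - j = ((k - j.natAbs : ℕ) : ℤ) := by
            rw [Nat.cast_sub hkj, hnat]
          have hi := hincr k (k - j.natAbs) (Nat.sub_le _ _) hk (by omega)
          have hb1 : |Szf ξ (-j) ω| ≤ ε₁ * b n := hSz_small (-j) (by omega) (by omega)
          rw [hTt3, hc1]
          calc |Szf ξ ((k - j.natAbs : ℕ) : ℤ) ω - Szf ξ (k:ℤ) ω - Szf ξ (-j) ω|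
              ≤ |Szf ξ ((k - j.natAbs : ℕ) : ℤ) ω - Szf ξ (k:ℤ) ω| + |Szf ξ (-j) ω| :=
                abs_sub _ _
            _ ≤ 3 * (ε₁ * b n) + ε₁ * b n :=
                add_le_add (by rw [abs_sub_comm]; exact hi) hb1
            _ = 4 * (ε₁ * b n) := by ring
        · have hb1 : |Szf ξ ((k:ℤ) - j) ω| ≤ ε₁ * b n := hSz_small _ (by omega) (by omega)
          have hb2 : |Szf ξ (k:ℤ) ω| ≤ ε₁ * b n := hSz_small _ (by omega) (by omega)
          have hb3 : |Szf ξ (-j) ω| ≤ ε₁ * b n := hSz_small _ (by omega) (by omega)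
          rw [hTt3]
          calc |Szf ξ ((k:ℤ) - j) ω - Szf ξ (k:ℤ) ω - Szf ξ (-j) ω|
              ≤ |Szf ξ ((k:ℤ) - j) ω - Szf ξ (k:ℤ) ω| + |Szf ξ (-j) ω| := abs_sub _ _
            _ ≤ (|Szf ξ ((k:ℤ) - j) ω| + |Szf ξ (k:ℤ) ω|) + |Szf ξ (-j) ω| :=
                add_le_add (abs_sub _ _) le_rfl
            _ ≤ 4 * (ε₁ * b n) := by linarith
      · have hnat : (j.natAbs : ℤ) = -j := Int.ofNat_natAbs_of_nonpos hj0.le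
        have hc1 : (k:ℤ) - j = ((k + j.natAbs : ℕ) : ℤ) := by
          rw [Nat.cast_add, hnat]
          ring
        have hb3 : |Szf ξ (-j) ω| ≤ ε₁ * b n := hSz_small _ (by omega) (by omega)
        rcases le_or_gt (k + j.natAbs) n with hkn | hkn
        · have hi := hincr (k + j.natAbs) k (Nat.le_add_right _ _) hkn (by omega)
          rw [hTt3, hc1]
          calc |Szf ξ ((k + j.natAbs : ℕ) : ℤ) ω - Szf ξ (k:ℤ) ω - Szf ξ (-j) ω|
              ≤ |Szf ξ ((k + j.natAbs : ℕ) : ℤ) ω - Szf ξ (k:ℤ) ω| + |Szf ξ (-j) ω| :=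
                abs_sub _ _
            _ ≤ 3 * (ε₁ * b n) + ε₁ * b n := add_le_add hi hb3
            _ = 4 * (ε₁ * b n) := by ring
        · have hwin : |Szf ξ ((k:ℤ) - j) ω - Szf ξ (k:ℤ) ω| ≤ Zf n j.natAbs ω := by
            have hd := Szf_diff ξ (show (k:ℤ) ≤ (k:ℤ) - j by omega) ω
            rw [hd]
            calc |∑ i ∈ Finset.Ioc (k:ℤ) ((k:ℤ) - j), ξ i ω|
                ≤ ∑ i ∈ Finset.Ioc (k:ℤ) ((k:ℤ) - j), |ξ i ω| :=
                  Finset.abs_sum_le_sum_abs _ _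
              _ ≤ Zf n j.natAbs ω := by
                  rw [hZfdef]
                  apply Finset.sum_le_sum_of_subset_of_nonneg
                  · intro x hx
                    simp only [Finset.mem_Ioc] at *
                    omega
                  · intro i _ _
                    exact abs_nonneg _
          rw [hTt3]
          calc |Szf ξ ((k:ℤ) - j) ω - Szf ξ (k:ℤ) ω - Szf ξ (-j) ω|
              ≤ |Szf ξ ((k:ℤ) - j) ω - Szf ξ (k:ℤ) ω| + |Szf ξ (-j) ω| := abs_sub _ _
            _ ≤ ε₁ * b n + ε₁ * b n := add_le_add (le_trans hwin hZ) hb3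
            _ ≤ 4 * (ε₁ * b n) := by linarith
    -- the final sup bound
    refine Real.iSup_le (fun t => ?_) hε.le
    by_cases ht : t ∈ Set.Icc (0:ℝ) 1
    swap
    · haveI : IsEmpty (t ∈ Set.Icc (0:ℝ) 1) := isEmpty_Prop.mpr ht
      rw [Real.iSup_of_isEmpty]
      exact hε.le
    haveI : Nonempty (t ∈ Set.Icc (0:ℝ) 1) := ⟨ht⟩
    rw [ciSup_const]
    set k : ℕ := ⌊(n : ℝ) * t⌋₊ with hkdef
    have hk : k ≤ n := hfloor_le n t ht
    have hXs := hXsum ω hNω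
    have hs1 : HasSum (fun j => a j * Ttf ξ k j ω) (S k ω) := by
      have h1 := hasSum_sum (s := Finset.Icc 1 k)
        (f := fun (i : ℕ) (j : ℤ) => a j * ξ ((i:ℤ) - j) ω)
        (a := fun i : ℕ => X (i:ℤ) ω) (fun i _ => hXs (i:ℤ))
      rw [← hS k ω] at h1
      have h2 : (fun j : ℤ => ∑ i ∈ Finset.Icc 1 k, a j * ξ ((i:ℤ) - j) ω)
          = fun j : ℤ => a j * Ttf ξ k j ω := by
        funext j
        rw [← Finset.mul_sum]
        congr 1
        rw [Ttf_eq_sum, ← sum_Icc_nat_eq_Ioc_int (fun i => ξ (i + (-j)) ω) k]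
        apply Finset.sum_congr rfl
        intro i _
        have hii : (i:ℤ) - j = i + (-j) := by ring
        rw [hii]
      rwa [h2] at h1
    have hs2 : HasSum (fun j => a j * ((b n)⁻¹ * Ttf ξ k j ω)) ((b n)⁻¹ * S k ω) := by
      have h1 := hs1.mul_left ((b n)⁻¹)
      have h2 : (fun j : ℤ => (b n)⁻¹ * (a j * Ttf ξ k j ω))
          = fun j : ℤ => a j * ((b n)⁻¹ * Ttf ξ k j ω) := by
        funext j; ring
      rwa [h2] at h1
    have hs3 : HasSum (fun j => a j * ((b n)⁻¹ * Ttf ξ k j ω - G t ω))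
        ((b n)⁻¹ * S k ω - A * G t ω) := by
      have h1 := hs2.sub (hA.mul_right (G t ω))
      have h2 : (fun j : ℤ => a j * ((b n)⁻¹ * Ttf ξ k j ω) - a j * G t ω)
          = fun j : ℤ => a j * ((b n)⁻¹ * Ttf ξ k j ω - G t ω) := by
        funext j; ring
      rwa [h2] at h1
    have hdom : ∀ j : ℤ, |a j * ((b n)⁻¹ * Ttf ξ k j ω - G t ω)|
        ≤ |a j| * ((b n)⁻¹ * Mrf ξ n j ω + (L:ℝ)) := by
      intro j
      rw [abs_mul]
      apply mul_le_mul_of_nonneg_left _ (abs_nonneg _)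
      refine le_trans (abs_sub _ _) (add_le_add ?_ (hGL t ht))
      rw [abs_mul, abs_of_pos (inv_pos.mpr (hbpos n))]
      exact mul_le_mul_of_nonneg_left (abs_Ttf_le_Mrf ξ hk j ω) (inv_pos.mpr (hbpos n)).le
    have habs_sum : Summable (fun j : ℤ => |a j * ((b n)⁻¹ * Ttf ξ k j ω - G t ω)|) :=
      Summable.of_nonneg_of_le (fun j => abs_nonneg _) hdom hdomsum
    have hval : |(b n)⁻¹ * S k ω - A * G t ω| ≤
        ∑' j : ℤ, |a j * ((b n)⁻¹ * Ttf ξ k j ω - G t ω)| := by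
      rw [← hs3.tsum_eq]
      have habs_sum' : Summable (fun j : ℤ => ‖a j * ((b n)⁻¹ * Ttf ξ k j ω - G t ω)‖) := by
        simpa only [Real.norm_eq_abs] using habs_sum
      have h9 := norm_tsum_le_tsum_norm habs_sum'
      simpa only [Real.norm_eq_abs] using h9
    refine le_trans hval ?_
    rw [← Summable.sum_add_tsum_compl (s := Fm) habs_sum]
    have hhead : (∑ j ∈ Fm, |a j * ((b n)⁻¹ * Ttf ξ k j ω - G t ω)|) ≤ Atot * (5 * ε₁) := by
      calc (∑ j ∈ Fm, |a j * ((b n)⁻¹ * Ttf ξ k j ω - G t ω)|)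
          ≤ ∑ j ∈ Fm, |a j| * (5 * ε₁) := by
            apply Finset.sum_le_sum
            intro j hj
            rw [abs_mul]
            apply mul_le_mul_of_nonneg_left _ (abs_nonneg _)
            have h1 : |(b n)⁻¹ * Ttf ξ k j ω - G t ω| ≤
                |(b n)⁻¹ * Sξ k ω - G t ω| + (b n)⁻¹ * |Ttf ξ k j ω - Sξ k ω| := by
              have hid : (b n)⁻¹ * Ttf ξ k j ω - G t ω =
                  ((b n)⁻¹ * Sξ k ω - G t ω) + (b n)⁻¹ * (Ttf ξ k j ω - Sξ k ω) := by
                ring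
              rw [hid]
              refine le_trans (abs_add_le _ _) (add_le_add le_rfl ?_)
              rw [abs_mul, abs_of_pos (inv_pos.mpr (hbpos n))]
            have h2 : |(b n)⁻¹ * Sξ k ω - G t ω| ≤ ε₁ := by
              have h3 := hWpt t ht
              rwa [← hkdef] at h3
            have h3 := hTS j hj k hk
            calc |(b n)⁻¹ * Ttf ξ k j ω - G t ω|
                ≤ ε₁ + (b n)⁻¹ * (4 * (ε₁ * b n)) := by
                  refine le_trans h1 (add_le_add h2 ?_)
                  exact mul_le_mul_of_nonneg_left h3 (inv_pos.mpr (hbpos n)).le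
              _ = 5 * ε₁ := by
                  field_simp [(hbpos n).ne']
                  ring
        _ = (∑ j ∈ Fm, |a j|) * (5 * ε₁) := by rw [← Finset.sum_mul]
        _ ≤ Atot * (5 * ε₁) := by
            apply mul_le_mul_of_nonneg_right _ (by positivity)
            exact Summable.sum_le_tsum Fm (fun j _ => abs_nonneg _) ha
    have htail : (∑' j : ↑((↑Fm : Set ℤ)ᶜ), |a (j:ℤ) * ((b n)⁻¹ * Ttf ξ k (j:ℤ) ω - G t ω)|)
        ≤ ε/4 + ε/4 := by
      have htailsum' : Summable (fun j : ↑((↑Fm : Set ℤ)ᶜ) => |a (j:ℤ)| * Mrf ξ n (j:ℤ) ω) :=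
        htailsum
      have hsummtail' : Summable (fun j : ↑((↑Fm : Set ℤ)ᶜ) => |a (j:ℤ)|) := hsummtail
      have htailtsum' : (∑' j : ↑((↑Fm : Set ℤ)ᶜ), |a (j:ℤ)| * Mrf ξ n (j:ℤ) ω) ≤ ε/4 * b n :=
        htailtsum
      have hδmeq : (∑' j : ↑((↑Fm : Set ℤ)ᶜ), |a (j:ℤ)|) = δm := rfl
      have hb1 : ∀ j : ↑((↑Fm : Set ℤ)ᶜ), |a (j:ℤ) * ((b n)⁻¹ * Ttf ξ k (j:ℤ) ω - G t ω)|
          ≤ (b n)⁻¹ * (|a (j:ℤ)| * Mrf ξ n (j:ℤ) ω) + (L:ℝ) * |a (j:ℤ)| :=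
        fun j => le_trans (hdom (j:ℤ)) (le_of_eq (by ring))
      have hsl : Summable (fun j : ↑((↑Fm : Set ℤ)ᶜ) =>
          (b n)⁻¹ * (|a (j:ℤ)| * Mrf ξ n (j:ℤ) ω) + (L:ℝ) * |a (j:ℤ)|) :=
        (htailsum'.mul_left _).add (hsummtail'.mul_left _)
      calc (∑' j : ↑((↑Fm : Set ℤ)ᶜ), |a (j:ℤ) * ((b n)⁻¹ * Ttf ξ k (j:ℤ) ω - G t ω)|)
          ≤ ∑' j : ↑((↑Fm : Set ℤ)ᶜ),
              ((b n)⁻¹ * (|a (j:ℤ)| * Mrf ξ n (j:ℤ) ω) + (L:ℝ) * |a (j:ℤ)|) :=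
            Summable.tsum_le_tsum hb1 (habs_sum.subtype _) hsl
        _ = (b n)⁻¹ * (∑' j : ↑((↑Fm : Set ℤ)ᶜ), |a (j:ℤ)| * Mrf ξ n (j:ℤ) ω)
            + (L:ℝ) * ∑' j : ↑((↑Fm : Set ℤ)ᶜ), |a (j:ℤ)| := by
            rw [Summable.tsum_add (htailsum'.mul_left _) (hsummtail'.mul_left _),
              tsum_mul_left, tsum_mul_left]
        _ ≤ (b n)⁻¹ * (ε/4 * b n) + (L:ℝ) * δm := by
            rw [hδmeq]
            apply add_le_add
            · exact mul_le_mul_of_nonneg_left htailtsum' (inv_pos.mpr (hbpos n)).le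
            · exact mul_le_mul_of_nonneg_left le_rfl (Nat.cast_nonneg L)
        _ ≤ ε/4 + ε/4 := by
            apply add_le_add
            · rw [show (b n)⁻¹ * (ε/4 * b n) = ε/4 from by field_simp [(hbpos n).ne']]
            · have hL1 : (0:ℝ) < (L:ℝ) + 1 := by positivity
              have h5 : (L:ℝ) * δm ≤ (L:ℝ) * (ε/(4*((L:ℝ)+1))) :=
                mul_le_mul_of_nonneg_left hδm1 (Nat.cast_nonneg L)
              refine le_trans h5 ?_
              have h7 : (L:ℝ) * (ε/(4*((L:ℝ)+1))) = (L:ℝ)*ε/(4*((L:ℝ)+1)) := by ring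
              rw [h7, div_le_div_iff₀ (by positivity) (by norm_num : (0:ℝ) < 4)]
              nlinarith [hε.le, (Nat.cast_nonneg L : (0:ℝ) ≤ (L:ℝ))]
    refine le_trans (add_le_add hhead htail) ?_
    have h12 : (0:ℝ) < Atot + 1 := by linarith
    have hkey : Atot * (5 * ε₁) ≤ ε/2 := by
      rw [hε₁def]
      have h3 : Atot * (5 * (ε/(12*(Atot+1)))) = (5*Atot/(12*(Atot+1))) * ε := by
        field_simp
      rw [h3]
      have h4 : 5*Atot/(12*(Atot+1)) ≤ 1/2 := by
        rw [div_le_iff₀ (by positivity)]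
        nlinarith
      calc (5*Atot/(12*(Atot+1))) * ε ≤ (1/2) * ε :=
            mul_le_mul_of_nonneg_right h4 hε.le
        _ = ε/2 := by ring
    linarith
  -- assembling
  have hg : Tendsto (fun n => μ (B2 n) + ∑ j ∈ Fm, (μ (B3 j n) + μ (B4 j n) + μ (B5 j n)))
      atTop (𝓝 0) := by
    have hsum : Tendsto (fun n => ∑ j ∈ Fm, (μ (B3 j n) + μ (B4 j n) + μ (B5 j n)))
        atTop (𝓝 0) := by
      have h3 := tendsto_finset_sum Fm (fun j (_ : j ∈ Fm) => ((hμB3 j).add (hμB4 j)).add (hμB5 j))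
      simpa using h3
    simpa using hμB2.add hsum
  obtain ⟨N2, hN2⟩ := (ENNReal.tendsto_atTop_zero.mp hg) (ε'/4) hε'4
  refine ⟨max N2 1, fun n hn => ?_⟩
  have hn1 : 1 ≤ n := le_trans (le_max_right _ _) hn
  have hnN2 : N2 ≤ n := le_trans (le_max_left _ _) hn
  calc μ {ω : Ω | ε < ⨆ t ∈ Set.Icc (0:ℝ) 1, |(b n)⁻¹ * S ⌊(n : ℝ) * t⌋₊ ω - A * G t ω|}
      ≤ μ (NN ∪ B2 n ∪ B6 n ∪ B7 ∪ ⋃ j ∈ Fm, (B3 j n ∪ B4 j n ∪ B5 j n)) :=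
        measure_mono (hincl n hn1)
    _ ≤ μ NN + μ (B2 n) + μ (B6 n) + μ B7 +
        μ (⋃ j ∈ Fm, (B3 j n ∪ B4 j n ∪ B5 j n)) := by
        refine le_trans (measure_union_le _ _) (add_le_add ?_ le_rfl)
        refine le_trans (measure_union_le _ _) (add_le_add ?_ le_rfl)
        refine le_trans (measure_union_le _ _) (add_le_add ?_ le_rfl)
        exact measure_union_le _ _
    _ ≤ 0 + μ (B2 n) + ENNReal.ofReal c + (ε'/4) +
        ∑ j ∈ Fm, (μ (B3 j n) + μ (B4 j n) + μ (B5 j n)) := by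
        refine add_le_add (add_le_add (add_le_add (add_le_add (le_of_eq hNN0) le_rfl)
          (hμB6 n)) hL) ?_
        refine le_trans (measure_biUnion_finset_le _ _) ?_
        refine Finset.sum_le_sum (fun j _ => ?_)
        refine le_trans (measure_union_le _ _) (add_le_add (measure_union_le _ _) le_rfl)
    _ = (μ (B2 n) + ∑ j ∈ Fm, (μ (B3 j n) + μ (B4 j n) + μ (B5 j n))) +
        (ENNReal.ofReal c + (ε'/4)) := by ring
    _ ≤ (ε'/4) + ((ε'/4) + (ε'/4)) :=
        add_le_add (hN2 n hnN2) (add_le_add hcle le_rfl)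
    _ ≤ ε' := by
        have h44 : (4:ℝ≥0∞) * (ε'/4) = ε' :=
          ENNReal.mul_div_cancel' (by norm_num) (by norm_num)
        calc (ε'/4) + ((ε'/4) + (ε'/4)) ≤ (ε'/4) + ((ε'/4) + ((ε'/4) + (ε'/4))) :=
              add_le_add le_rfl (add_le_add le_rfl le_self_add)
          _ = (4:ℝ≥0∞) * (ε'/4) := by ring
          _ = ε' := h44
end

section
/- Let (X_i)_{i∈ℤ} be a sequence of integrable real random variables adapted to a non-decreasing filtration (F_i)_{i∈ℤ}, fix an integer m ≥ 1, and set Y_k = X_k − E(X_k|F_{k−m}), θ_k = ∑_{j=k}^{k+m−1} E(Y_j|F_k), Q_k = θ_k − Y_k, S_k = ∑_{j=1}^k X_j (S_0 = 0, and S_{k+m−1} − S_{k−1} = ∑_{j=k}^{k+m−1} X_j), and P_k(X) = E(X|F_k) − E(X|F_{k−1}). Then, almost surely: (a) E(Y_j|F_k) = 0 for all j ≥ k + m, so θ_k = ∑_{j=k}^∞ E(Y_j|F_k); (b) E(θ_k|F_{k−1}) = θ_{k−1} − Y_{k−1}; (c) θ_k − E(θ_k|F_{k−1}) = P_k(S_{k+m−1}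 − S_{k−1}); and (d) ∑_{i=1}^n Y_i = M_n + Q_0 − Q_n, where M_n = ∑_{k=1}^n (θ_k − E(θ_k|F_{k−1})) is a martingale with respect to (F_n). -/
/-! Conditioning `Y_j = X_j - E(X_j | ℱ_{j-m})` on `ℱ_k` gives `0` when `k ≤ j - m` (tower
property) and `E(X_j | ℱ_k) - E(X_j | ℱ_{j-m})` when `k ≥ j - m`. The first fact kills the top
term `j = k - 1 + m` of the window when `θ_k` is conditioned on `ℱ_{k-1}`, which gives (b); the
second shows that the projection `P_k` does not see the `ℱ_{k-1}`-measurable corrections, which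
gives (c). By (b), `θ_k - E(θ_k | ℱ_{k-1}) = Y_k + Q_k - Q_{k-1}`, so (d) telescopes, and these
increments are martingale differences since they have zero `ℱ_{k-1}`-conditional expectation. -/

open MeasureTheory

section CondExp

variable {Ω E : Type*} [NormedAddCommGroup E] [NormedSpace ℝ E] [CompleteSpace E]
  {m₁ m₂ m0 : MeasurableSpace Ω} {μ : Measure Ω} [IsFiniteMeasure μ] {f : Ω → E}

theorem condExp_sub_condExp_eq_zero_of_le (h₁₂ : m₁ ≤ m₂) (h₂ : m₂ ≤ m0)
    (hf : Integrable f μ) : μ[f - μ[f | m₂] | m₁] =ᵐ[μ] 0 := by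
  refine (condExp_sub hf integrable_condExp m₁).trans ?_
  filter_upwards [condExp_condExp_of_le (f := f) h₁₂ h₂] with ω htower
  simp [htower]

theorem condExp_sub_condExp_of_le (h₂₁ : m₂ ≤ m₁) (h₁ : m₁ ≤ m0)
    (hf : Integrable f μ) : μ[f - μ[f | m₂] | m₁] =ᵐ[μ] μ[f | m₁] - μ[f | m₂] := by
  have hproj : μ[μ[f | m₂] | m₁] = μ[f | m₂] :=
    condExp_of_stronglyMeasurable h₁ (stronglyMeasurable_condExp.mono h₂₁) integrable_condExp
  exact (condExp_sub hf integrable_condExp m₁).trans (by rw [hproj])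

theorem condExp_sum_condExp_of_le {ι : Type*} (s : Finset ι) {g : ι → Ω → E}
    (h₁₂ : m₁ ≤ m₂) (h₂ : m₂ ≤ m0) :
    μ[∑ j ∈ s, μ[g j | m₂] | m₁] =ᵐ[μ] ∑ j ∈ s, μ[g j | m₁] :=
  (condExp_finsetSum (fun _ _ => integrable_condExp) _).trans
    (eventuallyEq_sum fun _ _ => condExp_condExp_of_le h₁₂ h₂)

end CondExp

theorem sum_Ico_sub_one_add_eq_add_sum_Ico {M : Type*} [AddCommMonoid M] (f : ℤ → M)
    (k : ℤ) (m : ℕ) :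
    ∑ j ∈ Finset.Ico (k - 1) (k - 1 + m), f j + f (k - 1 + m) =
      f (k - 1) + ∑ j ∈ Finset.Ico k (k + m), f j := by
  have hIco :
      Finset.Ico (k - 1) (k - 1 + m + 1) = insert (k - 1) (Finset.Ico k (k + m)) := by
    ext j
    simp only [Finset.mem_Ico, Finset.mem_insert]
    omega
  rw [Finset.sum_Ico_add_eq_sum_Ico_add_one (by omega), hIco, Finset.sum_insert (by simp)]

theorem sum_Icc_one_eq_sum_add_sub_sub {G : Type*} [AddCommGroup G] (y q : ℤ → G) (n : ℕ) :
    ∑ i ∈ Finset.Icc 1 n, y i =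
      ∑ k ∈ Finset.Icc 1 n, (q k + y k - q (k - 1)) + q 0 - q n := by
  induction n with
  | zero => simp
  | succ n ih =>
    rw [Finset.sum_Icc_succ_top (by omega), Finset.sum_Icc_succ_top (by omega), ih]
    push_cast
    simp only [add_sub_cancel_right]
    abel

theorem martingale_sum_Icc_of_condExp_eq_zero {Ω E : Type*} [NormedAddCommGroup E]
    [NormedSpace ℝ E] [CompleteSpace E] {m0 : MeasurableSpace Ω} {μ : Measure Ω}
    [IsFiniteMeasure μ] {𝒢 : Filtration ℕ m0} {d : ℕ → Ω → E} (hadp : StronglyAdapted 𝒢 d)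
    (hint : ∀ n, Integrable (d n) μ) (hzero : ∀ n, μ[d (n + 1) | 𝒢 n] =ᵐ[μ] 0) :
    Martingale (fun n => ∑ k ∈ Finset.Icc 1 n, d k) 𝒢 μ := by
  refine martingale_of_condExp_sub_eq_zero_nat (fun n => ?_) (fun n => ?_) (fun n => ?_)
  · exact Finset.stronglyMeasurable_sum _ fun k hk =>
      (hadp k).mono (𝒢.mono (Finset.mem_Icc.1 hk).2)
  · exact integrable_finsetSum' _ fun k _ => hint k
  · simpa [Finset.sum_Icc_succ_top] using hzero n

section IntFiltration

variable {Ω E : Type*} [NormedAddCommGroup E] [NormedSpace ℝ E] [CompleteSpace E]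
  {m0 : MeasurableSpace Ω} {μ : Measure Ω} [IsFiniteMeasure μ] (ℱ : Filtration ℤ m0) (m : ℕ)

theorem condExp_pred_sum_Ico_condExp {Y : ℤ → Ω → E} (hadp : StronglyAdapted ℱ Y)
    (hint : ∀ k, Integrable (Y k) μ) (hfar : ∀ k, μ[Y (k + m) | ℱ k] =ᵐ[μ] 0) (k : ℤ) :
    μ[∑ j ∈ Finset.Ico k (k + m), μ[Y j | ℱ k] | ℱ (k - 1)] =ᵐ[μ]
      ∑ j ∈ Finset.Ico (k - 1) (k - 1 + m), μ[Y j | ℱ (k - 1)] - Y (k - 1) := by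
  have hshift := sum_Ico_sub_one_add_eq_add_sum_Ico (fun j => μ[Y j | ℱ (k - 1)]) k m
  rw [condExp_of_stronglyMeasurable (ℱ.le _) (hadp _) (hint _)] at hshift
  filter_upwards [condExp_sum_condExp_of_le (g := Y) (Finset.Ico k (k + m))
      (ℱ.mono (sub_le_self k zero_le_one)) (ℱ.le k), hfar (k - 1)]
    with ω hsum hzero
  have hshiftω := congrFun hshift ω
  simp only [Finset.sum_apply, Pi.add_apply, Pi.sub_apply, Pi.zero_apply]
    at hsum hzero hshiftω ⊢
  rw [hzero, add_zero] at hshiftω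
  rw [hsum, hshiftω, add_sub_cancel_left]

theorem sum_Ico_condExp_sub_condExp_pred {X Y : ℤ → Ω → E} (hint : ∀ k, Integrable (X k) μ)
    (hY : ∀ j, Y j = X j - μ[X j | ℱ (j - m)]) (k : ℤ) :
    ∑ j ∈ Finset.Ico k (k + m), μ[Y j | ℱ k] -
        μ[∑ j ∈ Finset.Ico k (k + m), μ[Y j | ℱ k] | ℱ (k - 1)] =ᵐ[μ]
      μ[∑ j ∈ Finset.Ico k (k + m), X j | ℱ k] -
        μ[∑ j ∈ Finset.Ico k (k + m), X j | ℱ (k - 1)] := by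
  have hYcond : ∀ l, k - 1 ≤ l → ∀ j ∈ Finset.Ico k (k + m),
      μ[Y j | ℱ l] =ᵐ[μ] μ[X j | ℱ l] - μ[X j | ℱ (j - m)] := fun l hl j hj =>
    hY j ▸ condExp_sub_condExp_of_le (ℱ.mono (by grind)) (ℱ.le l) (hint j)
  calc ∑ j ∈ Finset.Ico k (k + m), μ[Y j | ℱ k] -
        μ[∑ j ∈ Finset.Ico k (k + m), μ[Y j | ℱ k] | ℱ (k - 1)]
      =ᵐ[μ] ∑ j ∈ Finset.Ico k (k + m), (μ[X j | ℱ k] - μ[X j | ℱ (j - m)]) -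
        ∑ j ∈ Finset.Ico k (k + m), (μ[X j | ℱ (k - 1)] - μ[X j | ℱ (j - m)]) :=
        (eventuallyEq_sum (hYcond k (by omega))).sub <|
          (condExp_sum_condExp_of_le _ (ℱ.mono (by omega)) (ℱ.le k)).trans
            (eventuallyEq_sum (hYcond (k - 1) le_rfl))
    _ = ∑ j ∈ Finset.Ico k (k + m), μ[X j | ℱ k] -
        ∑ j ∈ Finset.Ico k (k + m), μ[X j | ℱ (k - 1)] := by
        simp only [Finset.sum_sub_distrib, sub_sub_sub_cancel_right]
    _ =ᵐ[μ] μ[∑ j ∈ Finset.Ico k (k + m), X j | ℱ k] -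
        μ[∑ j ∈ Finset.Ico k (k + m), X j | ℱ (k - 1)] :=
        ((condExp_finsetSum (fun j _ => hint j) _).sub
          (condExp_finsetSum (fun j _ => hint j) _)).symm

end IntFiltration

/-- The coboundary/martingale decomposition in the proof of **Proposition 8** of
Peligrad–Utev, "Invariance principle for stochastic processes with short memory". With
`Y_k = X_k − E(X_k|ℱ_{k−m})`, `θ_k = ∑_{j=k}^{k+m−1} E(Y_j|ℱ_k)`, `Q_k = θ_k − Y_k`:
(a) `E(Y_j|ℱ_k) = 0` for `j ≥ k + m`; (b) `E(θ_k|ℱ_{k−1}) = θ_{k−1} − Y_{k−1}`;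
(c) `θ_k − E(θ_k|ℱ_{k−1}) = P_k(S_{k+m−1} − S_{k−1})`; (d) `∑_{i=1}^n Y_i = M_n + Q_0 − Q_n`
where `M_n = ∑_{k=1}^n (θ_k − E(θ_k|ℱ_{k−1}))` is a martingale w.r.t. `(ℱ_n)`. -/
theorem stmt13
    {Ω : Type*} {m0 : MeasurableSpace Ω} (μ : Measure Ω) [IsProbabilityMeasure μ]
    (ℱ : Filtration ℤ m0)
    (X : ℤ → Ω → ℝ)
    (hint : ∀ k, Integrable (X k) μ)
    (hadp : Adapted ℱ X)
    (m : ℕ)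
    (Y θ Q : ℤ → Ω → ℝ)
    (hY : ∀ k : ℤ, Y k = X k - μ[X k | ℱ (k - m)])
    (hθ : ∀ k : ℤ, θ k = ∑ j ∈ Finset.Ico k (k + m), μ[Y j | ℱ k])
    (hQ : ∀ k : ℤ, Q k = θ k - Y k)
    (M : ℕ → Ω → ℝ)
    (hM : ∀ n ω, M n ω = ∑ k ∈ Finset.Icc 1 n,
      (θ (k : ℤ) ω - (μ[θ (k : ℤ) | ℱ ((k : ℤ) - 1)]) ω)) :
    (∀ k j : ℤ, k + m ≤ j → μ[Y j | ℱ k] =ᵐ[μ] 0) ∧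
    (∀ k : ℤ, μ[θ k | ℱ (k - 1)] =ᵐ[μ] θ (k - 1) - Y (k - 1)) ∧
    (∀ k : ℤ, θ k - μ[θ k | ℱ (k - 1)] =ᵐ[μ]
      μ[(∑ j ∈ Finset.Ico k (k + m), X j) | ℱ k] -
        μ[(∑ j ∈ Finset.Ico k (k + m), X j) | ℱ (k - 1)]) ∧
    ((∀ n : ℕ, ∀ᵐ ω ∂μ,
        ∑ i ∈ Finset.Icc 1 n, Y (i : ℤ) ω = M n ω + Q 0 ω - Q (n : ℤ) ω) ∧
      Martingale M
        ⟨fun n : ℕ => ℱ (n : ℤ),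
          fun n₁ n₂ h => ℱ.mono (by exact_mod_cast h),
          fun n => ℱ.le _⟩ μ) := by
  have hYint (k : ℤ) : Integrable (Y k) μ := hY k ▸ (hint k).sub integrable_condExp
  have hYadp : StronglyAdapted ℱ Y := fun k => hY k ▸
    (hadp k).stronglyMeasurable.sub (stronglyMeasurable_condExp.mono (ℱ.mono (by omega)))
  have hθint (k : ℤ) : Integrable (θ k) μ :=
    hθ k ▸ integrable_finsetSum' _ fun _ _ => integrable_condExp
  have hθadp : StronglyAdapted ℱ θ := fun k => hθ k ▸
    Finset.stronglyMeasurable_sum _ fun _ _ => stronglyMeasurable_condExp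
  have ha (k j : ℤ) (hkj : k + m ≤ j) : μ[Y j | ℱ k] =ᵐ[μ] 0 :=
    hY j ▸ condExp_sub_condExp_eq_zero_of_le (ℱ.mono (by omega)) (ℱ.le _) (hint j)
  have hb (k : ℤ) : μ[θ k | ℱ (k - 1)] =ᵐ[μ] θ (k - 1) - Y (k - 1) := by
    simpa only [hθ] using condExp_pred_sum_Ico_condExp ℱ m hYadp hYint (fun k => ha k _ le_rfl) k
  refine ⟨ha, hb, fun k => by simpa only [hθ] using sum_Ico_condExp_sub_condExp_pred ℱ m hint hY k,
    fun n => ?_, ?_⟩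
  · filter_upwards [ae_all_iff.2 hb] with ω hω
    rw [hM, sum_Icc_one_eq_sum_add_sub_sub (fun i => Y i ω) (fun i => Q i ω)]
    congr 2
    refine Finset.sum_congr rfl fun k _ => ?_
    simp only [hω k, hQ, Pi.sub_apply]
    abel
  · have hMeq : M = fun n : ℕ => ∑ k ∈ Finset.Icc 1 n, (θ k - μ[θ k | ℱ (k - 1)]) := by
      ext n ω
      simp [hM, Finset.sum_apply]
    rw [hMeq]
    refine martingale_sum_Icc_of_condExp_eq_zero (fun k => ?_)
      (fun k => (hθint k).sub integrable_condExp) (fun n => ?_)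
    · exact (hθadp k).sub (stronglyMeasurable_condExp.mono (ℱ.mono (by omega)))
    · simpa using condExp_sub_condExp_eq_zero_of_le le_rfl (ℱ.le _) (hθint (n + 1))
end
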